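/- arXiv:1708.07115 — 9 statements merged into one kernel-verified Lean document; each statement's English description precedes it below -/
import Mathlib

section
/- For every integer n ≥ 1, every real number θ, and all pairwise distinct real numbers x_1, …, x_n, one has ∑_{i=1}^{n} ∏_{j ≠ i} (x_i − x_j + θ)/(x_i − x_j) = n. -/
open Polynomial Finset

/-- Lemma 3.4: for pairwise distinct reals `x 1, …, x n` and any real `θ`,
`∑_{i=1}^n ∏_{j ≠ i} (x i − x j + θ)/(x i − x j) = n`. -/
theorem stmt0 (n : ℕ) (hn : 1 ≤ n) (θ : ℝ) (x : Fin n → ℝ)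
    (hx : Function.Injective x) :
    ∑ i : Fin n, ∏ j ∈ Finset.univ.erase i, (x i - x j + θ) / (x i - x j) = n := by
  have hne : ∀ i : Fin n, ∀ j ∈ Finset.univ.erase i, x i - x j ≠ 0 := by
    intro i j hj
    exact sub_ne_zero_of_ne fun h => (Finset.mem_erase.mp hj).1 (hx h.symm)
  rcases eq_or_ne θ 0 with rfl | hθ
  · have : ∀ i : Fin n, ∏ j ∈ Finset.univ.erase i, (x i - x j + 0) / (x i - x j) = 1 := by
      intro i
      refine Finset.prod_eq_one fun j hj => ?_
      rw [add_zero, div_self (hne i j hj)]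
    simp only [this]
    simp
  · -- main case
    set P : ℝ[X] := ∏ j : Fin n, (X - C (x j)) with hP
    set Pθ : ℝ[X] := ∏ j : Fin n, (X - C (x j - θ)) with hPθ
    have hPm : P.Monic := monic_prod_of_monic _ _ fun j _ => monic_X_sub_C _
    have hPθm : Pθ.Monic := monic_prod_of_monic _ _ fun j _ => monic_X_sub_C _
    have hPdeg : P.natDegree = n := by
      rw [hP, natDegree_prod_of_monic _ _ fun j _ => monic_X_sub_C _]
      simp only [natDegree_X_sub_C]
      simp
    have hPθdeg : Pθ.natDegree = n := by
      rw [hPθ, natDegree_prod_of_monic _ _ fun j _ => monic_X_sub_C _]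
      simp only [natDegree_X_sub_C]
      simp
    set Q : ℝ[X] := Pθ - P with hQ
    have hdegeq : Pθ.degree = P.degree := by
      rw [degree_eq_natDegree hPθm.ne_zero, degree_eq_natDegree hPm.ne_zero, hPdeg, hPθdeg]
    have hQdeg : Q.degree < n := by
      have := degree_sub_lt (p := Pθ) (q := P) hdegeq hPθm.ne_zero
        (by rw [hPθm.leadingCoeff, hPm.leadingCoeff])
      rwa [degree_eq_natDegree hPθm.ne_zero, hPθdeg] at this
    have hinj : Set.InjOn x (Finset.univ : Finset (Fin n)) := hx.injOn
    have hinterp : Q = Lagrange.interpolate Finset.univ x (fun i => Q.eval (x i)) :=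
      Lagrange.eq_interpolate hinj (by simpa using hQdeg)
    -- evaluate Q at nodes
    have hevalP : ∀ i : Fin n, P.eval (x i) = 0 := by
      intro i
      rw [hP, eval_prod]
      exact Finset.prod_eq_zero (Finset.mem_univ i) (by simp)
    have hevalQ : ∀ i : Fin n,
        Q.eval (x i) = θ * ∏ j ∈ Finset.univ.erase i, (x i - x j + θ) := by
      intro i
      rw [hQ, eval_sub, hevalP, sub_zero, hPθ, eval_prod]
      rw [← Finset.mul_prod_erase _ _ (Finset.mem_univ i)]
      simp only [eval_sub, eval_X, eval_C]
      congr 1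
      · ring
      · exact Finset.prod_congr rfl fun j _ => by ring
    -- coefficient of X^(n-1) of Q
    have hQcoeff : Q.coeff (n - 1) = n * θ := by
      have h1 : Pθ.coeff (n - 1) = -∑ j : Fin n, (x j - θ) := by
        have := prod_X_sub_C_nextCoeff (s := (Finset.univ : Finset (Fin n)))
          (fun j => x j - θ)
        rwa [nextCoeff_of_natDegree_pos (by rw [hPθdeg]; omega), hPθdeg] at this
      have h2 : P.coeff (n - 1) = -∑ j : Fin n, x j := by
        have := prod_X_sub_C_nextCoeff (s := (Finset.univ : Finset (Fin n))) x
        rwa [nextCoeff_of_natDegree_pos (by rw [hPdeg]; omega), hPdeg] at this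
      rw [hQ, coeff_sub, h1, h2, Finset.sum_sub_distrib]
      simp [mul_comm]
    -- coefficient of X^(n-1) of each basis polynomial
    have hbasiscoeff : ∀ i : Fin n, (Lagrange.basis Finset.univ x i).coeff (n - 1)
        = ∏ j ∈ Finset.univ.erase i, (x i - x j)⁻¹ := by
      intro i
      have hdeg : (Lagrange.basis Finset.univ x i).natDegree = n - 1 := by
        rw [Lagrange.natDegree_basis hinj (Finset.mem_univ i)]
        simp
      rw [← hdeg, ← leadingCoeff, Lagrange.basis, leadingCoeff_prod]
      refine Finset.prod_congr rfl fun j hj => ?_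
      rw [Lagrange.basisDivisor, leadingCoeff_mul, leadingCoeff_X_sub_C, leadingCoeff_C,
        mul_one]
    -- compare coefficients
    have key : (n : ℝ) * θ = θ * ∑ i : Fin n,
        ∏ j ∈ Finset.univ.erase i, (x i - x j + θ) / (x i - x j) := by
      calc (n : ℝ) * θ = Q.coeff (n - 1) := hQcoeff.symm
        _ = (Lagrange.interpolate Finset.univ x (fun i => Q.eval (x i))).coeff (n - 1) := by
            rw [← hinterp]
        _ = ∑ i : Fin n, Q.eval (x i) * (Lagrange.basis Finset.univ x i).coeff (n - 1) := by
            rw [Lagrange.interpolate_apply, finset_sum_coeff]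
            simp [coeff_C_mul]
        _ = θ * ∑ i : Fin n, ∏ j ∈ Finset.univ.erase i, (x i - x j + θ) / (x i - x j) := by
            rw [Finset.mul_sum]
            refine Finset.sum_congr rfl fun i _ => ?_
            rw [hevalQ i, hbasiscoeff i, mul_assoc, ← Finset.prod_mul_distrib]
            simp [div_eq_mul_inv]
    have := key
    rw [mul_comm (n : ℝ) θ] at this
    exact (mul_left_cancel₀ hθ this).symm
end

section
/- For every integer n ≥ 1, every nonzero real number θ, all pairwise distinct real numbers x_1, …, x_n, and every z ∈ ℂ with θ n z ∉ {x_1,…,x_n}, one has ∑_{i=1}^{n} (∏_{j ≠ i} (x_i − x_j + θ)/(x_i − x_j)) · (1/n) · 1/(x_i/(θn) − z) = 1 − ∏_{j=1}^{n} (1 + (1/n) · 1/(z − x_j/(θn))). -/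
open Finset Polynomial

lemma key_poly (n : ℕ) (hn : 0 < n) (a : Fin n → ℂ) (ha : Function.Injective a)
    (c : ℂ) (z : ℂ) :
    ∏ j, (z - a j + c) - ∏ j, (z - a j)
      = ∑ i, ((∏ j, (a i - a j + c)) / (∏ j ∈ univ.erase i, (a i - a j)))
          * ∏ j ∈ univ.erase i, (z - a j) := by
  set w : Fin n → ℂ := fun i =>
    (∏ j, (a i - a j + c)) / (∏ j ∈ univ.erase i, (a i - a j)) with hw
  set P1 : ℂ[X] := ∏ j, (X - C (a j) + C c) with hP1
  set P2 : ℂ[X] := ∏ j, (X - C (a j)) with hP2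
  set P3 : ℂ[X] := ∑ i, C (w i) * ∏ j ∈ univ.erase i, (X - C (a j)) with hP3
  have hXC : ∀ b : ℂ, X - C b + C c = X + C (c - b) := by
    intro b; rw [map_sub]; ring
  have hden : ∀ i, (∏ j ∈ univ.erase i, (a i - a j)) ≠ 0 := by
    intro i
    refine Finset.prod_ne_zero_iff.2 fun j hj => ?_
    have : j ≠ i := (Finset.mem_erase.1 hj).1
    exact sub_ne_zero.2 fun h => this (ha h).symm
  have hmon1 : P1.Monic := by
    refine monic_prod_of_monic _ _ fun j _ => ?_
    rw [hXC]; exact monic_X_add_C _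
  have hmon2 : P2.Monic := monic_prod_of_monic _ _ fun j _ => monic_X_sub_C _
  have hdeg1 : P1.degree = (n : ℕ) := by
    rw [hP1, degree_prod]
    have : ∀ j : Fin n, (X - C (a j) + C c).degree = 1 := by
      intro j; rw [hXC, degree_X_add_C]
    simp [this]
  have hdeg2 : P2.degree = (n : ℕ) := by
    rw [hP2, degree_prod]
    simp [degree_X_sub_C]
  have h12 : (P1 - P2).degree < (n : ℕ) := by
    rcases eq_or_ne P1 P2 with h | h
    · rw [h, sub_self, degree_zero]
      exact WithBot.bot_lt_coe n
    · have := degree_sub_lt (hdeg1.trans hdeg2.symm) hmon1.ne_zero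
        (hmon1.leadingCoeff.trans hmon2.leadingCoeff.symm)
      rwa [hdeg1] at this
  have h3 : P3.degree < (n : ℕ) := by
    rw [hP3]
    refine lt_of_le_of_lt (degree_sum_le _ _) ?_
    refine (Finset.sup_lt_iff (WithBot.bot_lt_coe n)).2 fun i _ => ?_
    refine lt_of_le_of_lt (degree_mul_le _ _) ?_
    have h1 : (C (w i)).degree ≤ 0 := degree_C_le
    have h2 : (∏ j ∈ univ.erase i, (X - C (a j))).degree = ((n - 1 : ℕ) : WithBot ℕ) := by
      rw [degree_prod]
      simp only [degree_X_sub_C]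
      rw [Finset.sum_const, Finset.card_erase_of_mem (mem_univ i), Finset.card_univ,
        Fintype.card_fin]
      simp
    calc (C (w i)).degree + (∏ j ∈ univ.erase i, (X - C (a j))).degree
        ≤ 0 + ((n - 1 : ℕ) : WithBot ℕ) := add_le_add h1 h2.le
      _ = ((n - 1 : ℕ) : WithBot ℕ) := by rw [zero_add]
      _ < (n : ℕ) := by exact_mod_cast Nat.sub_lt hn one_pos
  have hQ : P1 - P2 - P3 = 0 := by
    rcases eq_or_ne (P1 - P2 - P3) 0 with h | h
    · exact h
    refine eq_zero_of_natDegree_lt_card_of_eval_eq_zero _ ha ?_ ?_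
    · intro k
      have e1 : P1.eval (a k) = ∏ j, (a k - a j + c) := by
        rw [hP1, eval_prod]; simp
      have e2 : P2.eval (a k) = 0 := by
        rw [hP2, eval_prod]
        refine Finset.prod_eq_zero (mem_univ k) ?_
        simp
      have e3 : P3.eval (a k) = ∏ j, (a k - a j + c) := by
        rw [hP3, eval_finset_sum]
        rw [Finset.sum_eq_single k]
        · simp only [eval_mul, eval_C, eval_prod, eval_sub, eval_X]
          simp only [hw]
          exact div_mul_cancel₀ _ (hden k)
        · intro i _ hik
          simp only [eval_mul, eval_C, eval_prod, eval_sub, eval_X]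
          have : (∏ j ∈ univ.erase i, (a k - a j)) = 0 :=
            Finset.prod_eq_zero (Finset.mem_erase.2 ⟨hik.symm, mem_univ k⟩) (by simp)
          rw [this, mul_zero]
        · simp
      simp [e1, e2, e3]
    · rw [natDegree_lt_iff_degree_lt h, Fintype.card_fin]
      exact lt_of_le_of_lt (degree_sub_le _ _) (max_lt h12 h3)
  have h0 := congrArg (eval z) hQ
  have ev1 : P1.eval z = ∏ j, (z - a j + c) := by rw [hP1, eval_prod]; simp
  have ev2 : P2.eval z = ∏ j, (z - a j) := by rw [hP2, eval_prod]; simp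
  have ev3 : P3.eval z = ∑ i, w i * ∏ j ∈ univ.erase i, (z - a j) := by
    rw [hP3, eval_finset_sum]
    refine Finset.sum_congr rfl fun i _ => ?_
    rw [eval_mul, eval_C, eval_prod]
    simp
  rw [eval_zero, eval_sub, eval_sub, ev1, ev2, ev3, sub_sub, sub_eq_zero] at h0
  linear_combination h0

lemma key2 (n : ℕ) (hn : 0 < n) (a : Fin n → ℂ) (ha : Function.Injective a)
    (c : ℂ) (z : ℂ) (hz : ∀ j, z - a j ≠ 0) :
    ∑ i, (∏ j ∈ univ.erase i, ((a i - a j + c) / (a i - a j))) * (c * (1 / (a i - z)))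
      = 1 - ∏ j, (1 + c * (1 / (z - a j))) := by
  have hden : ∀ i, (∏ j ∈ univ.erase i, (a i - a j)) ≠ 0 := by
    intro i
    refine Finset.prod_ne_zero_iff.2 fun j hj => ?_
    exact sub_ne_zero.2 fun h => (Finset.mem_erase.1 hj).1 (ha h).symm
  have hD : (∏ j, (z - a j)) ≠ 0 := Finset.prod_ne_zero_iff.2 fun j _ => hz j
  have hzer : ∀ i, (∏ j ∈ univ.erase i, (z - a j)) ≠ 0 := fun i =>
    Finset.prod_ne_zero_iff.2 fun j _ => hz j
  set w : Fin n → ℂ := fun i =>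
    (∏ j, (a i - a j + c)) / (∏ j ∈ univ.erase i, (a i - a j)) with hw
  have hkey := key_poly n hn a ha c z
  have hrhs : ∏ j, (1 + c * (1 / (z - a j)))
      = (∏ j, (z - a j + c)) / ∏ j, (z - a j) := by
    rw [← Finset.prod_div_distrib]
    refine Finset.prod_congr rfl fun j _ => ?_
    rw [add_div, div_self (hz j), mul_one_div]
  have hNful : ∀ i, (∏ j, (a i - a j + c)) = c * ∏ j ∈ univ.erase i, (a i - a j + c) := by
    intro i
    rw [← Finset.mul_prod_erase univ _ (mem_univ i), sub_self, zero_add]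
  have hlhs : ∀ i, (∏ j ∈ univ.erase i, ((a i - a j + c) / (a i - a j))) * (c * (1 / (a i - z)))
      = w i * (1 / (a i - z)) := by
    intro i
    rw [Finset.prod_div_distrib, hw]
    simp only []
    rw [hNful i]
    ring
  have hfrac : ∀ i, (1 : ℂ) / (a i - z) = -((∏ j ∈ univ.erase i, (z - a j)) / ∏ j, (z - a j)) := by
    intro i
    rw [← Finset.mul_prod_erase univ _ (mem_univ i), mul_comm, ← div_div,
      div_self (hzer i), ← div_neg, neg_sub]
  calc ∑ i, (∏ j ∈ univ.erase i, ((a i - a j + c) / (a i - a j))) * (c * (1 / (a i - z)))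
      = ∑ i, w i * (1 / (a i - z)) := Finset.sum_congr rfl fun i _ => hlhs i
    _ = ∑ i, -(w i * (∏ j ∈ univ.erase i, (z - a j)) / ∏ j, (z - a j)) := by
        refine Finset.sum_congr rfl fun i _ => ?_
        rw [hfrac i]
        ring
    _ = -((∑ i, w i * ∏ j ∈ univ.erase i, (z - a j)) / ∏ j, (z - a j)) := by
        rw [Finset.sum_neg_distrib, ← Finset.sum_div]
    _ = -((∏ j, (z - a j + c) - ∏ j, (z - a j)) / ∏ j, (z - a j)) := by rw [← hkey]
    _ = 1 - (∏ j, (z - a j + c)) / ∏ j, (z - a j) := by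
        rw [sub_div, div_self hD]
        ring
    _ = 1 - ∏ j, (1 + c * (1 / (z - a j))) := by rw [hrhs]

/-- Corollary 3.5: for pairwise distinct reals `x 1, …, x n`, a nonzero real `θ`,
and `z ∈ ℂ` with `θ n z ∉ {x 1, …, x n}`,
`∑ i (∏_{j ≠ i} (x i − x j + θ)/(x i − x j)) (1/n) 1/(x i/(θn) − z)
  = 1 − ∏ j (1 + (1/n) 1/(z − x j/(θn)))`. -/
theorem stmt2 (n : ℕ) (hn : 1 ≤ n) (θ : ℝ) (hθ : θ ≠ 0) (x : Fin n → ℝ)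
    (hx : Function.Injective x) (z : ℂ) (hz : ∀ i : Fin n, (θ : ℂ) * n * z ≠ (x i : ℂ)) :
    ∑ i : Fin n,
      (∏ j ∈ Finset.univ.erase i, (((x i : ℂ) - (x j : ℂ) + (θ : ℂ)) / ((x i : ℂ) - (x j : ℂ))))
        * ((1 / (n : ℂ)) * (1 / ((x i : ℂ) / ((θ : ℂ) * n) - z)))
    = 1 - ∏ j : Fin n, (1 + (1 / (n : ℂ)) * (1 / (z - (x j : ℂ) / ((θ : ℂ) * n)))) := by
  have hnC : (n : ℂ) ≠ 0 := Nat.cast_ne_zero.2 (by omega)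
  have hθC : (θ : ℂ) ≠ 0 := Complex.ofReal_ne_zero.2 hθ
  have hθn : (θ : ℂ) * n ≠ 0 := mul_ne_zero hθC hnC
  have hainj : Function.Injective (fun i : Fin n => (x i : ℂ) / ((θ : ℂ) * n)) := by
    intro i j hij
    apply hx
    field_simp at hij
    exact_mod_cast hij
  have hz' : ∀ j : Fin n, z - (fun i : Fin n => (x i : ℂ) / ((θ : ℂ) * n)) j ≠ 0 := by
    intro j
    simp only []
    rw [sub_ne_zero]
    intro h
    apply hz j
    rw [h]
    field_simp
  have key := key2 n (by omega) (fun i : Fin n => (x i : ℂ) / ((θ : ℂ) * n)) hainj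
    (1 / (n : ℂ)) z hz'
  rw [← key]
  refine Finset.sum_congr rfl fun i _ => ?_
  congr 1
  refine Finset.prod_congr rfl fun j hj => ?_
  have hij : (x i : ℂ) - (x j : ℂ) ≠ 0 := by
    rw [sub_ne_zero]
    intro h
    exact (Finset.mem_erase.1 hj).1 (hx (by exact_mod_cast h)).symm
  field_simp
end

section
/- Let m ≥ 1 be an integer and let y_1 > y_2 > … > y_m be real numbers with y_i − y_{i+1} ≥ 1/m for all 1 ≤ i ≤ m − 1. Define w_i = ∏_{j ≠ i} (y_i − y_j + 1/m)/(y_i − y_j) for 1 ≤ i ≤ m. Then w_i ≥ 0 for every i and ∑_{i=1}^{m} w_i = m; consequently the Perelomov–Popov measure (1/m) ∑_{i=1}^{m} w_i δ_{y_i} is a probability measure on ℝ. -/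
open Polynomial Finset

lemma key_identity (m : ℕ) (hm : 1 ≤ m) (y : Fin m → ℝ) (hy : Function.Injective y)
    (c : ℝ) (hc : c ≠ 0) :
    ∑ i : Fin m, ∏ j ∈ Finset.univ.erase i, (y i - y j + c) / (y i - y j) = m := by
  set q : ℝ[X] := ∏ j : Fin m, (X - C (y j - c)) with hq
  set N : ℝ[X] := ∏ j : Fin m, (X - C (y j)) with hN
  have hqm : q.Monic := monic_prod_of_monic _ _ fun j _ => monic_X_sub_C _
  have hNm : N.Monic := monic_prod_of_monic _ _ fun j _ => monic_X_sub_C _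
  have hqd : q.degree = m := by
    rw [hq, degree_prod]
    simp only [degree_X_sub_C, Finset.sum_const, Finset.card_univ, Fintype.card_fin,
      nsmul_eq_mul, mul_one]
  have hNd : N.degree = m := by
    rw [hN, degree_prod]
    simp only [degree_X_sub_C, Finset.sum_const, Finset.card_univ, Fintype.card_fin,
      nsmul_eq_mul, mul_one]
  have hdeg : (q - N).degree < (#(Finset.univ : Finset (Fin m)) : ℕ) := by
    rw [Finset.card_univ, Fintype.card_fin]
    have := degree_sub_lt (hqd.trans hNd.symm) hqm.ne_zero
      (by rw [hqm.leadingCoeff, hNm.leadingCoeff])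
    rw [hqd] at this
    exact_mod_cast this
  have hinj : Set.InjOn y (Finset.univ : Finset (Fin m)) := hy.injOn
  have hrep := Lagrange.eq_interpolate (f := q - N) hinj hdeg
  -- coefficient at m - 1 of q - N
  have hcoeff : (q - N).coeff (m - 1) = m * c := by
    rw [coeff_sub, hq, hN]
    have h1 := Polynomial.prod_X_sub_C_coeff_card_pred (Finset.univ : Finset (Fin m))
      (fun j => y j - c) (by rw [Finset.card_univ, Fintype.card_fin]; omega)
    have h2 := Polynomial.prod_X_sub_C_coeff_card_pred (Finset.univ : Finset (Fin m))
      (fun j => y j) (by rw [Finset.card_univ, Fintype.card_fin]; omega)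
    rw [Finset.card_univ, Fintype.card_fin] at h1 h2
    rw [h1, h2, Finset.sum_sub_distrib, Finset.sum_const, Finset.card_univ,
      Fintype.card_fin, nsmul_eq_mul]
    ring
  -- eval at nodes
  have heval : ∀ i : Fin m, (q - N).eval (y i) = c * ∏ j ∈ Finset.univ.erase i, (y i - y j + c) := by
    intro i
    have hN0 : N.eval (y i) = 0 := by
      rw [hN, eval_prod]
      exact Finset.prod_eq_zero (Finset.mem_univ i) (by simp)
    rw [eval_sub, hN0, sub_zero, hq, eval_prod,
      ← Finset.mul_prod_erase _ _ (Finset.mem_univ i)]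
    have h1 : eval (y i) (X - C (y i - c)) = c := by
      rw [eval_sub, eval_X, eval_C]; ring
    rw [h1]
    congr 1
    exact Finset.prod_congr rfl fun j _ => by rw [eval_sub, eval_X, eval_C]; ring
  -- coefficient of basis polynomials
  have hbasis : ∀ i : Fin m, (Lagrange.basis Finset.univ y i).coeff (m - 1)
      = ∏ j ∈ Finset.univ.erase i, (y i - y j)⁻¹ := by
    intro i
    have hnd := Lagrange.natDegree_basis hinj (Finset.mem_univ i)
    rw [Finset.card_univ, Fintype.card_fin] at hnd
    rw [← hnd, coeff_natDegree, Lagrange.basis, leadingCoeff_prod]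
    refine Finset.prod_congr rfl fun j hj => ?_
    have hne : y i ≠ y j := fun h => (Finset.mem_erase.mp hj).1 (hy h).symm
    rw [Lagrange.basisDivisor, leadingCoeff_mul, leadingCoeff_C,
      (monic_X_sub_C _).leadingCoeff, mul_one]
  -- put together
  have hmain : (m : ℝ) * c = ∑ i : Fin m, ((q - N).eval (y i))
      * (Lagrange.basis Finset.univ y i).coeff (m - 1) := by
    conv_lhs => rw [← hcoeff, hrep]
    rw [Lagrange.interpolate_apply, finset_sum_coeff]
    refine Finset.sum_congr rfl fun i _ => ?_
    rw [coeff_C_mul]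
  have : ∑ i : Fin m, ∏ j ∈ Finset.univ.erase i, (y i - y j + c) / (y i - y j)
      = (∑ i : Fin m, ((q - N).eval (y i)) * (Lagrange.basis Finset.univ y i).coeff (m - 1)) / c := by
    rw [Finset.sum_div]
    refine Finset.sum_congr rfl fun i _ => ?_
    rw [heval i, hbasis i, mul_assoc, ← Finset.prod_mul_distrib,
      mul_div_cancel_left₀ _ hc]
    exact Finset.prod_congr rfl fun j _ => div_eq_mul_inv _ _
  rw [this, ← hmain, mul_div_cancel_right₀ _ hc]

open MeasureTheory

/-- Remark 3.6: if `y 1 > y 2 > … > y m` with consecutive gaps at least `1/m`, then the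
Perelomov–Popov weights `w i = ∏_{j ≠ i} (y i − y j + 1/m)/(y i − y j)` are nonnegative,
sum to `m`, and the Perelomov–Popov measure `(1/m) ∑ i, w i δ_{y i}` is a probability
measure on `ℝ`. -/
theorem stmt4 (m : ℕ) (hm : 1 ≤ m) (y : Fin m → ℝ)
    (hdec : StrictAnti y)
    (hgap : ∀ i : Fin m, ∀ h : (i : ℕ) + 1 < m, y i - y ⟨(i : ℕ) + 1, h⟩ ≥ 1 / m)
    (w : Fin m → ℝ)
    (hw : ∀ i : Fin m,
      w i = ∏ j ∈ Finset.univ.erase i, (y i - y j + 1 / m) / (y i - y j)) :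
    (∀ i : Fin m, 0 ≤ w i) ∧ (∑ i : Fin m, w i = m) ∧
      IsProbabilityMeasure
        (∑ i : Fin m, (ENNReal.ofReal (w i / m)) • Measure.dirac (y i)) := by
  have hmpos : (0 : ℝ) < m := by exact_mod_cast hm
  have hinvpos : (0 : ℝ) < 1 / m := by positivity
  -- nonnegativity
  have hnn : ∀ i : Fin m, 0 ≤ w i := by
    intro i
    rw [hw i]
    refine Finset.prod_nonneg fun j hj => ?_
    have hji : j ≠ i := (Finset.mem_erase.mp hj).1
    rcases lt_or_gt_of_ne hji with hlt | hgt
    · -- j < i : y j - y i ≥ 1/m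
      have hj1 : (j : ℕ) + 1 < m := lt_of_le_of_lt (Nat.succ_le_of_lt hlt) i.isLt
      have h1 := hgap j hj1
      have h2 : y (⟨(j : ℕ) + 1, hj1⟩ : Fin m) ≥ y i :=
        hdec.antitone (by simpa [Fin.le_def] using Nat.succ_le_of_lt hlt)
      have hge : y j - y i ≥ 1 / m := by linarith
      exact div_nonneg_of_nonpos (by linarith) (by linarith)
    · -- i < j : y i > y j
      have h3 : y i > y j := hdec hgt
      exact div_nonneg (by linarith) (by linarith)
  -- sum
  have hsum : ∑ i : Fin m, w i = m := by
    have := key_identity m hm y hdec.injective (1 / m) (ne_of_gt hinvpos)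
    calc ∑ i : Fin m, w i = ∑ i : Fin m,
          ∏ j ∈ Finset.univ.erase i, (y i - y j + 1 / m) / (y i - y j) :=
        Finset.sum_congr rfl fun i _ => hw i
      _ = m := this
  refine ⟨hnn, hsum, ?_⟩
  constructor
  rw [Measure.finset_sum_apply]
  have : ∀ i : Fin m, (ENNReal.ofReal (w i / m) • Measure.dirac (y i)) Set.univ
      = ENNReal.ofReal (w i / m) := by
    intro i
    rw [Measure.smul_apply, smul_eq_mul, Measure.dirac_apply_of_mem (Set.mem_univ _), mul_one]
  rw [Finset.sum_congr rfl fun i _ => this i,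
    ← ENNReal.ofReal_sum_of_nonneg fun i _ => div_nonneg (hnn i) hmpos.le,
    ← Finset.sum_div, hsum, div_self (ne_of_gt hmpos), ENNReal.ofReal_one]
end

section
/- Let μ_0 be a probability measure on ℝ that is absolutely continuous with density at most 1, with Stieltjes transform m_0, let Q(μ_0) be the probability measure whose Stieltjes transform is 1 − exp(−m_0(z)) for z ∈ ℂ ∖ ℝ, and for t > 0 set Ω_t = {z ∈ ℂ ∖ ℝ : ∫_ℝ dQ(μ_0)(x)/|x − z|² < 1/t}. Then the map z_t(z) = z + t·exp(−m_0(z)) is holomorphic on Ω_t, maps Ω_t ∩ ℂ_+ bijectively onto the open upper half-plane ℂ_+, and maps Ω_t ∩ ℂ_− bijectively onto the open lower half-plane ℂ_−. -/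
open MeasureTheory Complex Filter Set

noncomputable def smT (ν : Measure ℝ) (z : ℂ) : ℂ := ∫ x : ℝ, ((x:ℂ) - z)⁻¹ ∂ν
noncomputable def JrT (ν : Measure ℝ) (z : ℂ) : ℝ := ∫ x : ℝ, (1 / ‖(x:ℂ) - z‖ ^ 2) ∂ν
noncomputable def LIT (ν : Measure ℝ) (z : ℂ) : ENNReal :=
  ∫⁻ x : ℝ, ENNReal.ofReal (1 / ‖(x:ℂ) - z‖ ^ 2) ∂ν

lemma im_le_abs' (x : ℝ) (z : ℂ) : |z.im| ≤ ‖(x:ℂ) - z‖ := by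
  have h := Complex.abs_im_le_norm ((x:ℂ) - z)
  simpa using h

lemma sub_ne_zero' (x : ℝ) {z : ℂ} (h : z.im ≠ 0) : ((x:ℂ) - z) ≠ 0 := by
  intro hc
  apply h
  have : ((x:ℂ) - z).im = 0 := by rw [hc]; simp
  simpa using this

lemma abs_pos' (x : ℝ) {z : ℂ} (h : z.im ≠ 0) : 0 < ‖(x:ℂ) - z‖ :=
  norm_pos_iff.mpr (sub_ne_zero' x h)

lemma cont_inv {z : ℂ} (h : z.im ≠ 0) :
    Continuous (fun x : ℝ => ((x:ℂ) - z)⁻¹) := by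
  apply Continuous.inv₀
  · exact (Complex.continuous_ofReal.sub continuous_const)
  · exact fun x => sub_ne_zero' x h

lemma integrable_inv (ν : Measure ℝ) [IsProbabilityMeasure ν] {z : ℂ} (h : z.im ≠ 0) :
    Integrable (fun x : ℝ => ((x:ℂ) - z)⁻¹) ν := by
  apply Integrable.mono' (integrable_const (|z.im|⁻¹))
    ((cont_inv h).aestronglyMeasurable)
  filter_upwards with x
  rw [norm_inv]
  exact inv_anti₀ (_root_.abs_pos.mpr h) (im_le_abs' x z)

lemma integrable_invsq (ν : Measure ℝ) [IsProbabilityMeasure ν] {z : ℂ} (h : z.im ≠ 0) :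
    Integrable (fun x : ℝ => (1 / ‖(x:ℂ) - z‖ ^ 2)) ν := by
  apply Integrable.mono' (integrable_const ((z.im ^ 2)⁻¹))
  · apply Continuous.aestronglyMeasurable
    apply Continuous.div continuous_const
    · exact (continuous_norm.comp (Complex.continuous_ofReal.sub continuous_const)).pow 2
    · intro x; exact pow_ne_zero 2 (abs_pos' x h).ne'
  · filter_upwards with x
    rw [Real.norm_eq_abs, _root_.abs_of_nonneg (by positivity), one_div]
    apply inv_anti₀ (by positivity)
    calc z.im ^ 2 = |z.im| ^ 2 := (_root_.sq_abs _).symm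
    _ ≤ _ := by apply pow_le_pow_left₀ (abs_nonneg _) (im_le_abs' x z)

lemma inv_im_eq (x : ℝ) (z : ℂ) :
    (((x:ℂ) - z)⁻¹).im = z.im * (1 / ‖(x:ℂ) - z‖ ^ 2) := by
  rw [Complex.inv_im, Complex.sq_norm]
  simp only [Complex.sub_im, Complex.ofReal_im]
  ring

lemma im_smT (ν : Measure ℝ) [IsProbabilityMeasure ν] {z : ℂ} (h : z.im ≠ 0) :
    (smT ν z).im = z.im * JrT ν z := by
  have h1 := integral_im (μ := ν) (f := fun x : ℝ => ((x:ℂ) - z)⁻¹) (integrable_inv ν h)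
  simp only [RCLike.im_to_complex] at h1
  rw [smT, ← h1, JrT, ← integral_const_mul]
  congr 1
  funext x
  exact inv_im_eq x z

lemma LIT_eq (ν : Measure ℝ) [IsProbabilityMeasure ν] {z : ℂ} (h : z.im ≠ 0) :
    LIT ν z = ENNReal.ofReal (JrT ν z) := by
  rw [JrT, LIT, ofReal_integral_eq_lintegral_ofReal (integrable_invsq ν h)]
  filter_upwards with x
  positivity

lemma JrT_nonneg (ν : Measure ℝ) (z : ℂ) : 0 ≤ JrT ν z := by
  apply integral_nonneg; intro x; positivity

lemma norm_smT_le (ν : Measure ℝ) [IsProbabilityMeasure ν] {z : ℂ} (h : z.im ≠ 0) :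
    ‖smT ν z‖ ≤ |z.im|⁻¹ := by
  rw [smT]
  calc ‖∫ x : ℝ, ((x:ℂ) - z)⁻¹ ∂ν‖ ≤ |z.im|⁻¹ * (ν Set.univ).toReal := by
        apply norm_integral_le_of_norm_le_const
        filter_upwards with x
        rw [norm_inv]
        exact inv_anti₀ (_root_.abs_pos.mpr h) (im_le_abs' x z)
  _ = |z.im|⁻¹ := by simp

noncomputable def HT (ν : Measure ℝ) (t : ℝ) (z : ℂ) : ℂ := z + (t:ℂ) * (1 - smT ν z)

lemma ball_im {z₀ z : ℂ} (h : z₀.im ≠ 0) (hz : z ∈ Metric.ball z₀ (|z₀.im| / 2)) :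
    |z₀.im| / 2 ≤ |z.im| := by
  have h1 : |(z - z₀).im| ≤ ‖z - z₀‖ := Complex.abs_im_le_norm _
  have h2 : ‖z - z₀‖ < |z₀.im| / 2 := by
    rw [Metric.mem_ball, Complex.dist_eq] at hz; exact hz
  have h3 : |z.im - z₀.im| < |z₀.im| / 2 := by
    simp only [Complex.sub_im] at h1; linarith
  have := abs_sub_abs_le_abs_sub z₀.im z.im
  rw [abs_sub_comm z₀.im z.im] at this
  linarith

lemma smT_hasDerivAt (ν : Measure ℝ) [IsProbabilityMeasure ν] {z₀ : ℂ} (h : z₀.im ≠ 0) :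
    HasDerivAt (smT ν) (∫ x : ℝ, (((x:ℂ) - z₀) ^ 2)⁻¹ ∂ν) z₀ := by
  have heps : (0:ℝ) < |z₀.im| / 2 := by
    have := _root_.abs_pos.mpr h; linarith
  have key := hasDerivAt_integral_of_dominated_loc_of_deriv_le
    (μ := ν) (𝕜 := ℂ) (x₀ := z₀)
    (F := fun z x => ((x:ℂ) - z)⁻¹)
    (F' := fun z x => (((x:ℂ) - z) ^ 2)⁻¹)
    (bound := fun _ => (((|z₀.im| / 2) ^ 2)⁻¹ : ℝ))
    (Metric.ball_mem_nhds z₀ heps) ?_ (integrable_inv ν h) ?_ ?_ (integrable_const _) ?_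
  · exact key.2
  · -- a.e. strong measurability of F z near z₀
    have : ∀ᶠ z in nhds z₀, z.im ≠ 0 := by
      have : IsOpen {z : ℂ | z.im ≠ 0} := isOpen_ne.preimage Complex.continuous_im
      exact this.mem_nhds h
    filter_upwards [this] with z hz
    exact (cont_inv hz).aestronglyMeasurable
  · -- measurability of F' z₀
    apply Continuous.aestronglyMeasurable
    apply Continuous.inv₀
    · exact ((Complex.continuous_ofReal.sub continuous_const).pow 2)
    · intro x; exact pow_ne_zero 2 (sub_ne_zero' x h)
  · -- bound
    filter_upwards with x z hz
    have him := ball_im h hz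
    have hzim : z.im ≠ 0 := by
      intro hc; rw [hc] at him; simp at him; linarith
    rw [norm_inv, norm_pow]
    apply inv_anti₀ (by positivity)
    exact pow_le_pow_left₀ (by positivity) (le_trans him (im_le_abs' x z)) 2
  · -- HasDerivAt pointwise
    filter_upwards with x z hz
    have him := ball_im h hz
    have hzim : z.im ≠ 0 := by
      intro hc; rw [hc] at him; simp at him; linarith
    have h1 : HasDerivAt (fun z : ℂ => (x:ℂ) - z) (-1) z := by
      simpa using (hasDerivAt_id z).const_sub (x:ℂ)
    have := h1.fun_inv (sub_ne_zero' x hzim)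
    rw [show (((x:ℂ) - z) ^ 2)⁻¹ = -(-1) / ((x:ℂ) - z) ^ 2 by ring]
    exact this

lemma smT_differentiableAt (ν : Measure ℝ) [IsProbabilityMeasure ν] {z₀ : ℂ} (h : z₀.im ≠ 0) :
    DifferentiableAt ℂ (smT ν) z₀ := (smT_hasDerivAt ν h).differentiableAt

lemma HT_differentiableAt (ν : Measure ℝ) [IsProbabilityMeasure ν] (t : ℝ) {z₀ : ℂ}
    (h : z₀.im ≠ 0) : DifferentiableAt ℂ (HT ν t) z₀ := by
  apply DifferentiableAt.add (differentiableAt_id)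
  exact (differentiableAt_const _).mul
    ((differentiableAt_const _).sub (smT_differentiableAt ν h))

lemma HT_continuousAt (ν : Measure ℝ) [IsProbabilityMeasure ν] (t : ℝ) {z₀ : ℂ}
    (h : z₀.im ≠ 0) : ContinuousAt (HT ν t) z₀ :=
  (HT_differentiableAt ν t h).continuousAt

lemma im_HT (ν : Measure ℝ) [IsProbabilityMeasure ν] (t : ℝ) {z : ℂ} (h : z.im ≠ 0) :
    (HT ν t z).im = z.im * (1 - t * JrT ν z) := by
  rw [HT]
  simp only [Complex.add_im, Complex.mul_im, Complex.ofReal_re, Complex.ofReal_im,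
    Complex.sub_im, Complex.sub_re, Complex.one_im, Complex.one_re]
  rw [im_smT ν h]
  ring

lemma LIT_continuousAt (ν : Measure ℝ) [IsProbabilityMeasure ν] {z₀ : ℂ} (h : z₀.im ≠ 0) :
    ContinuousAt (LIT ν) z₀ := by
  rw [ContinuousAt]
  have heps : (0:ℝ) < |z₀.im| / 2 := by have := _root_.abs_pos.mpr h; linarith
  apply tendsto_lintegral_filter_of_dominated_convergence
    (fun _ => ENNReal.ofReal (((|z₀.im| / 2) ^ 2)⁻¹))
  · -- measurability eventually
    have hop : IsOpen {z : ℂ | z.im ≠ 0} := isOpen_ne.preimage Complex.continuous_im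
    filter_upwards [hop.mem_nhds h] with z hz
    apply Measurable.ennreal_ofReal
    apply Continuous.measurable
    apply Continuous.div continuous_const
    · exact (continuous_norm.comp (Complex.continuous_ofReal.sub continuous_const)).pow 2
    · intro x; exact pow_ne_zero 2 (abs_pos' x hz).ne'
  · -- bound
    filter_upwards [Metric.ball_mem_nhds z₀ heps] with z hz
    filter_upwards with x
    apply ENNReal.ofReal_le_ofReal
    have him := ball_im h hz
    rw [one_div]
    apply inv_anti₀ (by positivity)
    exact pow_le_pow_left₀ (by positivity) (le_trans him (im_le_abs' x z)) 2
  · simp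
  · -- pointwise convergence
    filter_upwards with x
    apply ENNReal.continuous_ofReal.continuousAt.tendsto.comp
    apply Tendsto.div tendsto_const_nhds
    · exact ((continuous_norm.comp (continuous_const.sub continuous_id')).pow 2).continuousAt
    · exact pow_ne_zero 2 (abs_pos' x h).ne'

lemma smT_sub (ν : Measure ℝ) [IsProbabilityMeasure ν] {z₁ z₂ : ℂ}
    (h₁ : z₁.im ≠ 0) (h₂ : z₂.im ≠ 0) :
    smT ν z₁ - smT ν z₂ = (z₁ - z₂) * ∫ x : ℝ, (((x:ℂ) - z₁)⁻¹ * ((x:ℂ) - z₂)⁻¹) ∂ν := by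
  have hint : Integrable (fun x : ℝ => ((x:ℂ) - z₁)⁻¹ * ((x:ℂ) - z₂)⁻¹) ν := by
    apply Integrable.mono' (integrable_const (|z₁.im|⁻¹ * |z₂.im|⁻¹))
      (((cont_inv h₁).mul (cont_inv h₂)).aestronglyMeasurable)
    filter_upwards with x
    rw [Pi.mul_apply, norm_mul, norm_inv, norm_inv]
    apply mul_le_mul
    · exact inv_anti₀ (_root_.abs_pos.mpr h₁) (im_le_abs' x z₁)
    · exact inv_anti₀ (_root_.abs_pos.mpr h₂) (im_le_abs' x z₂)
    · positivity
    · positivity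
  rw [smT, smT, ← integral_sub (integrable_inv ν h₁) (integrable_inv ν h₂), ← integral_const_mul]
  congr 1
  funext x
  have e₁ := sub_ne_zero' x h₁
  have e₂ := sub_ne_zero' x h₂
  field_simp
  ring

lemma key_CS (ν : Measure ℝ) [IsProbabilityMeasure ν] {z₁ z₂ : ℂ} {t : ℝ} (ht : 0 < t)
    (h₁ : z₁.im ≠ 0) (h₂ : z₂.im ≠ 0)
    (hL₁ : LIT ν z₁ < ENNReal.ofReal (1 / t)) (hL₂ : LIT ν z₂ < ENNReal.ofReal (1 / t)) :
    (∫ x : ℝ, (1 / ‖(x:ℂ) - z₁‖) * (1 / ‖(x:ℂ) - z₂‖) ∂ν) < 1 / t := by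
  set g := fun x : ℝ => (1 / ‖(x:ℂ) - z₁‖) * (1 / ‖(x:ℂ) - z₂‖) with hg
  have hgint : Integrable g ν := by
    apply Integrable.mono' (integrable_const (|z₁.im|⁻¹ * |z₂.im|⁻¹))
    · apply Continuous.aestronglyMeasurable
      apply Continuous.mul
      all_goals {
        apply Continuous.div continuous_const
        · exact (continuous_norm.comp (Complex.continuous_ofReal.sub continuous_const))
        · intro x; first | exact (abs_pos' x h₁).ne' | exact (abs_pos' x h₂).ne' }
    · filter_upwards with x
      rw [Real.norm_eq_abs, _root_.abs_of_nonneg (by positivity), hg]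
      simp only [one_div]
      apply mul_le_mul
      · exact inv_anti₀ (_root_.abs_pos.mpr h₁) (im_le_abs' x z₁)
      · exact inv_anti₀ (_root_.abs_pos.mpr h₂) (im_le_abs' x z₂)
      · positivity
      · positivity
  have hmeas : ∀ (z : ℂ), z.im ≠ 0 → AEMeasurable
      (fun x : ℝ => ENNReal.ofReal (1 / ‖(x:ℂ) - z‖)) ν := by
    intro z hz
    apply Measurable.aemeasurable
    apply Measurable.ennreal_ofReal
    apply Continuous.measurable
    apply Continuous.div continuous_const
    · exact (continuous_norm.comp (Complex.continuous_ofReal.sub continuous_const))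
    · intro x; exact (abs_pos' x hz).ne'
  have hsq : ∀ (z : ℂ),
      (fun x : ℝ => (ENNReal.ofReal (1 / ‖(x:ℂ) - z‖)) ^ (2:ℝ))
      = fun x : ℝ => ENNReal.ofReal (1 / ‖(x:ℂ) - z‖ ^ 2) := by
    intro z
    funext x
    rw [show ((2:ℝ)) = ((2:ℕ):ℝ) by norm_num, ENNReal.rpow_natCast,
      ← ENNReal.ofReal_pow (by positivity), div_pow, one_pow]
  have hH := ENNReal.lintegral_mul_le_Lp_mul_Lq ν Real.HolderConjugate.two_two
    (hmeas z₁ h₁) (hmeas z₂ h₂)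
  have hofreal : ENNReal.ofReal (∫ x : ℝ, g x ∂ν) = ∫⁻ x : ℝ,
      ((fun x : ℝ => ENNReal.ofReal (1 / ‖(x:ℂ) - z₁‖)) *
       (fun x : ℝ => ENNReal.ofReal (1 / ‖(x:ℂ) - z₂‖))) x ∂ν := by
    rw [ofReal_integral_eq_lintegral_ofReal hgint (by filter_upwards with x; positivity)]
    congr 1
    funext x
    simp only [Pi.mul_apply, hg]
    rw [ENNReal.ofReal_mul (by positivity)]
  have hfin : (ENNReal.ofReal (1/t)) ^ (1/(2:ℝ)) ≠ ⊤ := by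
    apply ENNReal.rpow_ne_top_of_nonneg (by norm_num) ENNReal.ofReal_ne_top
  have hlt : ENNReal.ofReal (∫ x : ℝ, g x ∂ν) < ENNReal.ofReal (1 / t) := by
    rw [hofreal]
    apply lt_of_le_of_lt hH
    rw [hsq z₁, hsq z₂]
    have e₁ : LIT ν z₁ ^ (1/(2:ℝ)) < (ENNReal.ofReal (1/t)) ^ (1/(2:ℝ)) :=
      ENNReal.rpow_lt_rpow hL₁ (by norm_num)
    have e₂ : LIT ν z₂ ^ (1/(2:ℝ)) < (ENNReal.ofReal (1/t)) ^ (1/(2:ℝ)) :=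
      ENNReal.rpow_lt_rpow hL₂ (by norm_num)
    calc (∫⁻ x : ℝ, ENNReal.ofReal (1 / ‖(x:ℂ) - z₁‖ ^ 2) ∂ν) ^ (1/(2:ℝ)) *
          (∫⁻ x : ℝ, ENNReal.ofReal (1 / ‖(x:ℂ) - z₂‖ ^ 2) ∂ν) ^ (1/(2:ℝ))
        < (ENNReal.ofReal (1/t)) ^ (1/(2:ℝ)) * (ENNReal.ofReal (1/t)) ^ (1/(2:ℝ)) :=
          ENNReal.mul_lt_mul e₁ e₂
      _ = ENNReal.ofReal (1/t) := by
          rw [← ENNReal.rpow_add _ _ (by simp [ENNReal.ofReal_eq_zero]; positivity)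
            ENNReal.ofReal_ne_top]
          norm_num
  have h1t : (0:ℝ) < 1/t := by positivity
  exact (ENNReal.ofReal_lt_ofReal_iff h1t).mp hlt

def Oset (ν : Measure ℝ) (t : ℝ) : Set ℂ :=
  {z : ℂ | z.im ≠ 0 ∧ LIT ν z < ENNReal.ofReal (1 / t)}

lemma Jr_lt (ν : Measure ℝ) [IsProbabilityMeasure ν] {t : ℝ} (ht : 0 < t) {z : ℂ}
    (hz : z ∈ Oset ν t) : JrT ν z < 1 / t := by
  obtain ⟨h1, h2⟩ := hz
  rw [LIT_eq ν h1] at h2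
  exact (ENNReal.ofReal_lt_ofReal_iff (by positivity)).mp h2

lemma mem_Oset (ν : Measure ℝ) [IsProbabilityMeasure ν] {t : ℝ} (ht : 0 < t) {z : ℂ}
    (h1 : z.im ≠ 0) (h2 : JrT ν z < 1 / t) : z ∈ Oset ν t := by
  refine ⟨h1, ?_⟩
  rw [LIT_eq ν h1]
  exact ENNReal.ofReal_lt_ofReal_iff_of_nonneg (JrT_nonneg ν z) |>.mpr h2

lemma Oset_isOpen (ν : Measure ℝ) [IsProbabilityMeasure ν] (t : ℝ) : IsOpen (Oset ν t) := by
  rw [isOpen_iff_mem_nhds]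
  rintro z ⟨h1, h2⟩
  have hop : IsOpen {w : ℂ | w.im ≠ 0} := isOpen_ne.preimage Complex.continuous_im
  have e1 : {w : ℂ | w.im ≠ 0} ∈ nhds z := hop.mem_nhds h1
  have e2 : {w : ℂ | LIT ν w < ENNReal.ofReal (1/t)} ∈ nhds z := by
    have := (LIT_continuousAt ν h1) (isOpen_Iio.mem_nhds h2)
    exact this
  filter_upwards [e1, e2] with w hw1 hw2
  exact ⟨hw1, hw2⟩

lemma HT_injOn (ν : Measure ℝ) [IsProbabilityMeasure ν] {t : ℝ} (ht : 0 < t) :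
    Set.InjOn (HT ν t) (Oset ν t) := by
  intro z₁ hz₁ z₂ hz₂ heq
  by_contra hne
  have h₁ := hz₁.1
  have h₂ := hz₂.1
  have hsub : z₁ - z₂ = (t:ℂ) * (smT ν z₁ - smT ν z₂) := by
    have : z₁ + (t:ℂ) * (1 - smT ν z₁) = z₂ + (t:ℂ) * (1 - smT ν z₂) := heq
    ring_nf at this ⊢
    linear_combination this
  rw [smT_sub ν h₁ h₂] at hsub
  set I := ∫ x : ℝ, (((x:ℂ) - z₁)⁻¹ * ((x:ℂ) - z₂)⁻¹) ∂ν with hI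
  have hzd : z₁ - z₂ ≠ 0 := sub_ne_zero_of_ne hne
  have ht1 : (t:ℂ) * I = 1 := by
    have : (z₁ - z₂) * (1 - (t:ℂ) * I) = 0 := by linear_combination hsub
    rcases mul_eq_zero.mp this with h | h
    · exact absurd h hzd
    · linear_combination -h
  have hnorm : ‖(t:ℂ) * I‖ < 1 := by
    rw [norm_mul, Complex.norm_real, Real.norm_eq_abs, _root_.abs_of_pos ht]
    have hle : ‖I‖ ≤ ∫ x : ℝ, (1 / ‖(x:ℂ) - z₁‖) * (1 / ‖(x:ℂ) - z₂‖) ∂ν := by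
      rw [hI]
      apply le_trans (norm_integral_le_integral_norm _)
      apply le_of_eq
      congr 1
      funext x
      rw [norm_mul, norm_inv, norm_inv,
        one_div, one_div]
    have hCS := key_CS ν ht h₁ h₂ hz₁.2 hz₂.2
    calc t * ‖I‖ ≤ t * (∫ x : ℝ, (1 / ‖(x:ℂ) - z₁‖) * (1 / ‖(x:ℂ) - z₂‖) ∂ν) := by
          apply mul_le_mul_of_nonneg_left hle ht.le
    _ < t * (1/t) := by apply mul_lt_mul_of_pos_left hCS ht
    _ = 1 := by field_simp
  rw [ht1] at hnorm
  simp at hnorm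

lemma HT_mapsTo_upper (ν : Measure ℝ) [IsProbabilityMeasure ν] {t : ℝ} (ht : 0 < t) {z : ℂ}
    (hz : z ∈ Oset ν t) (him : 0 < z.im) : 0 < (HT ν t z).im := by
  rw [im_HT ν t hz.1]
  have h2 := Jr_lt ν ht hz
  have : t * JrT ν z < 1 := by
    have := (mul_lt_mul_of_pos_left h2 ht)
    rw [mul_one_div, div_self ht.ne'] at this
    exact this
  nlinarith

lemma im_HT_le (ν : Measure ℝ) [IsProbabilityMeasure ν] {t : ℝ} (ht : 0 < t) {z : ℂ}
    (h1 : z.im ≠ 0) (h2 : 0 < z.im) : (HT ν t z).im ≤ z.im := by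
  rw [im_HT ν t h1]
  have h3 := JrT_nonneg ν z
  nlinarith [mul_nonneg (mul_nonneg ht.le h3) h2.le]

lemma Oset_nonempty (ν : Measure ℝ) [IsProbabilityMeasure ν] {t : ℝ} (ht : 0 < t) :
    ∃ z : ℂ, z ∈ Oset ν t ∩ {z : ℂ | 0 < z.im} := by
  set y : ℝ := Real.sqrt t + 1 with hy
  have hy0 : 0 < y := by positivity
  have hyt : t < y ^ 2 := by
    have h1 : Real.sqrt t ^ 2 = t := Real.sq_sqrt ht.le
    have h2 : 0 ≤ Real.sqrt t := Real.sqrt_nonneg t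
    nlinarith
  refine ⟨Complex.I * (y:ℂ), ⟨?_, ?_⟩, ?_⟩
  · simp [hy0.ne']
  · have him : (Complex.I * (y:ℂ)).im = y := by simp
    have hb : LIT ν (Complex.I * (y:ℂ)) ≤ ENNReal.ofReal (1 / y ^ 2) := by
      rw [LIT]
      calc ∫⁻ x : ℝ, ENNReal.ofReal (1 / ‖(x:ℂ) - Complex.I * (y:ℂ)‖ ^ 2) ∂ν
          ≤ ∫⁻ _ : ℝ, ENNReal.ofReal (1 / y ^ 2) ∂ν := by
            apply lintegral_mono
            intro x
            apply ENNReal.ofReal_le_ofReal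
            rw [one_div, one_div]
            apply inv_anti₀ (by positivity)
            have := im_le_abs' x (Complex.I * (y:ℂ))
            rw [him, _root_.abs_of_pos hy0] at this
            nlinarith [norm_nonneg ((x:ℂ) - Complex.I * (y:ℂ))]
      _ = ENNReal.ofReal (1 / y ^ 2) := by simp
    apply lt_of_le_of_lt hb
    apply (ENNReal.ofReal_lt_ofReal_iff (by positivity)).mpr
    apply one_div_lt_one_div_of_lt ht hyt
  · simp [hy0]

lemma HT_image_isOpen (ν : Measure ℝ) [IsProbabilityMeasure ν] {t : ℝ} (ht : 0 < t) :
    IsOpen (HT ν t '' (Oset ν t ∩ {z : ℂ | 0 < z.im})) := by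
  set U := Oset ν t ∩ {z : ℂ | 0 < z.im} with hU
  have hUopen : IsOpen U := (Oset_isOpen ν t).inter (isOpen_lt continuous_const Complex.continuous_im)
  rw [isOpen_iff_mem_nhds]
  rintro w ⟨z₀, hz₀, rfl⟩
  have hop : IsOpen {z : ℂ | z.im ≠ 0} := isOpen_ne.preimage Complex.continuous_im
  have hdiff : DifferentiableOn ℂ (HT ν t) {z : ℂ | z.im ≠ 0} :=
    fun z hz => (HT_differentiableAt ν t hz).differentiableWithinAt
  have hana : AnalyticAt ℂ (HT ν t) z₀ := hdiff.analyticAt (hop.mem_nhds hz₀.1.1)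
  rcases hana.eventually_constant_or_nhds_le_map_nhds with hconst | hmap
  · exfalso
    have hne : ∀ᶠ z in nhdsWithin z₀ {z₀}ᶜ, HT ν t z = HT ν t z₀ ∧ z ∈ U := by
      apply Filter.eventually_inf_principal.mpr
      filter_upwards [hconst, hUopen.mem_nhds hz₀] with z h1 h2 _
      exact ⟨h1, h2⟩
    have hne2 : ∀ᶠ z in nhdsWithin z₀ {z₀}ᶜ, z ≠ z₀ := by
      filter_upwards [eventually_mem_nhdsWithin] with z hz
      exact hz
    obtain ⟨z, ⟨h1, h2⟩, h3⟩ := (hne.and hne2).exists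
    exact h3 (HT_injOn ν ht h2.1 hz₀.1 h1)
  · exact hmap (Filter.image_mem_map (hUopen.mem_nhds hz₀))

lemma HT_closure (ν : Measure ℝ) [IsProbabilityMeasure ν] {t : ℝ} (ht : 0 < t) {w : ℂ}
    (hw : w ∈ closure (HT ν t '' (Oset ν t ∩ {z : ℂ | 0 < z.im}))) (hwim : 0 < w.im) :
    w ∈ HT ν t '' (Oset ν t ∩ {z : ℂ | 0 < z.im}) := by
  set U := Oset ν t ∩ {z : ℂ | 0 < z.im} with hU
  obtain ⟨s, hs, hsconv⟩ := mem_closure_iff_seq_limit.mp hw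
  choose u hu hHu using hs
  have hconvH : Filter.Tendsto (fun n => HT ν t (u n)) Filter.atTop (nhds w) := by
    apply hsconv.congr
    intro n; exact (hHu n).symm
  -- eventually close to w
  obtain ⟨N, hN⟩ := Metric.tendsto_atTop.mp hconvH (w.im / 2) (by linarith)
  set v : ℕ → ℂ := fun n => u (n + N) with hv
  have hvU : ∀ n, v n ∈ U := fun n => hu (n + N)
  have hvH : ∀ n, dist (HT ν t (v n)) w < w.im / 2 := fun n => hN (n + N) (by omega)
  have hvHconv : Filter.Tendsto (fun n => HT ν t (v n)) Filter.atTop (nhds w) :=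
    hconvH.comp (tendsto_add_atTop_nat N)
  -- lower bound on im of HT (v n), hence on im (v n)
  have hvim : ∀ n, w.im / 2 ≤ (HT ν t (v n)).im := by
    intro n
    have h1 : |(HT ν t (v n) - w).im| ≤ ‖HT ν t (v n) - w‖ :=
      Complex.abs_im_le_norm _
    have h2 : ‖HT ν t (v n) - w‖ < w.im / 2 := by
      rw [← Complex.dist_eq]; exact hvH n
    simp only [Complex.sub_im] at h1
    have := abs_le.mp (le_of_lt (lt_of_le_of_lt h1 h2))
    linarith [this.1]
  have hvim2 : ∀ n, w.im / 2 ≤ (v n).im := by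
    intro n
    have h0 : 0 < (v n).im := (hvU n).2
    exact le_trans (hvim n) (im_HT_le ν ht (hvU n).1.1 h0)
  -- norm bound
  set R : ℝ := (‖w‖ + w.im / 2) + t * (1 + 2 / w.im) with hR
  have hvnorm : ∀ n, v n ∈ Metric.closedBall (0:ℂ) R := by
    intro n
    rw [Metric.mem_closedBall, Complex.dist_eq, sub_zero]
    have h1 : ‖HT ν t (v n)‖ ≤ ‖w‖ + w.im / 2 := by
      calc ‖HT ν t (v n)‖ ≤ ‖w‖ + ‖HT ν t (v n) - w‖ := by
            have := norm_add_le w (HT ν t (v n) - w)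
            simpa using this
      _ ≤ ‖w‖ + w.im / 2 := by
            have h2 : ‖HT ν t (v n) - w‖ < w.im / 2 := by
              rw [← Complex.dist_eq]; exact hvH n
            linarith
    have h3 : ‖smT ν (v n)‖ ≤ 2 / w.im := by
      calc ‖smT ν (v n)‖ ≤ |(v n).im|⁻¹ := norm_smT_le ν (hvU n).1.1
      _ ≤ 2 / w.im := by
          rw [_root_.abs_of_pos (hvU n).2]
          rw [inv_le_iff_one_le_mul₀ (hvU n).2, div_mul_eq_mul_div, le_div_iff₀ hwim]
          have := hvim2 n
          nlinarith
    have h4 : v n = HT ν t (v n) - (t:ℂ) * (1 - smT ν (v n)) := by rw [HT]; ring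
    rw [h4]
    calc ‖HT ν t (v n) - (t:ℂ) * (1 - smT ν (v n))‖
        ≤ ‖HT ν t (v n)‖ + ‖(t:ℂ) * (1 - smT ν (v n))‖ := by
          exact norm_sub_le _ _
    _ ≤ (‖w‖ + w.im / 2) + t * (1 + 2 / w.im) := by
        apply add_le_add h1
        rw [norm_mul, Complex.norm_real, Real.norm_eq_abs, _root_.abs_of_pos ht]
        apply mul_le_mul_of_nonneg_left _ ht.le
        calc ‖1 - smT ν (v n)‖ ≤ ‖(1:ℂ)‖ + ‖smT ν (v n)‖ := by
              exact norm_sub_le _ _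
        _ ≤ 1 + 2 / w.im := by
            rw [norm_one]
            linarith [h3]
  -- extract convergent subsequence
  obtain ⟨a, _, φ, hφ, hconv2⟩ := tendsto_subseq_of_bounded
    (Metric.isBounded_closedBall (x := (0:ℂ)) (r := R)) hvnorm
  have haim : w.im / 2 ≤ a.im := by
    apply ge_of_tendsto (Complex.continuous_im.continuousAt.tendsto.comp hconv2)
    filter_upwards with n
    exact hvim2 (φ n)
  have haim0 : 0 < a.im := by linarith
  have hane : a.im ≠ 0 := haim0.ne'
  -- HT a = w
  have hHa : HT ν t a = w := by
    have h5 : Filter.Tendsto (fun n => HT ν t (v (φ n))) Filter.atTop (nhds (HT ν t a)) :=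
      (HT_continuousAt ν t hane).tendsto.comp hconv2
    have h6 : Filter.Tendsto (fun n => HT ν t (v (φ n))) Filter.atTop (nhds w) :=
      hvHconv.comp hφ.tendsto_atTop
    exact tendsto_nhds_unique h5 h6
  -- a ∈ Oset
  have haO : a ∈ Oset ν t := by
    apply mem_Oset ν ht hane
    have h7 : w.im = a.im * (1 - t * JrT ν a) := by rw [← hHa, im_HT ν t hane]
    have h8 : 0 < 1 - t * JrT ν a := by
      rcases lt_or_ge 0 (1 - t * JrT ν a) with h | h
      · exact h
      · exfalso; nlinarith
    rw [lt_div_iff₀ ht]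
    nlinarith
  exact ⟨a, ⟨haO, haim0⟩, hHa⟩

lemma HT_bijOn_upper (ν : Measure ℝ) [IsProbabilityMeasure ν] {t : ℝ} (ht : 0 < t) :
    Set.BijOn (HT ν t) (Oset ν t ∩ {z : ℂ | 0 < z.im}) {z : ℂ | 0 < z.im} := by
  set S := HT ν t '' (Oset ν t ∩ {z : ℂ | 0 < z.im}) with hS
  refine ⟨?_, ?_, ?_⟩
  · rintro z ⟨hz1, hz2⟩
    exact HT_mapsTo_upper ν ht hz1 hz2
  · exact (HT_injOn ν ht).mono Set.inter_subset_left
  · -- SurjOn via connectedness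
    have hpre : IsPreconnected {z : ℂ | 0 < z.im} := (convex_halfSpace_im_gt 0).isPreconnected
    have hsub : {z : ℂ | 0 < z.im} ⊆ S ∪ (closure S)ᶜ := by
      intro z hz
      by_cases h : z ∈ closure S
      · exact Or.inl (HT_closure ν ht h hz)
      · exact Or.inr h
    have hne : ({z : ℂ | 0 < z.im} ∩ S).Nonempty := by
      obtain ⟨z₀, hz₀⟩ := Oset_nonempty ν ht
      exact ⟨HT ν t z₀, HT_mapsTo_upper ν ht hz₀.1 hz₀.2, Set.mem_image_of_mem _ hz₀⟩
    exact hpre.subset_left_of_subset_union (HT_image_isOpen ν ht)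
      isClosed_closure.isOpen_compl
      (disjoint_compl_right.mono_left subset_closure) hsub hne

lemma smT_conj (ν : Measure ℝ) (z : ℂ) :
    smT ν ((starRingEnd ℂ) z) = (starRingEnd ℂ) (smT ν z) := by
  rw [smT, smT, ← integral_conj]
  congr 1
  funext x
  rw [map_inv₀, map_sub, Complex.conj_ofReal]

lemma HT_conj (ν : Measure ℝ) (t : ℝ) (z : ℂ) :
    HT ν t ((starRingEnd ℂ) z) = (starRingEnd ℂ) (HT ν t z) := by
  rw [HT, HT, smT_conj]
  simp only [map_add, map_mul, map_sub, map_one, Complex.conj_ofReal]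

lemma LIT_conj (ν : Measure ℝ) (z : ℂ) : LIT ν ((starRingEnd ℂ) z) = LIT ν z := by
  rw [LIT, LIT]
  congr 1
  funext x
  have : (x:ℂ) - (starRingEnd ℂ) z = (starRingEnd ℂ) ((x:ℂ) - z) := by
    rw [map_sub, Complex.conj_ofReal]
  rw [this, Complex.norm_conj]

lemma Oset_conj (ν : Measure ℝ) (t : ℝ) {z : ℂ} (hz : z ∈ Oset ν t) :
    (starRingEnd ℂ) z ∈ Oset ν t := by
  refine ⟨?_, ?_⟩
  · simp only [Complex.conj_im]
    simpa using hz.1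
  · rw [LIT_conj]; exact hz.2

lemma HT_bijOn_lower (ν : Measure ℝ) [IsProbabilityMeasure ν] {t : ℝ} (ht : 0 < t) :
    Set.BijOn (HT ν t) (Oset ν t ∩ {z : ℂ | z.im < 0}) {z : ℂ | z.im < 0} := by
  have hc1 : Set.BijOn (fun z : ℂ => (starRingEnd ℂ) z)
      (Oset ν t ∩ {z : ℂ | z.im < 0}) (Oset ν t ∩ {z : ℂ | 0 < z.im}) := by
    refine ⟨?_, ?_, ?_⟩
    · rintro z ⟨hz1, hz2⟩
      refine ⟨Oset_conj ν t hz1, ?_⟩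
      simp only [Set.mem_setOf_eq, Complex.conj_im]
      simp only [Set.mem_setOf_eq] at hz2
      linarith
    · intro a _ b _ h
      exact star_injective h
    · rintro a ⟨ha1, ha2⟩
      refine ⟨(starRingEnd ℂ) a, ⟨Oset_conj ν t ha1, ?_⟩, ?_⟩
      · simp only [Set.mem_setOf_eq, Complex.conj_im]
        simp only [Set.mem_setOf_eq] at ha2
        linarith
      · simp
  have hc2 : Set.BijOn (fun z : ℂ => (starRingEnd ℂ) z) {z : ℂ | 0 < z.im} {z : ℂ | z.im < 0} := by
    refine ⟨?_, ?_, ?_⟩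
    · intro z hz
      simp only [Set.mem_setOf_eq, Complex.conj_im]
      simp only [Set.mem_setOf_eq] at hz
      linarith
    · intro a _ b _ h
      exact star_injective h
    · intro a ha
      refine ⟨(starRingEnd ℂ) a, ?_, by simp⟩
      simp only [Set.mem_setOf_eq, Complex.conj_im]
      simp only [Set.mem_setOf_eq] at ha
      linarith
  have hcomp := (hc2.comp (HT_bijOn_upper ν ht)).comp hc1
  have heq : (((fun z : ℂ => (starRingEnd ℂ) z) ∘ HT ν t) ∘ fun z : ℂ => (starRingEnd ℂ) z)
      = HT ν t := by
    funext z
    simp only [Function.comp_apply]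
    rw [HT_conj]
    simp
  rwa [heq] at hcomp

/-- Proposition 2.4 (conformal bijection part): let `μ0` be a probability measure on `ℝ`
with density at most `1`, Stieltjes transform `m0`, and let `ν = Q(μ0)` be the probability
measure with Stieltjes transform `1 − exp(−m0)`. For `t > 0` let
`Ω_t = {z ∈ ℂ ∖ ℝ : ∫ dQ(μ0)(x)/|x − z|² < 1/t}`. Then `z ↦ z + t·exp(−m0 z)` is
holomorphic on `Ω_t`, maps `Ω_t ∩ ℂ₊` bijectively onto `ℂ₊`, and maps `Ω_t ∩ ℂ₋`
bijectively onto `ℂ₋`. -/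
theorem stmt5 (μ0 : Measure ℝ) [IsProbabilityMeasure μ0]
    (hac : μ0 ≪ volume) (hd : ∀ᵐ x ∂volume, μ0.rnDeriv volume x ≤ 1)
    (m0 : ℂ → ℂ) (hm0 : ∀ z : ℂ, m0 z = ∫ x : ℝ, ((x : ℂ) - z)⁻¹ ∂μ0)
    (ν : Measure ℝ) [IsProbabilityMeasure ν]
    (hν : ∀ z : ℂ, z.im ≠ 0 →
      (∫ x : ℝ, ((x : ℂ) - z)⁻¹ ∂ν) = 1 - Complex.exp (-(m0 z)))
    (t : ℝ) (ht : 0 < t)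
    (Ω : Set ℂ)
    (hΩ : Ω = {z : ℂ | z.im ≠ 0 ∧
      (∫⁻ x : ℝ, ENNReal.ofReal (1 / ‖(x : ℂ) - z‖ ^ 2) ∂ν)
        < ENNReal.ofReal (1 / t)}) :
    DifferentiableOn ℂ (fun z => z + (t : ℂ) * Complex.exp (-(m0 z))) Ω ∧
    Set.BijOn (fun z => z + (t : ℂ) * Complex.exp (-(m0 z)))
      (Ω ∩ {z : ℂ | 0 < z.im}) {z : ℂ | 0 < z.im} ∧
    Set.BijOn (fun z => z + (t : ℂ) * Complex.exp (-(m0 z)))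
      (Ω ∩ {z : ℂ | z.im < 0}) {z : ℂ | z.im < 0} := by
  have hΩO : Ω = Oset ν t := by rw [hΩ]; rfl
  have hEq : ∀ z ∈ Oset ν t, z + (t:ℂ) * Complex.exp (-(m0 z)) = HT ν t z := by
    intro z hz
    have h2 : Complex.exp (-(m0 z)) = 1 - smT ν z := by
      have h3 := hν z hz.1
      rw [smT, h3]; ring
    rw [HT, h2]
  refine ⟨?_, ?_, ?_⟩
  · have hdiff : DifferentiableOn ℂ (HT ν t) Ω := by
      intro z hz
      rw [hΩO] at hz
      exact (HT_differentiableAt ν t hz.1).differentiableWithinAt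
    apply hdiff.congr
    intro z hz
    rw [hΩO] at hz
    exact hEq z hz
  · rw [hΩO]
    apply (HT_bijOn_upper ν ht).congr
    intro z hz
    exact (hEq z hz.1).symm
  · rw [hΩO]
    apply (HT_bijOn_lower ν ht).congr
    intro z hz
    exact (hEq z hz.1).symm
end

section
/- Let μ_0 be a probability measure on ℝ that is absolutely continuous with density at most 1, with Stieltjes transform m_0, let Q(μ_0) be the probability measure whose Stieltjes transform is 1 − exp(−m_0(z)) for z ∈ ℂ ∖ ℝ, and for t > 0 set Ω_t = {z ∈ ℂ ∖ ℝ : ∫_ℝ dQ(μ_0)(x)/|x − z|² < 1/t}. Then for every z ∈ Ω_t and all 0 ≤ s ≤ s' ≤ t, the point z_s(z) = z + s·exp(−m_0(z)) lies in ℂ ∖ ℝ, Im[z_s(z)] has the same sign as Im[z], and |Im[z_{s'}(z)]| ≤ |Im[z_s(z)]|. -/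
open MeasureTheory

/-- Proposition 2.4 (monotonicity part): with `μ0`, `m0`, `ν = Q(μ0)` and `Ω_t` as in the
Markov–Krein setup, for every `z ∈ Ω_t` and `0 ≤ s ≤ s' ≤ t` the point
`z_s(z) = z + s·exp(−m0 z)` lies in `ℂ ∖ ℝ` with `Im z_s(z)` of the same sign as `Im z`
(encoded as `Im(z_s(z)) · Im z > 0`), and `|Im z_{s'}(z)| ≤ |Im z_s(z)|`. -/
theorem stmt6 (μ0 : Measure ℝ) [IsProbabilityMeasure μ0]
    (hac : μ0 ≪ volume) (hd : ∀ᵐ x ∂volume, μ0.rnDeriv volume x ≤ 1)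
    (m0 : ℂ → ℂ) (hm0 : ∀ z : ℂ, m0 z = ∫ x : ℝ, ((x : ℂ) - z)⁻¹ ∂μ0)
    (ν : Measure ℝ) [IsProbabilityMeasure ν]
    (hν : ∀ z : ℂ, z.im ≠ 0 →
      (∫ x : ℝ, ((x : ℂ) - z)⁻¹ ∂ν) = 1 - Complex.exp (-(m0 z)))
    (t : ℝ) (ht : 0 < t)
    (Ω : Set ℂ)
    (hΩ : Ω = {z : ℂ | z.im ≠ 0 ∧
      (∫⁻ x : ℝ, ENNReal.ofReal (1 / ‖(x : ℂ) - z‖ ^ 2) ∂ν)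
        < ENNReal.ofReal (1 / t)})
    (z : ℂ) (hz : z ∈ Ω)
    (s s' : ℝ) (hs : 0 ≤ s) (hss' : s ≤ s') (hs't : s' ≤ t) :
    0 < (z + (s : ℂ) * Complex.exp (-(m0 z))).im * z.im ∧
    |(z + (s' : ℂ) * Complex.exp (-(m0 z))).im|
      ≤ |(z + (s : ℂ) * Complex.exp (-(m0 z))).im| := by
  subst hΩ
  obtain ⟨hzim, hlt⟩ := hz
  -- basic facts
  have hne : ∀ x : ℝ, ((x : ℂ) - z) ≠ 0 := by
    intro x h
    apply hzim
    have := congrArg Complex.im h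
    simpa using this.symm
  have habs_pos : ∀ x : ℝ, 0 < ‖(x : ℂ) - z‖ := fun x =>
    (norm_pos_iff.mpr (hne x))
  have habs_ge : ∀ x : ℝ, |z.im| ≤ ‖(x : ℂ) - z‖ := by
    intro x
    have h1 : |((x : ℂ) - z).im| ≤ ‖(x : ℂ) - z‖ := Complex.abs_im_le_norm _
    simpa using h1
  have hzim_pos : 0 < |z.im| := abs_pos.mpr hzim
  -- measurability
  have hmeas : Measurable fun x : ℝ => ((x : ℂ) - z)⁻¹ :=
    ((Complex.measurable_ofReal.sub measurable_const).inv)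
  -- integrability of the Stieltjes kernel
  have hint : Integrable (fun x : ℝ => ((x : ℂ) - z)⁻¹) ν := by
    refine (integrable_const (|z.im|⁻¹)).mono' hmeas.aestronglyMeasurable ?_
    filter_upwards with x
    rw [norm_inv]
    exact inv_anti₀ hzim_pos (habs_ge x)
  -- integrability of the squared kernel
  have hmeas2 : Measurable fun x : ℝ => 1 / ‖(x : ℂ) - z‖ ^ 2 := by
    apply Measurable.div measurable_const
    exact ((Complex.measurable_ofReal.sub measurable_const).norm.pow measurable_const)
  have hint2 : Integrable (fun x : ℝ => 1 / ‖(x : ℂ) - z‖ ^ 2) ν := by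
    refine (integrable_const ((|z.im| ^ 2)⁻¹)).mono' hmeas2.aestronglyMeasurable ?_
    filter_upwards with x
    rw [Real.norm_eq_abs, abs_of_nonneg (by positivity), one_div]
    apply inv_anti₀ (by positivity)
    exact pow_le_pow_left₀ hzim_pos.le (habs_ge x) 2
  set c : ℝ := ∫ x : ℝ, 1 / ‖(x : ℂ) - z‖ ^ 2 ∂ν with hc
  have hc_nonneg : 0 ≤ c := integral_nonneg fun x => by positivity
  -- c < 1/t
  have hc_lt : c < 1 / t := by
    have heq : c = (∫⁻ x : ℝ, ENNReal.ofReal (1 / ‖(x : ℂ) - z‖ ^ 2) ∂ν).toReal := by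
      rw [hc, integral_eq_lintegral_of_nonneg_ae (Filter.Eventually.of_forall fun x => by positivity)
        hmeas2.aestronglyMeasurable]
    rw [heq]
    exact ENNReal.toReal_lt_of_lt_ofReal hlt
  -- imaginary part of the Stieltjes transform of ν
  have him : (∫ x : ℝ, ((x : ℂ) - z)⁻¹ ∂ν).im = z.im * c := by
    have h0 := integral_im (𝕜 := ℂ) hint
    simp only [RCLike.im_to_complex] at h0
    rw [← h0, hc, ← integral_const_mul]
    congr 1
    funext x
    rw [Complex.inv_im, Complex.normSq_eq_norm_sq]
    have : ((x : ℂ) - z).im = -z.im := by simp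
    rw [this]
    field_simp
  have hw : (Complex.exp (-(m0 z))).im = -(z.im * c) := by
    have h := hν z hzim
    have := congrArg Complex.im h
    rw [him] at this
    simp only [Complex.sub_im, Complex.one_im] at this
    linarith
  -- key positivity facts
  have htc : t * c < 1 := by
    calc t * c < t * (1 / t) := by exact mul_lt_mul_of_pos_left hc_lt ht
    _ = 1 := by field_simp
  have h1 : ∀ r : ℝ, 0 ≤ r → r ≤ t → 0 < 1 - r * c := by
    intro r hr hrt
    nlinarith [mul_le_mul_of_nonneg_right hrt hc_nonneg]
  have him_s : ∀ r : ℝ, (z + (r : ℂ) * Complex.exp (-(m0 z))).im = z.im * (1 - r * c) := by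
    intro r
    simp [Complex.add_im, Complex.mul_im, hw]
    ring
  constructor
  · rw [him_s]
    have := h1 s hs (hss'.trans hs't)
    nlinarith [mul_self_pos.mpr hzim]
  · rw [him_s, him_s, abs_mul, abs_mul,
      abs_of_pos (h1 s' (hs.trans hss') hs't), abs_of_pos (h1 s hs (hss'.trans hs't))]
    have : s * c ≤ s' * c := mul_le_mul_of_nonneg_right hss' hc_nonneg
    nlinarith
end

section
/- Fix T > 0. Let μ_0 be a probability measure on ℝ absolutely continuous with density at most 1, with Stieltjes transform m_0, and let Ω_T = {z ∈ ℂ ∖ ℝ : ∫_ℝ dQ(μ_0)(x)/|x − z|² < 1/T}, where Q(μ_0) is the probability measure with Stieltjes transform 1 − exp(−m_0). Suppose {μ_t}_{0 ≤ t ≤ T} is a family of probability measures on ℝ whose Stieltjes transforms m_t satisfy m_t(z_t(z)) = m_0(z) for all t ∈ [0,T] and z ∈ Ω_T, where z_t(z) = z + t·exp(−m_0(z)), and suppose that for each w ∈ ℂ ∖ ℝ the map t ↦ m_t(w) is differentiable. Then for every t ∈ [0,T] and z ∈ Ω_T: 1 − t·∂_z m_0(z)·e^{−m_0(z)} ≠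 0, and (∂_z m_t)(z_t(z)) = ∂_z m_0(z)/(1 − t·∂_z m_0(z)·e^{−m_0(z)}), (∂_z² m_t)(z_t(z)) = (∂_z² m_0(z) − t·(∂_z m_0(z))³·e^{−m_0(z)})/(1 − t·∂_z m_0(z)·e^{−m_0(z)})³, and (∂_t m_t)(z_t(z)) = −∂_z m_0(z)·e^{−m_0(z)}/(1 − t·∂_z m_0(z)·e^{−m_0(z)}). -/
open MeasureTheory

open Filter Metric

/-! ### Auxiliary lemmas -/

lemma norm_inv_sub_le (x : ℝ) (w : ℂ) {δ : ℝ} (hδ : 0 < δ) (h : δ ≤ |w.im|) :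
    ‖((x : ℂ) - w)⁻¹‖ ≤ δ⁻¹ := by
  rw [norm_inv]
  have h1 : δ ≤ ‖(x : ℂ) - w‖ := by
    calc δ ≤ |w.im| := h
    _ = |((x:ℂ) - w).im| := by simp
    _ ≤ ‖(x:ℂ) - w‖ := Complex.abs_im_le_norm _
    _ = ‖(x:ℂ) - w‖ := rfl
  exact inv_anti₀ hδ h1

lemma sub_ne_zero_of_im (x : ℝ) (w : ℂ) (h : w.im ≠ 0) : ((x : ℂ) - w) ≠ 0 := by
  intro hc
  apply h
  have : ((x:ℂ) - w).im = 0 := by rw [hc]; simp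
  simpa using this

lemma cont_inv_pow (w : ℂ) (h : w.im ≠ 0) (k : ℕ) :
    Continuous (fun x : ℝ => ((x : ℂ) - w)⁻¹ ^ k) := by
  apply Continuous.pow
  exact ((Complex.continuous_ofReal.sub continuous_const).inv₀
    (fun x => sub_ne_zero_of_im x w h))

lemma integrable_inv_pow (μ : Measure ℝ) [IsFiniteMeasure μ] (w : ℂ) (h : w.im ≠ 0) (k : ℕ) :
    Integrable (fun x : ℝ => ((x : ℂ) - w)⁻¹ ^ k) μ := by
  have hδ : 0 < |w.im| := abs_pos.mpr h
  refine Integrable.mono' (integrable_const ((|w.im|⁻¹) ^ k))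
    ((cont_inv_pow w h k).aestronglyMeasurable) ?_
  filter_upwards with x
  rw [norm_pow]
  exact pow_le_pow_left₀ (norm_nonneg _) (norm_inv_sub_le x w hδ le_rfl) k

lemma hasDerivAt_inv_pow (x : ℝ) (w : ℂ) (h : w.im ≠ 0) (k : ℕ) :
    HasDerivAt (fun u : ℂ => ((x : ℂ) - u)⁻¹ ^ (k+1))
      ((k+1) * ((x : ℂ) - w)⁻¹ ^ (k+2)) w := by
  have h0 : ((x:ℂ) - w) ≠ 0 := sub_ne_zero_of_im x w h
  have h1 : HasDerivAt (fun u : ℂ => (x : ℂ) - u) (-1) w := by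
    simpa using (hasDerivAt_id w).const_sub ((x:ℂ))
  have h2 : HasDerivAt (fun u : ℂ => ((x : ℂ) - u)⁻¹) (((x:ℂ) - w)⁻¹ ^ 2) w := by
    have := h1.inv h0
    refine this.congr_deriv ?_
    field_simp
  have h3 := h2.pow (k+1)
  refine h3.congr_deriv ?_
  push_cast
  ring

lemma hasDerivAt_stieltjes (μ : Measure ℝ) [IsFiniteMeasure μ] (k : ℕ) (z : ℂ) (hz : z.im ≠ 0) :
    HasDerivAt (fun w : ℂ => ∫ x : ℝ, ((x : ℂ) - w)⁻¹ ^ (k+1) ∂μ)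
      ((k+1) * ∫ x : ℝ, ((x : ℂ) - z)⁻¹ ^ (k+2) ∂μ) z := by
  have hδ : 0 < |z.im| := abs_pos.mpr hz
  set δ := |z.im| with hδdef
  have hball : ∀ w ∈ ball z (δ/2), δ/2 ≤ |w.im| := by
    intro w hw
    have : |w.im - z.im| ≤ dist w z := by
      simpa [dist_eq_norm] using Complex.abs_im_le_norm (w - z)
    rw [mem_ball] at hw
    have := abs_sub_abs_le_abs_sub w.im z.im
    have h2 : |z.im| - |w.im| ≤ |w.im - z.im| := by
      rw [abs_sub_comm]; exact abs_sub_abs_le_abs_sub z.im w.im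
    linarith
  have key := hasDerivAt_integral_of_dominated_loc_of_deriv_le (μ := μ)
    (F := fun w : ℂ => fun x : ℝ => ((x : ℂ) - w)⁻¹ ^ (k+1))
    (F' := fun w : ℂ => fun x : ℝ => ((k:ℂ)+1) * ((x : ℂ) - w)⁻¹ ^ (k+2))
    (x₀ := z) (bound := fun _ => ((k:ℝ)+1) * ((δ/2)⁻¹) ^ (k+2))
    (ball_mem_nhds z (half_pos hδ)) ?_ ?_ ?_ ?_ ?_ ?_
  · refine key.2.congr_deriv ?_
    rw [← integral_const_mul]
  · filter_upwards [isOpen_ball.mem_nhds (mem_ball_self (half_pos hδ))] with w hw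
    have him : w.im ≠ 0 := by
      have := hball w hw; intro hc; rw [hc] at this; simp at this; linarith
    exact (cont_inv_pow w him (k+1)).aestronglyMeasurable
  · exact integrable_inv_pow μ z hz (k+1)
  · have : Continuous (fun x : ℝ => ((k:ℂ)+1) * ((x : ℂ) - z)⁻¹ ^ (k+2)) :=
      continuous_const.mul (cont_inv_pow z hz (k+2))
    exact this.aestronglyMeasurable
  · filter_upwards with x
    intro w hw
    have him := hball w hw
    rw [norm_mul, norm_pow]
    have h1 : ‖((x:ℂ) - w)⁻¹‖ ≤ (δ/2)⁻¹ := norm_inv_sub_le x w (half_pos hδ) him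
    have h2 : ‖((k:ℂ)+1)‖ = (k:ℝ)+1 := by
      rw [show ((k:ℂ)+1) = (((k+1 : ℕ) : ℝ) : ℂ) by push_cast; ring,
        Complex.norm_real, Real.norm_eq_abs]
      rw [abs_of_nonneg (by positivity)]
      push_cast; ring
    rw [h2]
    have := pow_le_pow_left₀ (norm_nonneg _) h1 (k+2)
    have hk : (0:ℝ) ≤ (k:ℝ)+1 := by positivity
    exact mul_le_mul_of_nonneg_left this hk
  · exact integrable_const _
  · filter_upwards with x
    intro w hw
    have him : w.im ≠ 0 := by
      have := hball w hw; intro hc; rw [hc] at this; simp at this; linarith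
    exact hasDerivAt_inv_pow x w him k

section B
variable (ν : Measure ℝ) [IsFiniteMeasure ν]

lemma omega_open (c : ENNReal) :
    IsOpen {z : ℂ | z.im ≠ 0 ∧
      (∫⁻ x : ℝ, ENNReal.ofReal (1 / ‖(x : ℂ) - z‖ ^ 2) ∂ν) < c} := by
  have hU : IsOpen {z : ℂ | z.im ≠ 0} :=
    IsOpen.preimage Complex.continuous_im isOpen_ne
  have hF : ContinuousOn
      (fun z : ℂ => ∫⁻ x : ℝ, ENNReal.ofReal (1 / ‖(x : ℂ) - z‖ ^ 2) ∂ν)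
      {z : ℂ | z.im ≠ 0} := by
    intro z hz
    apply ContinuousAt.continuousWithinAt
    have hδ : 0 < |z.im| := abs_pos.mpr hz
    set δ := |z.im|
    have hball : ∀ w ∈ ball z (δ/2), δ/2 ≤ |w.im| := by
      intro w hw
      rw [mem_ball] at hw
      have h1 : |w.im - z.im| ≤ dist w z := by
        simpa [dist_eq_norm] using Complex.abs_im_le_norm (w - z)
      have h2 : |z.im| - |w.im| ≤ |w.im - z.im| := by
        rw [abs_sub_comm]; exact abs_sub_abs_le_abs_sub z.im w.im
      linarith
    unfold ContinuousAt
    apply tendsto_lintegral_filter_of_dominated_convergence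
      (fun _ => ENNReal.ofReal (1 / (δ/2) ^ 2))
    · filter_upwards with w
      apply Measurable.ennreal_ofReal
      apply Measurable.const_div
      exact ((continuous_norm.comp
        (Complex.continuous_ofReal.sub continuous_const)).pow 2).measurable
    · filter_upwards [isOpen_ball.mem_nhds (mem_ball_self (half_pos hδ))] with w hw
      filter_upwards with x
      apply ENNReal.ofReal_le_ofReal
      apply div_le_div_of_nonneg_left one_pos.le (by positivity)
      have h1 : δ/2 ≤ ‖(x:ℂ) - w‖ := by
        calc δ/2 ≤ |w.im| := hball w hw
        _ = |((x:ℂ) - w).im| := by simp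
        _ ≤ ‖(x:ℂ) - w‖ := Complex.abs_im_le_norm _
      have := pow_le_pow_left₀ (by positivity) h1 2
      exact this
    · simp [lintegral_const]
      exact ENNReal.mul_ne_top ENNReal.ofReal_ne_top (measure_ne_top ν Set.univ)
    · filter_upwards with x
      apply (ENNReal.continuous_ofReal.continuousAt).comp
      apply ContinuousAt.div continuousAt_const
      · exact ((continuous_norm.comp
          (continuous_const.sub continuous_id)).pow 2).continuousAt
      · have : ((x:ℂ) - z) ≠ 0 := sub_ne_zero_of_im x z hz
        have habs : 0 < ‖(x:ℂ) - z‖ := by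
          rwa [norm_pos_iff]
        show (‖(x:ℂ) - z‖) ^ 2 ≠ 0
        positivity
  have : {z : ℂ | z.im ≠ 0 ∧
      (∫⁻ x : ℝ, ENNReal.ofReal (1 / ‖(x : ℂ) - z‖ ^ 2) ∂ν) < c}
      = {z : ℂ | z.im ≠ 0} ∩
        (fun z : ℂ => ∫⁻ x : ℝ, ENNReal.ofReal (1 / ‖(x : ℂ) - z‖ ^ 2) ∂ν) ⁻¹'
          (Set.Iio c) := by
    ext w; simp [Set.mem_setOf_eq, Set.mem_Iio]
  rw [this]
  exact hF.isOpen_inter_preimage hU isOpen_Iio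

lemma norm_inv_sq_eq (x : ℝ) (w : ℂ) :
    ‖((x : ℂ) - w)⁻¹ ^ 2‖ = 1 / ‖(x : ℂ) - w‖ ^ 2 := by
  rw [norm_pow, norm_inv]
  rw [one_div, ← inv_pow]

lemma integrable_abs_inv_sq (w : ℂ) (h : w.im ≠ 0) :
    Integrable (fun x : ℝ => 1 / ‖(x : ℂ) - w‖ ^ 2) ν := by
  have h2 : Integrable (fun x : ℝ => ((x : ℂ) - w)⁻¹ ^ 2) ν := integrable_inv_pow ν w h 2
  refine h2.norm.congr ?_
  filter_upwards with x
  exact norm_inv_sq_eq x w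

lemma integral_im_inv (w : ℂ) (h : w.im ≠ 0) :
    (∫ x : ℝ, ((x : ℂ) - w)⁻¹ ∂ν).im
      = w.im * ∫ x : ℝ, 1 / ‖(x : ℂ) - w‖ ^ 2 ∂ν := by
  have hint : Integrable (fun x : ℝ => ((x : ℂ) - w)⁻¹) ν := by
    have := integrable_inv_pow ν w h 1
    simpa using this
  have h1 : (∫ x : ℝ, ((x : ℂ) - w)⁻¹ ∂ν).im = ∫ x : ℝ, (((x : ℂ) - w)⁻¹).im ∂ν := by
    rw [← Complex.imCLM_apply, ← ContinuousLinearMap.integral_comp_comm _ hint]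
    rfl
  rw [h1, ← integral_const_mul]
  congr 1
  funext x
  rw [Complex.inv_im]
  have : ((x:ℂ) - w).im = -w.im := by simp
  rw [this, Complex.normSq_eq_norm_sq]
  field_simp

lemma norm_integral_inv_sq_le (w : ℂ) :
    ‖∫ x : ℝ, ((x : ℂ) - w)⁻¹ ^ 2 ∂ν‖ ≤ ∫ x : ℝ, 1 / ‖(x : ℂ) - w‖ ^ 2 ∂ν := by
  refine (norm_integral_le_integral_norm _).trans_eq ?_
  congr 1
  funext x
  exact norm_inv_sq_eq x w

lemma integral_abs_eq_toReal (w : ℂ) (h : w.im ≠ 0) :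
    ∫ x : ℝ, 1 / ‖(x : ℂ) - w‖ ^ 2 ∂ν
      = (∫⁻ x : ℝ, ENNReal.ofReal (1 / ‖(x : ℂ) - w‖ ^ 2) ∂ν).toReal := by
  rw [integral_eq_lintegral_of_nonneg_ae]
  · filter_upwards with x
    positivity
  · exact (integrable_abs_inv_sq ν w h).aestronglyMeasurable

end B

lemma pointwise_expansion (x : ℝ) (u v : ℂ) (hu : u.im ≠ 0) (hv : v.im ≠ 0) :
    ((x : ℂ) - u)⁻¹ - ((x : ℂ) - v)⁻¹
      = (u - v) * ((x : ℂ) - v)⁻¹ ^ 2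
        + (u - v) ^ 2 * (((x : ℂ) - u)⁻¹ * ((x : ℂ) - v)⁻¹ ^ 2) := by
  have hu' := sub_ne_zero_of_im x u hu
  have hv' := sub_ne_zero_of_im x v hv
  field_simp
  ring

lemma integrable_mixed (μ : Measure ℝ) [IsFiniteMeasure μ] (u v : ℂ)
    (hu : u.im ≠ 0) (hv : v.im ≠ 0) :
    Integrable (fun x : ℝ => ((x : ℂ) - u)⁻¹ * ((x : ℂ) - v)⁻¹ ^ 2) μ := by
  have hau : 0 < |u.im| := abs_pos.mpr hu
  have hav : 0 < |v.im| := abs_pos.mpr hv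
  refine Integrable.mono' (integrable_const (|u.im|⁻¹ * (|v.im|⁻¹) ^ 2)) ?_ ?_
  · apply Continuous.aestronglyMeasurable
    exact ((Complex.continuous_ofReal.sub continuous_const).inv₀
      (fun x => sub_ne_zero_of_im x u hu)).mul
      (((Complex.continuous_ofReal.sub continuous_const).inv₀
        (fun x => sub_ne_zero_of_im x v hv)).pow 2)
  · filter_upwards with x
    rw [norm_mul, norm_pow]
    have h1 : ‖((x:ℂ) - u)⁻¹‖ ≤ |u.im|⁻¹ := norm_inv_sub_le x u hau le_rfl
    have h2 : ‖((x:ℂ) - v)⁻¹‖ ≤ |v.im|⁻¹ := norm_inv_sub_le x v hav le_rfl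
    exact mul_le_mul h1 (pow_le_pow_left₀ (norm_nonneg _) h2 2) (by positivity) (by positivity)

lemma stieltjes_expansion (μ : Measure ℝ) [IsFiniteMeasure μ] (u v : ℂ)
    (hu : u.im ≠ 0) (hv : v.im ≠ 0) :
    (∫ x : ℝ, ((x : ℂ) - u)⁻¹ ∂μ) - (∫ x : ℝ, ((x : ℂ) - v)⁻¹ ∂μ)
      = (u - v) * (∫ x : ℝ, ((x : ℂ) - v)⁻¹ ^ 2 ∂μ)
        + (u - v) ^ 2 * ∫ x : ℝ, ((x : ℂ) - u)⁻¹ * ((x : ℂ) - v)⁻¹ ^ 2 ∂μ := by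
  have i1 := integrable_inv_pow μ u hu 1
  have i2 := integrable_inv_pow μ v hv 1
  have i3 := integrable_inv_pow μ v hv 2
  have i4 := integrable_mixed μ u v hu hv
  simp only [pow_one] at i1 i2
  rw [← integral_sub i1 i2, ← integral_const_mul, ← integral_const_mul,
    ← integral_add (i3.const_mul _) (i4.const_mul _)]
  congr 1
  funext x
  exact pointwise_expansion x u v hu hv

lemma remainder_bound (μ : Measure ℝ) [IsProbabilityMeasure μ] (u v : ℂ)
    {a b : ℝ} (ha : 0 < a) (hb : 0 < b) (hua : a ≤ |u.im|) (hvb : b ≤ |v.im|) :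
    ‖∫ x : ℝ, ((x : ℂ) - u)⁻¹ * ((x : ℂ) - v)⁻¹ ^ 2 ∂μ‖ ≤ a⁻¹ * (b⁻¹) ^ 2 := by
  refine (norm_integral_le_integral_norm _).trans ?_
  have : ∫ x : ℝ, (a⁻¹ * (b⁻¹) ^ 2 : ℝ) ∂μ = a⁻¹ * (b⁻¹) ^ 2 := by
    simp
  rw [← this]
  apply integral_mono_of_nonneg
  · filter_upwards with x; positivity
  · exact integrable_const _
  · filter_upwards with x
    rw [norm_mul, norm_pow]
    exact mul_le_mul (norm_inv_sub_le x u ha hua)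
      (pow_le_pow_left₀ (norm_nonneg _) (norm_inv_sub_le x v hb hvb) 2)
      (by positivity) (by positivity)

noncomputable def S2' (ρ : Measure ℝ) : ℂ → ℂ := fun u => ∫ x : ℝ, ((x : ℂ) - u)⁻¹ ^ 2 ∂ρ
noncomputable def S3' (ρ : Measure ℝ) : ℂ → ℂ := fun u => ∫ x : ℝ, ((x : ℂ) - u)⁻¹ ^ 3 ∂ρ

lemma hasDerivAt_S1' (ρ : Measure ℝ) [IsFiniteMeasure ρ] (u : ℂ) (hu : u.im ≠ 0) :
    HasDerivAt (fun w : ℂ => ∫ x : ℝ, ((x : ℂ) - w)⁻¹ ∂ρ) (S2' ρ u) u := by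
  have := hasDerivAt_stieltjes ρ 0 u hu
  simpa [S2'] using this

lemma hasDerivAt_S2' (ρ : Measure ℝ) [IsFiniteMeasure ρ] (u : ℂ) (hu : u.im ≠ 0) :
    HasDerivAt (S2' ρ) (2 * S3' ρ u) u := by
  have := hasDerivAt_stieltjes ρ 1 u hu
  norm_num at this
  convert this using 2 with w
  · simp [S2', inv_pow]
  · simp [S3', inv_pow]

lemma isOpen_im_ne : IsOpen {u : ℂ | u.im ≠ 0} :=
  IsOpen.preimage Complex.continuous_im isOpen_ne
/-- Proposition 2.6 (derivative identities for `m` along characteristics): if the Stieltjes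
transforms `m t` of a family of probability measures satisfy `m t (z_t z) = m 0 z` on `Ω_T`
with `z_t z = z + t·exp(−m 0 z)`, and `t ↦ m t w` is differentiable, then for `t ∈ [0,T]`
and `z ∈ Ω_T`: `1 − t·∂_z m0(z)·e^{−m0(z)} ≠ 0` and the stated formulas for
`(∂_z m_t)(z_t z)`, `(∂_z² m_t)(z_t z)` and `(∂_t m_t)(z_t z)` hold. -/
theorem stmt7 (T : ℝ) (hT : 0 < T)
    (μ : ℝ → Measure ℝ) (hprob : ∀ t ∈ Set.Icc (0 : ℝ) T, IsProbabilityMeasure (μ t))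
    (hac : μ 0 ≪ volume) (hd : ∀ᵐ x ∂volume, (μ 0).rnDeriv volume x ≤ 1)
    (m : ℝ → ℂ → ℂ)
    (hm : ∀ t ∈ Set.Icc (0 : ℝ) T, ∀ z : ℂ, m t z = ∫ x : ℝ, ((x : ℂ) - z)⁻¹ ∂(μ t))
    (ν : Measure ℝ) [IsProbabilityMeasure ν]
    (hν : ∀ z : ℂ, z.im ≠ 0 →
      (∫ x : ℝ, ((x : ℂ) - z)⁻¹ ∂ν) = 1 - Complex.exp (-(m 0 z)))
    (Ω : Set ℂ)
    (hΩ : Ω = {z : ℂ | z.im ≠ 0 ∧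
      (∫⁻ x : ℝ, ENNReal.ofReal (1 / ‖(x : ℂ) - z‖ ^ 2) ∂ν)
        < ENNReal.ofReal (1 / T)})
    (zc : ℝ → ℂ → ℂ) (hzc : ∀ t : ℝ, ∀ z : ℂ, zc t z = z + (t : ℂ) * Complex.exp (-(m 0 z)))
    (hchar : ∀ t ∈ Set.Icc (0 : ℝ) T, ∀ z ∈ Ω, m t (zc t z) = m 0 z)
    (hdiff : ∀ w : ℂ, w.im ≠ 0 → ∀ t ∈ Set.Icc (0 : ℝ) T,
      DifferentiableAt ℝ (fun s : ℝ => m s w) t)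
    (t : ℝ) (ht : t ∈ Set.Icc (0 : ℝ) T) (z : ℂ) (hz : z ∈ Ω) :
    (1 - (t : ℂ) * deriv (m 0) z * Complex.exp (-(m 0 z)) ≠ 0) ∧
    deriv (m t) (zc t z)
      = deriv (m 0) z / (1 - (t : ℂ) * deriv (m 0) z * Complex.exp (-(m 0 z))) ∧
    deriv (deriv (m t)) (zc t z)
      = (deriv (deriv (m 0)) z - (t : ℂ) * (deriv (m 0) z) ^ 3 * Complex.exp (-(m 0 z)))
        / (1 - (t : ℂ) * deriv (m 0) z * Complex.exp (-(m 0 z))) ^ 3 ∧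
    deriv (fun s : ℝ => m s (zc t z)) t
      = -(deriv (m 0) z * Complex.exp (-(m 0 z)))
        / (1 - (t : ℂ) * deriv (m 0) z * Complex.exp (-(m 0 z))) := by
  obtain ⟨ht0, htT⟩ := ht
  have ht : t ∈ Set.Icc (0:ℝ) T := ⟨ht0, htT⟩
  have h0T : (0:ℝ) ∈ Set.Icc (0:ℝ) T := ⟨le_rfl, hT.le⟩
  haveI hμ0 : IsProbabilityMeasure (μ 0) := hprob 0 h0T
  haveI hμt : IsProbabilityMeasure (μ t) := hprob t ht
  have hΩopen : IsOpen Ω := by rw [hΩ]; exact omega_open ν _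
  have hΩmem : ∀ w' ∈ Ω, w'.im ≠ 0 ∧
      (∫⁻ x : ℝ, ENNReal.ofReal (1 / ‖(x : ℂ) - w'‖ ^ 2) ∂ν)
        < ENNReal.ofReal (1 / T) := by
    intro w' hw'; rw [hΩ] at hw'; exact hw'
  have hz_im : z.im ≠ 0 := (hΩmem z hz).1
  have hmfun : ∀ s ∈ Set.Icc (0:ℝ) T, m s = fun u : ℂ => ∫ x : ℝ, ((x:ℂ) - u)⁻¹ ∂(μ s) :=
    fun s hs => funext (hm s hs)
  -- real integral Ir
  set Ir : ℂ → ℝ := fun u => ∫ x : ℝ, 1 / ‖(x:ℂ) - u‖ ^ 2 ∂ν with hIrdef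
  have hIr : ∀ w' ∈ Ω, 0 ≤ Ir w' ∧ Ir w' < 1/T := by
    intro w' hw'
    constructor
    · exact integral_nonneg fun x => by positivity
    · rw [hIrdef]
      simp only
      rw [integral_abs_eq_toReal ν w' (hΩmem w' hw').1]
      have hlt := (hΩmem w' hw').2
      have h1 : (∫⁻ x : ℝ, ENNReal.ofReal (1 / ‖(x : ℂ) - w'‖ ^ 2) ∂ν) ≠ ⊤ :=
        hlt.trans_le le_top |>.ne
      have := (ENNReal.toReal_lt_toReal h1 ENNReal.ofReal_ne_top).mpr hlt
      rwa [ENNReal.toReal_ofReal (by positivity)] at this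
  -- imaginary part of exp(-m0)
  have hEim : ∀ w' : ℂ, w'.im ≠ 0 → (Complex.exp (-(m 0 w'))).im = -(w'.im * Ir w') := by
    intro w' him
    have h1 := hν w' him
    have h2 := integral_im_inv ν w' him
    rw [h1] at h2
    have : (1 - Complex.exp (-(m 0 w'))).im = -(Complex.exp (-(m 0 w'))).im := by
      simp [Complex.sub_im]
    rw [this] at h2
    linarith [h2]
  have hzcim : ∀ w' : ℂ, w'.im ≠ 0 → ∀ s : ℝ, (zc s w').im = w'.im * (1 - s * Ir w') := by
    intro w' him s
    rw [hzc s w']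
    rw [Complex.add_im]
    have : ((s:ℂ) * Complex.exp (-(m 0 w'))).im = s * (Complex.exp (-(m 0 w'))).im := by
      rw [Complex.mul_im]; simp
    rw [this, hEim w' him]
    ring
  have hposIr : ∀ w' ∈ Ω, ∀ s ∈ Set.Icc (0:ℝ) T, 0 < 1 - s * Ir w' := by
    intro w' hw' s hs
    obtain ⟨hIr0, hIrlt⟩ := hIr w' hw'
    have h1 : s * Ir w' ≤ T * Ir w' := mul_le_mul_of_nonneg_right hs.2 hIr0
    have h2 : T * Ir w' < T * (1/T) := mul_lt_mul_of_pos_left hIrlt hT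
    have h3 : T * (1/T) = 1 := by field_simp
    linarith
  have hzcim_ne : ∀ w' ∈ Ω, ∀ s ∈ Set.Icc (0:ℝ) T, (zc s w').im ≠ 0 := by
    intro w' hw' s hs
    rw [hzcim w' (hΩmem w' hw').1 s]
    exact mul_ne_zero (hΩmem w' hw').1 (ne_of_gt (hposIr w' hw' s hs))
  have hw_im : (zc t z).im ≠ 0 := hzcim_ne z hz t ht
  -- derivative of m s
  have hmd : ∀ s ∈ Set.Icc (0:ℝ) T, ∀ u : ℂ, u.im ≠ 0 →
      HasDerivAt (m s) (S2' (μ s) u) u := by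
    intro s hs u hu
    haveI := hprob s hs
    rw [hmfun s hs]
    exact hasDerivAt_S1' (μ s) u hu
  have hA : deriv (m 0) z = S2' (μ 0) z := (hmd 0 h0T z hz_im).deriv
  set E := Complex.exp (-(m 0 z)) with hE
  set A := S2' (μ 0) z with hAdef
  -- derivative of exp(-m0)
  have hexp_d : ∀ u : ℂ, u.im ≠ 0 →
      HasDerivAt (fun v : ℂ => Complex.exp (-(m 0 v)))
        (-S2' (μ 0) u * Complex.exp (-(m 0 u))) u := by
    intro u hu
    have := ((hmd 0 h0T u hu).neg).cexp
    refine this.congr_deriv ?_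
    rw [Pi.neg_apply]
    ring
  -- identity A * E = ∫ (x - z)⁻¹ ^ 2 ∂ν  (at any point of im ≠ 0)
  have hAE : ∀ u : ℂ, u.im ≠ 0 →
      S2' (μ 0) u * Complex.exp (-(m 0 u)) = ∫ x : ℝ, ((x:ℂ) - u)⁻¹ ^ 2 ∂ν := by
    intro u hu
    have h1 : HasDerivAt (fun v : ℂ => ∫ x : ℝ, ((x:ℂ) - v)⁻¹ ∂ν) (S2' ν u) u :=
      hasDerivAt_S1' ν u hu
    have h2 : HasDerivAt (fun v : ℂ => 1 - Complex.exp (-(m 0 v)))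
        (S2' (μ 0) u * Complex.exp (-(m 0 u))) u := by
      have := (hexp_d u hu).const_sub 1
      refine this.congr_deriv ?_
      ring
    have heq : (fun v : ℂ => ∫ x : ℝ, ((x:ℂ) - v)⁻¹ ∂ν)
        =ᶠ[nhds u] (fun v : ℂ => 1 - Complex.exp (-(m 0 v))) := by
      filter_upwards [isOpen_im_ne.mem_nhds hu] with v hv using hν v hv
    have h1' : HasDerivAt (fun v : ℂ => 1 - Complex.exp (-(m 0 v))) (S2' ν u) u :=
      heq.hasDerivAt_iff.mp h1
    have := h2.unique h1'
    rw [this]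
    rfl
  -- nonvanishing of D at any w' ∈ Ω
  have hDne : ∀ w' ∈ Ω,
      1 - (t:ℂ) * S2' (μ 0) w' * Complex.exp (-(m 0 w')) ≠ 0 := by
    intro w' hw'
    have him := (hΩmem w' hw').1
    intro hc
    have h1 : (t:ℂ) * S2' (μ 0) w' * Complex.exp (-(m 0 w')) = 1 := by
      linear_combination -hc
    have h2 : ‖S2' (μ 0) w' * Complex.exp (-(m 0 w'))‖ ≤ Ir w' := by
      rw [hAE w' him]
      exact norm_integral_inv_sq_le ν w'
    have h3 : ‖(t:ℂ) * S2' (μ 0) w' * Complex.exp (-(m 0 w'))‖ < 1 := by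
      rw [mul_assoc, norm_mul]
      have ht_norm : ‖(t:ℂ)‖ = t := by
        rw [Complex.norm_real, Real.norm_eq_abs, abs_of_nonneg ht0]
      rw [ht_norm]
      calc t * ‖S2' (μ 0) w' * Complex.exp (-(m 0 w'))‖
          ≤ T * Ir w' := mul_le_mul htT h2 (norm_nonneg _) hT.le
        _ < T * (1/T) := mul_lt_mul_of_pos_left (hIr w' hw').2 hT
        _ = 1 := by field_simp
    rw [h1] at h3
    simp at h3
  have hD : 1 - (t:ℂ) * A * E ≠ 0 := hDne z hz
  -- key chain-rule identity at every w' ∈ Ω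
  have hzc_d : ∀ w' ∈ Ω, HasDerivAt (zc t)
      (1 - (t:ℂ) * S2' (μ 0) w' * Complex.exp (-(m 0 w'))) w' := by
    intro w' hw'
    have him := (hΩmem w' hw').1
    have hzcfun : zc t = fun u : ℂ => u + (t:ℂ) * Complex.exp (-(m 0 u)) := funext (hzc t)
    rw [hzcfun]
    have := (hasDerivAt_id w').add ((hexp_d w' him).const_mul ((t:ℂ)))
    refine this.congr_deriv ?_
    ring
  have hkey : ∀ w' ∈ Ω,
      S2' (μ t) (zc t w') * (1 - (t:ℂ) * S2' (μ 0) w' * Complex.exp (-(m 0 w')))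
        = S2' (μ 0) w' := by
    intro w' hw'
    have him := (hΩmem w' hw').1
    have hwim' := hzcim_ne w' hw' t ht
    have hcomp : HasDerivAt (fun u : ℂ => m t (zc t u))
        (S2' (μ t) (zc t w') * (1 - (t:ℂ) * S2' (μ 0) w' * Complex.exp (-(m 0 w')))) w' :=
      (hmd t ht _ hwim').comp w' (hzc_d w' hw')
    have heq : (fun u : ℂ => m t (zc t u)) =ᶠ[nhds w'] m 0 := by
      filter_upwards [hΩopen.mem_nhds hw'] with u hu using hchar t ht u hu
    have h1 : HasDerivAt (m 0)
        (S2' (μ t) (zc t w') * (1 - (t:ℂ) * S2' (μ 0) w' * Complex.exp (-(m 0 w')))) w' :=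
      heq.hasDerivAt_iff.mp hcomp
    exact h1.unique (hmd 0 h0T w' him)
  -- goal 2
  have hBt : deriv (m t) (zc t z) = S2' (μ t) (zc t z) := (hmd t ht _ hw_im).deriv
  have goal2 : deriv (m t) (zc t z) = A / (1 - (t:ℂ) * A * E) := by
    rw [hBt, eq_div_iff hD]
    exact hkey z hz
  refine ⟨by rw [hA]; exact hD, by rw [hA, goal2], ?_, ?_⟩
  · -- goal 3: second derivative
    have hA2 : deriv (deriv (m 0)) z = 2 * S3' (μ 0) z := by
      have heq : deriv (m 0) =ᶠ[nhds z] S2' (μ 0) := by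
        filter_upwards [isOpen_im_ne.mem_nhds hz_im] with v hv using (hmd 0 h0T v hv).deriv
      exact (heq.hasDerivAt_iff.mpr (hasDerivAt_S2' (μ 0) z hz_im)).deriv
    have hB2 : deriv (deriv (m t)) (zc t z) = 2 * S3' (μ t) (zc t z) := by
      have heq : deriv (m t) =ᶠ[nhds (zc t z)] S2' (μ t) := by
        filter_upwards [isOpen_im_ne.mem_nhds hw_im] with v hv using (hmd t ht v hv).deriv
      exact (heq.hasDerivAt_iff.mpr (hasDerivAt_S2' (μ t) _ hw_im)).deriv
    have hP : HasDerivAt (fun u : ℂ => S2' (μ t) (zc t u))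
        (2 * S3' (μ t) (zc t z) * (1 - (t:ℂ) * A * E)) z := by
      have := (hasDerivAt_S2' (μ t) (zc t z) hw_im).comp z (hzc_d z hz)
      exact this
    have hQ : HasDerivAt (fun u : ℂ => 1 - (t:ℂ) * S2' (μ 0) u * Complex.exp (-(m 0 u)))
        (-(t:ℂ) * (2 * S3' (μ 0) z * E - A ^ 2 * E)) z := by
      have hprod : HasDerivAt (fun u : ℂ => S2' (μ 0) u * Complex.exp (-(m 0 u)))
          (2 * S3' (μ 0) z * E - A ^ 2 * E) z := by
        have h2 := (hasDerivAt_S2' (μ 0) z hz_im).mul (hexp_d z hz_im)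
        refine h2.congr_deriv ?_
        simp only [hE, hAdef]
        ring
      have h3 := (hprod.const_mul ((t:ℂ))).const_sub 1
      have h4 : HasDerivAt (fun u : ℂ => 1 - (t:ℂ) * (S2' (μ 0) u * Complex.exp (-(m 0 u))))
          (-((t:ℂ) * (2 * S3' (μ 0) z * E - A ^ 2 * E))) z := h3
      have h5 : (fun u : ℂ => 1 - (t:ℂ) * (S2' (μ 0) u * Complex.exp (-(m 0 u))))
          = (fun u : ℂ => 1 - (t:ℂ) * S2' (μ 0) u * Complex.exp (-(m 0 u))) := by
        funext u; ring
      rw [h5] at h4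
      convert h4 using 1
      ring
    have hF_d : HasDerivAt
        (fun u : ℂ => S2' (μ t) (zc t u)
          * (1 - (t:ℂ) * S2' (μ 0) u * Complex.exp (-(m 0 u))))
        (2 * S3' (μ t) (zc t z) * (1 - (t:ℂ) * A * E) * (1 - (t:ℂ) * A * E)
          + S2' (μ t) (zc t z) * (-(t:ℂ) * (2 * S3' (μ 0) z * E - A ^ 2 * E))) z := by
      exact hP.mul hQ
    have heqF : (fun u : ℂ => S2' (μ t) (zc t u)
          * (1 - (t:ℂ) * S2' (μ 0) u * Complex.exp (-(m 0 u))))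
        =ᶠ[nhds z] S2' (μ 0) := by
      filter_upwards [hΩopen.mem_nhds hz] with u hu using hkey u hu
    have e2 : 2 * S3' (μ t) (zc t z) * (1 - (t:ℂ) * A * E) * (1 - (t:ℂ) * A * E)
          + S2' (μ t) (zc t z) * (-(t:ℂ) * (2 * S3' (μ 0) z * E - A ^ 2 * E))
        = 2 * S3' (μ 0) z :=
      (heqF.hasDerivAt_iff.mp hF_d).unique (hasDerivAt_S2' (μ 0) z hz_im)
    have e1 : S2' (μ t) (zc t z) * (1 - (t:ℂ) * A * E) = A := hkey z hz
    rw [hB2, hA2, hA, eq_div_iff (pow_ne_zero 3 hD)]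
    linear_combination (1 - (t:ℂ) * A * E) * e2 + (t:ℂ) * E * (2 * S3' (μ 0) z - A ^ 2) * e1
  · -- goal 4: time derivative
    have hδw : 0 < |(zc t z).im| := abs_pos.mpr hw_im
    have hIr0 := (hIr z hz).1
    have hδ0 : 0 < |z.im| * (1 - T * Ir z) := by
      apply mul_pos (abs_pos.mpr hz_im)
      exact hposIr z hz T ⟨hT.le, le_rfl⟩
    have hws_im : ∀ s ∈ Set.Icc (0:ℝ) T, |z.im| * (1 - T * Ir z) ≤ |(zc s z).im| := by
      intro s hs
      rw [hzcim z hz_im s, abs_mul]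
      have h1 : 0 < 1 - s * Ir z := hposIr z hz s hs
      rw [abs_of_pos h1]
      apply mul_le_mul_of_nonneg_left ?_ (abs_nonneg _)
      nlinarith [hs.2, hIr0]
    have hgap : ∀ s : ℝ, zc s z - zc t z = ((s:ℂ) - (t:ℂ)) * E := by
      intro s; rw [hzc s z, hzc t z, hE]; ring
    have hf_eq : ∀ s ∈ Set.Icc (0:ℝ) T,
        m s (zc t z) = m 0 z - (((s:ℂ)-(t:ℂ)) * E * S2' (μ s) (zc t z)
          + (((s:ℂ)-(t:ℂ)) * E) ^ 2
            * ∫ x : ℝ, ((x:ℂ) - zc s z)⁻¹ * ((x:ℂ) - zc t z)⁻¹ ^ 2 ∂(μ s)) := by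
      intro s hs
      haveI := hprob s hs
      have hws := hzcim_ne z hz s hs
      have hexp : m s (zc s z) - m s (zc t z)
          = (zc s z - zc t z) * S2' (μ s) (zc t z)
            + (zc s z - zc t z) ^ 2
              * ∫ x : ℝ, ((x:ℂ) - zc s z)⁻¹ * ((x:ℂ) - zc t z)⁻¹ ^ 2 ∂(μ s) := by
        rw [hm s hs (zc s z), hm s hs (zc t z)]
        exact stieltjes_expansion (μ s) (zc s z) (zc t z) hws hw_im
      rw [hgap s] at hexp
      linear_combination hchar s hs z hz - hexp
    -- continuity of s ↦ S2' (μ s) (zc t z) at t within the interval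
    have hG_tendsto : Filter.Tendsto (fun s : ℝ => S2' (μ s) (zc t z))
        (nhdsWithin t (Set.Icc (0:ℝ) T \ {t})) (nhds (S2' (μ t) (zc t z))) := by
      rw [Metric.tendsto_nhds]
      intro ε hε
      set η : ℝ := min 1 (ε * |(zc t z).im| ^ 3 / 8) with hηdef
      have hη0 : 0 < η := lt_min one_pos (by positivity)
      have hηle : η / |(zc t z).im| ^ 3 ≤ ε / 8 := by
        rw [div_le_iff₀ (by positivity)]
        calc η ≤ ε * |(zc t z).im| ^ 3 / 8 := min_le_right _ _
          _ = ε / 8 * |(zc t z).im| ^ 3 := by ring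
      have hwη_im : (zc t z + (η:ℂ)).im = (zc t z).im := by simp
      have hwη_ne : (zc t z + (η:ℂ)).im ≠ 0 := by rw [hwη_im]; exact hw_im
      have hηC : (η:ℂ) ≠ 0 := Complex.ofReal_ne_zero.mpr hη0.ne'
      have hDQclose : ∀ s ∈ Set.Icc (0:ℝ) T,
          dist (S2' (μ s) (zc t z))
            ((m s (zc t z + (η:ℂ)) - m s (zc t z)) * (η:ℂ)⁻¹) ≤ ε / 8 := by
        intro s hs
        haveI := hprob s hs
        have hexp := stieltjes_expansion (μ s) (zc t z + (η:ℂ)) (zc t z) hwη_ne hw_im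
        have hsub : zc t z + (η:ℂ) - zc t z = (η:ℂ) := by ring
        rw [hsub] at hexp
        have hDQeq : (m s (zc t z + (η:ℂ)) - m s (zc t z)) * (η:ℂ)⁻¹
            = S2' (μ s) (zc t z)
              + (η:ℂ) * ∫ x : ℝ, ((x:ℂ) - (zc t z + (η:ℂ)))⁻¹ * ((x:ℂ) - zc t z)⁻¹ ^ 2 ∂(μ s) := by
          rw [hm s hs (zc t z + (η:ℂ)), hm s hs (zc t z), hexp]
          simp only [S2']
          field_simp
        rw [dist_eq_norm, hDQeq]
        have h9 : ∀ a b : ℂ, a - (a + b) = -b := fun a b => by ring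
        rw [h9, norm_neg, norm_mul]
        have h10 : ‖(η:ℂ)‖ = η := by
          rw [Complex.norm_real, Real.norm_eq_abs, abs_of_pos hη0]
        rw [h10]
        have h11 := remainder_bound (μ s) (zc t z + (η:ℂ)) (zc t z)
          hδw hδw (by rw [hwη_im]) le_rfl
        calc η * ‖∫ x : ℝ, ((x:ℂ) - (zc t z + (η:ℂ)))⁻¹ * ((x:ℂ) - zc t z)⁻¹ ^ 2 ∂(μ s)‖
            ≤ η * (|(zc t z).im|⁻¹ * (|(zc t z).im|⁻¹) ^ 2) :=
              mul_le_mul_of_nonneg_left h11 hη0.le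
          _ = η / |(zc t z).im| ^ 3 := by
              have ha : |(zc t z).im| ≠ 0 := hδw.ne'
              field_simp
          _ ≤ ε / 8 := hηle
      have hcont : Filter.Tendsto
          (fun s : ℝ => (m s (zc t z + (η:ℂ)) - m s (zc t z)) * (η:ℂ)⁻¹)
          (nhdsWithin t (Set.Icc (0:ℝ) T \ {t}))
          (nhds ((m t (zc t z + (η:ℂ)) - m t (zc t z)) * (η:ℂ)⁻¹)) := by
        have h1 : ContinuousAt
            (fun s : ℝ => (m s (zc t z + (η:ℂ)) - m s (zc t z)) * (η:ℂ)⁻¹) t :=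
          (((hdiff _ hwη_ne t ht).continuousAt).sub
            ((hdiff _ hw_im t ht).continuousAt)).mul continuousAt_const
        exact h1.tendsto.mono_left nhdsWithin_le_nhds
      rw [Metric.tendsto_nhds] at hcont
      filter_upwards [hcont (ε/3) (by linarith), eventually_mem_nhdsWithin] with s hs1 hs2
      have hsI : s ∈ Set.Icc (0:ℝ) T := hs2.1
      calc dist (S2' (μ s) (zc t z)) (S2' (μ t) (zc t z))
          ≤ dist (S2' (μ s) (zc t z))
              ((m s (zc t z + (η:ℂ)) - m s (zc t z)) * (η:ℂ)⁻¹)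
            + dist ((m s (zc t z + (η:ℂ)) - m s (zc t z)) * (η:ℂ)⁻¹)
              ((m t (zc t z + (η:ℂ)) - m t (zc t z)) * (η:ℂ)⁻¹)
            + dist ((m t (zc t z + (η:ℂ)) - m t (zc t z)) * (η:ℂ)⁻¹)
              (S2' (μ t) (zc t z)) := dist_triangle4 _ _ _ _
        _ < ε := by
            have hb1 := hDQclose s hsI
            have hb2 : dist ((m t (zc t z + (η:ℂ)) - m t (zc t z)) * (η:ℂ)⁻¹)
                (S2' (μ t) (zc t z)) ≤ ε / 8 := by
              rw [dist_comm]; exact hDQclose t ht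
            linarith
    -- the within-derivative via slopes
    have hslope : HasDerivWithinAt (fun s : ℝ => m s (zc t z))
        (-(E * S2' (μ t) (zc t z))) (Set.Icc (0:ℝ) T) t := by
      rw [hasDerivWithinAt_iff_tendsto_slope]
      have hev : slope (fun s : ℝ => m s (zc t z)) t
          =ᶠ[nhdsWithin t (Set.Icc (0:ℝ) T \ {t})]
          (fun s : ℝ => -(E * S2' (μ s) (zc t z))
            - ((s:ℂ)-(t:ℂ)) * E ^ 2
              * ∫ x : ℝ, ((x:ℂ) - zc s z)⁻¹ * ((x:ℂ) - zc t z)⁻¹ ^ 2 ∂(μ s)) := by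
        filter_upwards [eventually_mem_nhdsWithin] with s hs
        have hsI : s ∈ Set.Icc (0:ℝ) T := hs.1
        have hst : s ≠ t := by simpa using hs.2
        have hstC : ((s:ℂ) - (t:ℂ)) ≠ 0 := by
          rw [sub_ne_zero]
          exact_mod_cast fun h => hst (by exact_mod_cast h)
        show (s - t)⁻¹ • ((fun s : ℝ => m s (zc t z)) s - (fun s : ℝ => m s (zc t z)) t) = _
        simp only
        rw [hchar t ht z hz, hf_eq s hsI]
        rw [Complex.real_smul]
        push_cast
        field_simp
        ring
      rw [tendsto_congr' hev]
      have h1 : Filter.Tendsto (fun s : ℝ => -(E * S2' (μ s) (zc t z)))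
          (nhdsWithin t (Set.Icc (0:ℝ) T \ {t})) (nhds (-(E * S2' (μ t) (zc t z)))) :=
        (hG_tendsto.const_mul E).neg
      have h2 : Filter.Tendsto
          (fun s : ℝ => ((s:ℂ)-(t:ℂ)) * E ^ 2
            * ∫ x : ℝ, ((x:ℂ) - zc s z)⁻¹ * ((x:ℂ) - zc t z)⁻¹ ^ 2 ∂(μ s))
          (nhdsWithin t (Set.Icc (0:ℝ) T \ {t})) (nhds 0) := by
        apply squeeze_zero_norm'
          (a := fun s : ℝ => |s - t| * (‖E‖ ^ 2 * ((|z.im| * (1 - T * Ir z))⁻¹ * (|(zc t z).im|⁻¹) ^ 2)))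
        · filter_upwards [eventually_mem_nhdsWithin] with s hs
          have hsI : s ∈ Set.Icc (0:ℝ) T := hs.1
          haveI := hprob s hsI
          have hRb := remainder_bound (μ s) (zc s z) (zc t z) hδ0 hδw (hws_im s hsI) le_rfl
          have hnc : ‖((s:ℂ) - (t:ℂ))‖ = |s - t| := by
            rw [show ((s:ℂ) - (t:ℂ)) = (((s - t : ℝ)):ℂ) by push_cast; ring,
              Complex.norm_real, Real.norm_eq_abs]
          calc ‖((s:ℂ)-(t:ℂ)) * E ^ 2
                * ∫ x : ℝ, ((x:ℂ) - zc s z)⁻¹ * ((x:ℂ) - zc t z)⁻¹ ^ 2 ∂(μ s)‖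
              = |s - t| * ‖E‖ ^ 2
                * ‖∫ x : ℝ, ((x:ℂ) - zc s z)⁻¹ * ((x:ℂ) - zc t z)⁻¹ ^ 2 ∂(μ s)‖ := by
                rw [norm_mul, norm_mul, hnc, norm_pow]
            _ ≤ |s - t| * ‖E‖ ^ 2 * ((|z.im| * (1 - T * Ir z))⁻¹ * (|(zc t z).im|⁻¹) ^ 2) := by
                apply mul_le_mul_of_nonneg_left hRb (by positivity)
            _ = |s - t| * (‖E‖ ^ 2 * ((|z.im| * (1 - T * Ir z))⁻¹ * (|(zc t z).im|⁻¹) ^ 2)) := by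
                ring
        · have h3 : Filter.Tendsto (fun s : ℝ => |s - t|) (nhds t) (nhds 0) := by
            have hc : Continuous (fun s : ℝ => |s - t|) :=
              (continuous_id.sub continuous_const).abs
            have := hc.tendsto t
            simpa using this
          have h4 := (h3.mul_const
            (‖E‖ ^ 2 * ((|z.im| * (1 - T * Ir z))⁻¹ * (|(zc t z).im|⁻¹) ^ 2))).mono_left
            (nhdsWithin_le_nhds (s := Set.Icc (0:ℝ) T \ {t}))
          simpa using h4
      have := h1.sub h2
      simpa using this
    have hu := uniqueDiffOn_Icc hT t ht
    have e1 := ((hdiff (zc t z) hw_im t ht).hasDerivAt.hasDerivWithinAt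
      (s := Set.Icc (0:ℝ) T)).derivWithin hu
    have e2 := hslope.derivWithin hu
    rw [← e1, e2, hA, eq_div_iff hD]
    linear_combination (-E) * hkey z hz
end

section
/- Fix T > 0. Let {μ_t}_{0 ≤ t ≤ T} be a family of probability measures on ℝ, each absolutely continuous with density at most 1, whose Stieltjes transforms m_t satisfy: for each z ∈ ℂ ∖ ℝ the map t ↦ m_t(z) is continuous, and m_t(z) = m_0(z) − ∫_0^t e^{−m_s(z)} · ∂_z m_s(z) ds for all t ∈ [0,T] and z ∈ ℂ ∖ ℝ. For z ∈ ℂ ∖ ℝ define 𝔱(z) = −Im[z]/Im[e^{−m_0(z)}] if Im[z] and Im[e^{−m_0(z)}] have opposite signs, and 𝔱(z) = +∞ otherwise. Then for every z ∈ ℂ ∖ ℝ and every t ∈ [0,T] with t < 𝔱(z), the point z + t·e^{−m_0(z)} lies in ℂ ∖ ℝ and m_t(z + t·e^{−m_0(z)}) = m_0(z). -/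
open MeasureTheory

open Set


-- pointwise norm bounds
lemma pt_ne {x : ℝ} {w : ℂ} (hw : w.im ≠ 0) : (x:ℂ) - w ≠ 0 := by
  intro h
  have : ((x:ℂ) - w).im = 0 := by rw [h]; simp
  simp [Complex.sub_im] at this
  exact hw (by linarith)

lemma pt_norm_ge {x : ℝ} {w : ℂ} : |w.im| ≤ ‖(x:ℂ) - w‖ := by
  have := Complex.abs_im_le_norm ((x:ℂ) - w)
  simpa [Complex.sub_im] using this

lemma pt_inv_le {x : ℝ} {w : ℂ} {δ : ℝ} (hδ : 0 < δ) (h : δ ≤ |w.im|) :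
    ‖((x:ℂ) - w)⁻¹‖ ≤ δ⁻¹ := by
  rw [norm_inv]
  exact inv_anti₀ hδ (le_trans h pt_norm_ge)

lemma pt_cont {w : ℂ} (hw : w.im ≠ 0) : Continuous (fun x : ℝ => ((x:ℂ) - w)⁻¹) := by
  apply Continuous.inv₀
  · exact (Complex.continuous_ofReal.sub continuous_const)
  · exact fun x => pt_ne hw

lemma stj_int (ν : Measure ℝ) [IsProbabilityMeasure ν] {w : ℂ} (hw : w.im ≠ 0) :
    Integrable (fun x : ℝ => ((x:ℂ) - w)⁻¹) ν := by
  refine Integrable.mono' (integrable_const (|w.im|⁻¹)) ((pt_cont hw).aestronglyMeasurable) ?_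
  exact Filter.Eventually.of_forall fun x => pt_inv_le (abs_pos.2 hw) le_rfl

lemma stj_norm_le (ν : Measure ℝ) [IsProbabilityMeasure ν] {w : ℂ} {δ : ℝ}
    (hδ : 0 < δ) (h : δ ≤ |w.im|) :
    ‖∫ x : ℝ, ((x:ℂ) - w)⁻¹ ∂ν‖ ≤ δ⁻¹ := by
  have := norm_integral_le_of_norm_le_const (μ := ν)
    (f := fun x : ℝ => ((x:ℂ) - w)⁻¹) (C := δ⁻¹)
    (Filter.Eventually.of_forall fun x => pt_inv_le hδ h)
  simpa using this

lemma pt_sq_inv_le {x : ℝ} {w : ℂ} {δ : ℝ} (hδ : 0 < δ) (h : δ ≤ |w.im|) :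
    ‖(((x:ℂ) - w)^2)⁻¹‖ ≤ (δ^2)⁻¹ := by
  rw [norm_inv, norm_pow]
  apply inv_anti₀ (by positivity)
  exact pow_le_pow_left₀ hδ.le (le_trans h pt_norm_ge) 2

lemma pt_hasDerivAt {x : ℝ} {w : ℂ} (hw : w.im ≠ 0) :
    HasDerivAt (fun w : ℂ => ((x:ℂ) - w)⁻¹) ((((x:ℂ) - w)^2)⁻¹) w := by
  have h1 : HasDerivAt (fun w : ℂ => (x:ℂ) - w) (-1) w := by
    simpa using (hasDerivAt_id' w).const_sub (x:ℂ)
  have := h1.inv (pt_ne hw)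
  rw [show ((((x:ℂ) - w)^2)⁻¹) = -(-1) / ((x:ℂ) - w)^2 by ring]
  exact this

lemma stj_hasDerivAt (ν : Measure ℝ) [IsProbabilityMeasure ν] {w : ℂ} (hw : w.im ≠ 0) :
    HasDerivAt (fun w : ℂ => ∫ x : ℝ, ((x:ℂ) - w)⁻¹ ∂ν)
      (∫ x : ℝ, (((x:ℂ) - w)^2)⁻¹ ∂ν) w := by
  set ε := |w.im| / 2 with hε
  have hε0 : 0 < ε := by positivity
  have him : ∀ w' ∈ Metric.ball w ε, ε ≤ |w'.im| ∧ w'.im ≠ 0 := by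
    intro w' hw'
    have h1 : |w'.im - w.im| ≤ dist w' w := by
      have := Complex.abs_im_le_norm (w' - w)
      simpa [Complex.sub_im, Complex.dist_eq] using this
    have h2 : dist w' w < ε := hw'
    constructor
    · have : |w.im| - |w'.im| ≤ |w'.im - w.im| := by
        rw [abs_sub_comm]; exact abs_sub_abs_le_abs_sub _ _
      have : |w.im| - |w'.im| < ε := lt_of_le_of_lt this (lt_of_le_of_lt h1 h2)
      rw [hε] at this ⊢; linarith [abs_nonneg w.im]
    · intro h0
      rw [h0] at h1
      simp only [zero_sub, abs_neg] at h1
      have := lt_of_le_of_lt h1 h2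
      rw [hε] at this; linarith [abs_nonneg w.im]
  have := hasDerivAt_integral_of_dominated_loc_of_deriv_le (μ := ν)
    (F := fun (w' : ℂ) (x : ℝ) => ((x:ℂ) - w')⁻¹)
    (F' := fun (w' : ℂ) (x : ℝ) => (((x:ℂ) - w')^2)⁻¹)
    (x₀ := w) (bound := fun _ => (ε^2)⁻¹) (Metric.ball_mem_nhds w hε0)
    (Filter.Eventually.of_forall fun w' => ?_) (stj_int ν hw)
    ?_ ?_ (integrable_const _) ?_
  · exact this.2
  · exact ((Complex.measurable_ofReal.sub measurable_const).inv).aestronglyMeasurable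
  · exact (((Complex.measurable_ofReal.sub measurable_const).pow_const 2).inv).aestronglyMeasurable
  · exact Filter.Eventually.of_forall fun x w' hw' => pt_sq_inv_le hε0 (him w' hw').1
  · exact Filter.Eventually.of_forall fun x w' hw' => pt_hasDerivAt (him w' hw').2

lemma stj_deriv_norm_le (ν : Measure ℝ) [IsProbabilityMeasure ν] {w : ℂ} {δ : ℝ}
    (hδ : 0 < δ) (h : δ ≤ |w.im|) :
    ‖∫ x : ℝ, (((x:ℂ) - w)^2)⁻¹ ∂ν‖ ≤ (δ^2)⁻¹ := by
  have := norm_integral_le_of_norm_le_const (μ := ν)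
    (f := fun x : ℝ => (((x:ℂ) - w)^2)⁻¹) (C := (δ^2)⁻¹)
    (Filter.Eventually.of_forall fun x => pt_sq_inv_le hδ h)
  simpa using this

lemma stj_lip (ν : Measure ℝ) [IsProbabilityMeasure ν] {w w' : ℂ} {δ : ℝ}
    (hδ : 0 < δ) (h : δ ≤ |w.im|) (h' : δ ≤ |w'.im|) :
    ‖(∫ x : ℝ, ((x:ℂ) - w)⁻¹ ∂ν) - ∫ x : ℝ, ((x:ℂ) - w')⁻¹ ∂ν‖
      ≤ ‖w - w'‖ * (δ^2)⁻¹ := by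
  have hw : w.im ≠ 0 := fun h0 => by rw [h0] at h; simp at h; linarith
  have hw' : w'.im ≠ 0 := fun h0 => by rw [h0] at h'; simp at h'; linarith
  have hpt : ∀ x : ℝ, ‖((x:ℂ) - w)⁻¹ - ((x:ℂ) - w')⁻¹‖ ≤ ‖w - w'‖ * (δ^2)⁻¹ := by
    intro x
    have key : ((x:ℂ) - w)⁻¹ - ((x:ℂ) - w')⁻¹ = (w - w') * (((x:ℂ) - w)⁻¹ * ((x:ℂ) - w')⁻¹) := by
      rw [inv_sub_inv (pt_ne hw) (pt_ne hw'), div_eq_mul_inv, mul_inv]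
      ring_nf
    rw [key, norm_mul, norm_mul]
    have b1 := pt_inv_le (x := x) hδ h
    have b2 := pt_inv_le (x := x) hδ h'
    calc ‖w - w'‖ * (‖((x:ℂ) - w)⁻¹‖ * ‖((x:ℂ) - w')⁻¹‖)
        ≤ ‖w - w'‖ * (δ⁻¹ * δ⁻¹) := by
          apply mul_le_mul_of_nonneg_left _ (norm_nonneg _)
          exact mul_le_mul b1 b2 (norm_nonneg _) (by positivity)
      _ = ‖w - w'‖ * (δ^2)⁻¹ := by rw [sq, mul_inv]
  have e1 : ∫ x : ℝ, (((x:ℂ) - w)⁻¹ - ((x:ℂ) - w')⁻¹) ∂ν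
      = (∫ x : ℝ, ((x:ℂ) - w)⁻¹ ∂ν) - ∫ x : ℝ, ((x:ℂ) - w')⁻¹ ∂ν :=
    integral_sub (stj_int ν hw) (stj_int ν hw')
  rw [← e1]
  have := norm_integral_le_of_norm_le_const (μ := ν)
    (f := fun x : ℝ => ((x:ℂ) - w)⁻¹ - ((x:ℂ) - w')⁻¹) (C := ‖w - w'‖ * (δ^2)⁻¹)
    (Filter.Eventually.of_forall hpt)
  simpa using this

lemma stj_sq_int (ν : Measure ℝ) [IsProbabilityMeasure ν] {w : ℂ} {δ : ℝ}
    (hδ : 0 < δ) (him : δ ≤ |w.im|) :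
    Integrable (fun x : ℝ => (((x:ℂ) - w)^2)⁻¹) ν := by
  refine Integrable.mono' (integrable_const ((δ^2)⁻¹))
    ((((Complex.measurable_ofReal.sub measurable_const).pow_const 2).inv).aestronglyMeasurable) ?_
  exact Filter.Eventually.of_forall fun x => pt_sq_inv_le hδ him

lemma stj_quot (ν : Measure ℝ) [IsProbabilityMeasure ν] {w : ℂ} (h : ℝ) {δ : ℝ}
    (hδ : 0 < δ) (him : δ ≤ |w.im|) :
    ‖(∫ x : ℝ, ((x:ℂ) - (w + h))⁻¹ ∂ν) - (∫ x : ℝ, ((x:ℂ) - w)⁻¹ ∂ν)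
      - (h:ℂ) * ∫ x : ℝ, (((x:ℂ) - w)^2)⁻¹ ∂ν‖ ≤ h^2 * (δ^3)⁻¹ := by
  have hw : w.im ≠ 0 := fun h0 => by rw [h0] at him; simp at him; linarith
  have hwh : (w + (h:ℂ)).im ≠ 0 := by simpa using hw
  have himh : δ ≤ |(w + (h:ℂ)).im| := by simpa using him
  have hint2 := stj_sq_int ν hδ him
  have hpt : ∀ x : ℝ, ‖((x:ℂ) - (w+h))⁻¹ - ((x:ℂ) - w)⁻¹ - (h:ℂ) * (((x:ℂ) - w)^2)⁻¹‖
      ≤ h^2 * (δ^3)⁻¹ := by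
    intro x
    have ha := pt_ne (x := x) hw
    have hb := pt_ne (x := x) hwh
    have hb' : (x:ℂ) - w - h ≠ 0 := by
      intro hh; apply hb; rw [← hh]; ring
    have key : ((x:ℂ) - (w+h))⁻¹ - ((x:ℂ) - w)⁻¹ - (h:ℂ) * (((x:ℂ) - w)^2)⁻¹
        = (h:ℂ)^2 * ((((x:ℂ) - w)^2)⁻¹ * ((x:ℂ) - (w+h))⁻¹) := by
      have : (x:ℂ) - (w + h) = (x:ℂ) - w - h := by ring
      rw [this]
      field_simp
      ring
    rw [key, norm_mul, norm_mul]
    have b1 := pt_sq_inv_le (x := x) hδ him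
    have b2 := pt_inv_le (x := x) hδ himh
    have hn : ‖((h:ℂ))^2‖ = h^2 := by rw [norm_pow]; simp [sq_abs]
    rw [hn]
    calc h^2 * (‖(((x:ℂ) - w)^2)⁻¹‖ * ‖((x:ℂ) - (w+h))⁻¹‖)
        ≤ h^2 * ((δ^2)⁻¹ * δ⁻¹) := by
          apply mul_le_mul_of_nonneg_left _ (sq_nonneg h)
          exact mul_le_mul b1 b2 (norm_nonneg _) (by positivity)
      _ = h^2 * (δ^3)⁻¹ := by rw [← mul_inv, ← pow_succ]
  have e1 : ∫ x : ℝ, (((x:ℂ) - (w+h))⁻¹ - ((x:ℂ) - w)⁻¹ - (h:ℂ) * (((x:ℂ) - w)^2)⁻¹) ∂ν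
      = (∫ x : ℝ, ((x:ℂ) - (w+h))⁻¹ ∂ν) - (∫ x : ℝ, ((x:ℂ) - w)⁻¹ ∂ν)
        - (h:ℂ) * ∫ x : ℝ, (((x:ℂ) - w)^2)⁻¹ ∂ν := by
    have i1 : Integrable (fun x : ℝ => ((x:ℂ) - (w+h))⁻¹ - ((x:ℂ) - w)⁻¹) ν :=
      (stj_int ν hwh).sub (stj_int ν hw)
    have i2 : Integrable (fun x : ℝ => (h:ℂ) * (((x:ℂ) - w)^2)⁻¹) ν := hint2.const_mul _
    rw [integral_sub i1 i2, integral_sub (stj_int ν hwh) (stj_int ν hw), integral_const_mul]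
  rw [← e1]
  have := norm_integral_le_of_norm_le_const (μ := ν)
    (f := fun x : ℝ => ((x:ℂ) - (w+h))⁻¹ - ((x:ℂ) - w)⁻¹ - (h:ℂ) * (((x:ℂ) - w)^2)⁻¹)
    (C := h^2 * (δ^3)⁻¹) (Filter.Eventually.of_forall hpt)
  simpa using this

lemma M_joint_cont (T : ℝ) (μ : ℝ → Measure ℝ)
    (hprob : ∀ t ∈ Icc (0:ℝ) T, IsProbabilityMeasure (μ t))
    (M : ℝ → ℂ → ℂ) (hM : ∀ t : ℝ, ∀ z : ℂ, M t z = ∫ x : ℝ, ((x:ℂ) - z)⁻¹ ∂(μ t))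
    (hcont : ∀ z : ℂ, z.im ≠ 0 → ContinuousOn (fun t : ℝ => M t z) (Icc 0 T))
    {δ : ℝ} (hδ : 0 < δ) :
    ContinuousOn (fun p : ℝ × ℂ => M p.1 p.2) ((Icc 0 T) ×ˢ {w : ℂ | δ ≤ |w.im|}) := by
  rintro ⟨s₀, w₀⟩ ⟨hs₀, hw₀⟩
  simp only [Set.mem_setOf_eq] at hw₀
  have hw₀ne : w₀.im ≠ 0 := fun h0 => by rw [h0] at hw₀; simp at hw₀; linarith
  rw [Metric.continuousWithinAt_iff]
  intro ε hε
  have hc := (hcont w₀ hw₀ne s₀ hs₀)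
  rw [Metric.continuousWithinAt_iff] at hc
  obtain ⟨d₁, hd₁, hc⟩ := hc (ε/2) (by positivity)
  refine ⟨min d₁ (ε * δ^2 / 4), by positivity, ?_⟩
  rintro ⟨s, w⟩ ⟨hs, hw⟩ hdist
  simp only [Set.mem_setOf_eq] at hw
  rw [Prod.dist_eq, max_lt_iff] at hdist
  obtain ⟨hds, hdw⟩ := hdist
  simp only
  haveI := hprob s hs
  have lip : dist (M s w) (M s w₀) ≤ ‖w - w₀‖ * (δ^2)⁻¹ := by
    rw [dist_eq_norm, hM s w, hM s w₀]
    exact stj_lip (μ s) hδ hw hw₀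
  have h1 : ‖w - w₀‖ * (δ^2)⁻¹ < ε/2 := by
    have hwd : ‖w - w₀‖ < ε * δ^2 / 4 := by
      rw [← dist_eq_norm]
      exact lt_of_lt_of_le hdw (min_le_right _ _)
    calc ‖w - w₀‖ * (δ^2)⁻¹ < (ε * δ^2 / 4) * (δ^2)⁻¹ := by
          apply mul_lt_mul_of_pos_right hwd (by positivity)
      _ = ε/4 := by field_simp
      _ < ε/2 := by linarith
  have h2 : dist (M s w₀) (M s₀ w₀) < ε/2 :=
    hc hs (lt_of_lt_of_le hds (min_le_left _ _))
  calc dist (M s w) (M s₀ w₀) ≤ dist (M s w) (M s w₀) + dist (M s w₀) (M s₀ w₀) :=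
        dist_triangle _ _ _
    _ < ε/2 + ε/2 := add_lt_add_of_le_of_lt (le_trans lip h1.le) h2
    _ = ε := by ring

lemma D_joint_cont (T : ℝ) (μ : ℝ → Measure ℝ)
    (hprob : ∀ t ∈ Icc (0:ℝ) T, IsProbabilityMeasure (μ t))
    (M : ℝ → ℂ → ℂ) (hM : ∀ t : ℝ, ∀ z : ℂ, M t z = ∫ x : ℝ, ((x:ℂ) - z)⁻¹ ∂(μ t))
    (hcont : ∀ z : ℂ, z.im ≠ 0 → ContinuousOn (fun t : ℝ => M t z) (Icc 0 T))
    {δ : ℝ} (hδ : 0 < δ) :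
    ContinuousOn (fun p : ℝ × ℂ => ∫ x : ℝ, (((x:ℂ) - p.2)^2)⁻¹ ∂(μ p.1))
      ((Icc 0 T) ×ˢ {w : ℂ | δ ≤ |w.im|}) := by
  set U := (Icc 0 T) ×ˢ {w : ℂ | δ ≤ |w.im|} with hU
  set F : ℕ → ℝ × ℂ → ℂ := fun n p =>
    (((n:ℝ):ℂ)+1) * (M p.1 (p.2 + ((1/((n:ℝ)+1)) : ℝ)) - M p.1 p.2) with hF
  have hMc := M_joint_cont T μ hprob M hM hcont hδ
  have hFc : ∀ n, ContinuousOn (F n) U := by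
    intro n
    have htr : ContinuousOn (fun p : ℝ × ℂ => M p.1 (p.2 + ((1/((n:ℝ)+1)) : ℝ))) U := by
      have hmaps : Set.MapsTo (fun p : ℝ × ℂ => (p.1, p.2 + (((1/((n:ℝ)+1)) : ℝ) : ℂ))) U U := by
        rintro ⟨s, w⟩ ⟨hs, hw⟩
        simp only [Set.mem_setOf_eq, hU, Set.mem_prod] at hw ⊢
        exact ⟨hs, by simpa using hw⟩
      have hcf : ContinuousOn (fun p : ℝ × ℂ => (p.1, p.2 + (((1/((n:ℝ)+1)) : ℝ) : ℂ))) U := by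
        fun_prop
      have := ContinuousOn.comp hMc hcf hmaps
      simpa [Function.comp_def] using this
    exact continuousOn_const.mul (htr.sub (hMc))
  have hunif : TendstoUniformlyOn F
      (fun p : ℝ × ℂ => ∫ x : ℝ, (((x:ℂ) - p.2)^2)⁻¹ ∂(μ p.1)) Filter.atTop U := by
    rw [Metric.tendstoUniformlyOn_iff]
    intro ε hε
    obtain ⟨N, hN⟩ := exists_nat_gt ((δ^3)⁻¹ / ε)
    filter_upwards [Filter.eventually_ge_atTop N] with n hn
    rintro ⟨s, w⟩ ⟨hs, hw⟩
    simp only [Set.mem_setOf_eq] at hw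
    haveI := hprob s hs
    set h : ℝ := 1/((n:ℝ)+1) with hh
    have hn1 : (0:ℝ) < (n:ℝ)+1 := by positivity
    have hh0 : 0 < h := by rw [hh]; positivity
    have key := stj_quot (μ s) h hδ hw
    set A := ∫ x : ℝ, ((x:ℂ) - (w + (h:ℂ)))⁻¹ ∂(μ s) with hA
    set B := ∫ x : ℝ, ((x:ℂ) - w)⁻¹ ∂(μ s) with hB
    set D := ∫ x : ℝ, (((x:ℂ) - w)^2)⁻¹ ∂(μ s) with hD
    have hinv : ((h:ℝ):ℂ) * (((n:ℝ):ℂ)+1) = 1 := by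
      rw [hh]
      push_cast
      field_simp
    have heq2 : D - (((n:ℝ):ℂ)+1) * (A - B)
        = -((((n:ℝ):ℂ)+1) * (A - B - (h:ℂ) * D)) := by
      linear_combination (-D) * hinv
    have hFval : F n (s, w) = (((n:ℝ):ℂ)+1) * (A - B) := by
      rw [hF]
      simp only
      rw [hM s (w + ((h:ℝ):ℂ)), hM s w, hA, hB, hh]
    have hnn : ‖(((n:ℝ):ℂ)+1)‖ = (n:ℝ)+1 := by
      rw [show ((n:ℝ):ℂ)+1 = (((n:ℝ)+1 : ℝ) : ℂ) by push_cast; ring, Complex.norm_real,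
        Real.norm_eq_abs, abs_of_pos hn1]
    have hbound : dist D (F n (s, w)) ≤ h * (δ^3)⁻¹ := by
      rw [dist_eq_norm, hFval, heq2, norm_neg, norm_mul, hnn]
      calc ((n:ℝ)+1) * ‖A - B - (h:ℂ) * D‖ ≤ ((n:ℝ)+1) * (h^2 * (δ^3)⁻¹) :=
            mul_le_mul_of_nonneg_left key hn1.le
        _ = h * (δ^3)⁻¹ := by
            rw [hh]; field_simp
    refine lt_of_le_of_lt hbound ?_
    have h1 : h * (δ^3)⁻¹ = (δ^3)⁻¹ / ((n:ℝ)+1) := by rw [hh]; ring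
    rw [h1, div_lt_iff₀ hn1]
    have h2 : (δ^3)⁻¹ / ε < (n:ℝ)+1 := by
      calc (δ^3)⁻¹ / ε < (N:ℝ) := hN
        _ ≤ (n:ℝ) := by exact_mod_cast hn
        _ < (n:ℝ)+1 := by linarith
    calc (δ^3)⁻¹ = ((δ^3)⁻¹/ε) * ε := by field_simp
      _ < ((n:ℝ)+1) * ε := by exact mul_lt_mul_of_pos_right h2 hε
      _ = ε * ((n:ℝ)+1) := by ring
  exact hunif.continuousOn (Filter.Eventually.of_forall hFc).frequently

/-- Method of characteristics (Section 1.3): if the Stieltjes transforms `m t` of a family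
of probability measures with density at most `1` solve
`m_t(z) = m_0(z) − ∫_0^t e^{−m_s(z)} ∂_z m_s(z) ds`, then for `z ∈ ℂ ∖ ℝ` and
`t ∈ [0,T]` with `t < 𝔱(z)` (where `𝔱(z) = −Im z / Im e^{−m_0(z)}` if the two imaginary
parts have opposite signs and `𝔱(z) = +∞` otherwise), the point `z + t·e^{−m_0(z)}` lies in
`ℂ ∖ ℝ` and `m_t(z + t·e^{−m_0(z)}) = m_0(z)`. -/
theorem stmt11 (T : ℝ) (hT : 0 < T)
    (μ : ℝ → Measure ℝ)
    (hprob : ∀ t ∈ Set.Icc (0 : ℝ) T, IsProbabilityMeasure (μ t))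
    (hac : ∀ t ∈ Set.Icc (0 : ℝ) T, μ t ≪ volume)
    (hd : ∀ t ∈ Set.Icc (0 : ℝ) T, ∀ᵐ x ∂volume, (μ t).rnDeriv volume x ≤ 1)
    (M : ℝ → ℂ → ℂ)
    (hM : ∀ t : ℝ, ∀ z : ℂ, M t z = ∫ x : ℝ, ((x : ℂ) - z)⁻¹ ∂(μ t))
    (hcont : ∀ z : ℂ, z.im ≠ 0 → ContinuousOn (fun t : ℝ => M t z) (Set.Icc 0 T))
    (heq : ∀ t ∈ Set.Icc (0 : ℝ) T, ∀ z : ℂ, z.im ≠ 0 →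
      M t z = M 0 z - ∫ s in (0 : ℝ)..t, Complex.exp (-(M s z)) * deriv (M s) z)
    (z : ℂ) (hz : z.im ≠ 0) (t : ℝ) (ht : t ∈ Set.Icc (0 : ℝ) T)
    (hfrak : z.im * (Complex.exp (-(M 0 z))).im < 0 →
      t < -z.im / (Complex.exp (-(M 0 z))).im) :
    (z + (t : ℂ) * Complex.exp (-(M 0 z))).im ≠ 0 ∧
      M t (z + (t : ℂ) * Complex.exp (-(M 0 z))) = M 0 z := by
  obtain ⟨ht0, htT⟩ := ht
  set E := Complex.exp (-(M 0 z)) with hE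
  have hptim : ∀ s : ℝ, (z + (s:ℂ) * E).im = z.im + s * E.im := by
    intro s
    simp [Complex.add_im, Complex.mul_im, Complex.ofReal_re, Complex.ofReal_im]
  -- Step 1: sign of the imaginary part along the characteristic
  have hsign : 0 < z.im * (z.im + t * E.im) := by
    rcases lt_or_ge (z.im * E.im) 0 with hneg | hpos
    · have hEim : E.im ≠ 0 := by
        intro h0; rw [h0] at hneg; simp at hneg
      have hfr := hfrak hneg
      have h1 : (-z.im / E.im) * (z.im * E.im) < t * (z.im * E.im) :=
        mul_lt_mul_of_neg_right hfr hneg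
      have h2 : (-z.im / E.im) * (z.im * E.im) = -(z.im * z.im) := by
        field_simp
      nlinarith [h1, h2]
    · have hz2 : 0 < z.im * z.im := mul_self_pos.2 hz
      nlinarith [mul_nonneg ht0 hpos]
  have him_t : (z + (t:ℂ) * E).im ≠ 0 := by
    rw [hptim t]
    intro h0
    rw [h0] at hsign
    simp at hsign
  refine ⟨him_t, ?_⟩
  -- the lower bound δ on |Im| along the characteristic
  set δ : ℝ := min |z.im| |z.im + t * E.im| with hδdef
  have hδ : 0 < δ := by
    apply lt_min (abs_pos.2 hz)
    apply abs_pos.2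
    intro h0
    rw [h0] at hsign
    simp at hsign
  have hδz : δ ≤ |z.im| := min_le_left _ _
  have hline : ∀ s ∈ Icc (0:ℝ) t, δ ≤ |z.im + s * E.im| := by
    intro s hs
    obtain ⟨hs0, hst⟩ := hs
    have hδ2 : δ ≤ |z.im + t * E.im| := min_le_right _ _
    rcases lt_or_gt_of_ne hz with hzneg | hzpos
    · have hzt : z.im + t * E.im < 0 := by nlinarith [hsign]
      rcases le_or_gt E.im 0 with hE0 | hE0
      · have hval : z.im + s * E.im ≤ z.im := by nlinarith
        rw [abs_of_neg (by linarith : z.im + s * E.im < 0)]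
        rw [abs_of_neg hzneg] at hδz
        linarith
      · have hval : z.im + s * E.im ≤ z.im + t * E.im := by nlinarith
        rw [abs_of_neg (by linarith : z.im + s * E.im < 0)]
        rw [abs_of_neg hzt] at hδ2
        linarith
    · have hzt : 0 < z.im + t * E.im := by nlinarith [hsign]
      rcases le_or_gt E.im 0 with hE0 | hE0
      · have hval : z.im + t * E.im ≤ z.im + s * E.im := by nlinarith
        rw [abs_of_pos (by linarith : 0 < z.im + s * E.im)]
        rw [abs_of_pos hzt] at hδ2
        linarith
      · have hval : z.im ≤ z.im + s * E.im := by nlinarith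
        rw [abs_of_pos (by linarith : 0 < z.im + s * E.im)]
        rw [abs_of_pos hzpos] at hδz
        linarith
  have hlineC : ∀ s ∈ Icc (0:ℝ) t, δ ≤ |(z + (s:ℂ) * E).im| := by
    intro s hs; rw [hptim s]; exact hline s hs
  -- notation
  set D : ℝ → ℂ → ℂ := fun s w => ∫ x : ℝ, (((x:ℂ) - w)^2)⁻¹ ∂(μ s) with hD
  set g : ℝ × ℂ → ℂ := fun p => Complex.exp (-(M p.1 p.2)) * D p.1 p.2 with hg
  set U : Set (ℝ × ℂ) := (Icc 0 T) ×ˢ {w : ℂ | δ ≤ |w.im|} with hUdef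
  have habs_ne : ∀ w : ℂ, δ ≤ |w.im| → w.im ≠ 0 := by
    intro w hw h0; rw [h0] at hw; simp at hw; linarith
  have hMc : ContinuousOn (fun p : ℝ × ℂ => M p.1 p.2) U :=
    M_joint_cont T μ hprob M hM hcont hδ
  have hDc : ContinuousOn (fun p : ℝ × ℂ => D p.1 p.2) U :=
    D_joint_cont T μ hprob M hM hcont hδ
  have hgc : ContinuousOn g U := by
    rw [hg]
    exact ((Complex.continuous_exp.comp_continuousOn hMc.neg)).mul hDc
  -- derivative of M s in the space variable
  have hMderiv : ∀ s ∈ Icc (0:ℝ) T, ∀ w : ℂ, w.im ≠ 0 → HasDerivAt (M s) (D s w) w := by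
    intro s hs w hw
    haveI := hprob s hs
    have h2 := stj_hasDerivAt (μ s) hw
    have h3 : M s = fun w : ℂ => ∫ x : ℝ, ((x:ℂ) - w)⁻¹ ∂(μ s) := funext fun w => hM s w
    rw [hD, h3]
    exact h2
  have hderiv_eq : ∀ s ∈ Icc (0:ℝ) T, ∀ w : ℂ, w.im ≠ 0 → deriv (M s) w = D s w :=
    fun s hs w hw => (hMderiv s hs w hw).deriv
  -- continuity in time of the integrand, for a fixed good point
  have hgw : ∀ w : ℂ, δ ≤ |w.im| → ContinuousOn (fun σ : ℝ => g (σ, w)) (Icc 0 T) := by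
    intro w hw
    have hmaps : Set.MapsTo (fun σ : ℝ => (σ, w)) (Icc 0 T) U := by
      intro σ hσ; exact ⟨hσ, hw⟩
    have := ContinuousOn.comp hgc (by fun_prop : ContinuousOn (fun σ : ℝ => (σ, w)) (Icc 0 T)) hmaps
    simpa [Function.comp_def] using this
  have hgint : ∀ w : ℂ, δ ≤ |w.im| → ∀ u ∈ Icc (0:ℝ) T, ∀ v ∈ Icc (0:ℝ) T,
      IntervalIntegrable (fun σ : ℝ => g (σ, w)) volume v u := by
    intro w hw u hu v hv
    apply ContinuousOn.intervalIntegrable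
    apply (hgw w hw).mono
    rw [← uIcc_of_le hT.le]
    exact uIcc_subset_uIcc (by rwa [uIcc_of_le hT.le]) (by rwa [uIcc_of_le hT.le])
  -- integral form of the equation between two times
  have hdiff : ∀ w : ℂ, δ ≤ |w.im| → ∀ u ∈ Icc (0:ℝ) T, ∀ v ∈ Icc (0:ℝ) T,
      M u w - M v w = -∫ σ in v..u, g (σ, w) := by
    intro w hw u hu v hv
    have hwne := habs_ne w hw
    have e1 : ∀ r ∈ Icc (0:ℝ) T,
        (∫ σ in (0:ℝ)..r, Complex.exp (-(M σ w)) * deriv (M σ) w) = ∫ σ in (0:ℝ)..r, g (σ, w) := by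
      intro r hr
      apply intervalIntegral.integral_congr
      intro σ hσ
      rw [uIcc_of_le hr.1] at hσ
      have hσT : σ ∈ Icc (0:ℝ) T := ⟨hσ.1, le_trans hσ.2 hr.2⟩
      rw [hg]
      simp only
      rw [hderiv_eq σ hσT w hwne]
    have h2 := heq u hu w hwne
    have h3 := heq v hv w hwne
    rw [e1 u hu] at h2
    rw [e1 v hv] at h3
    have h4 := intervalIntegral.integral_interval_sub_left
      (hgint w hw u hu 0 (left_mem_Icc.2 hT.le)) (hgint w hw v hv 0 (left_mem_Icc.2 hT.le))
    rw [h2, h3, ← h4]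
    ring
  -- the solution along the characteristic line
  set φ : ℝ → ℂ := fun s => M s (z + (s:ℂ) * E) with hφ
  have hmapsφ : Set.MapsTo (fun s : ℝ => (s, z + (s:ℂ) * E)) (Icc 0 t) U := by
    intro s hs
    exact ⟨⟨hs.1, le_trans hs.2 htT⟩, hlineC s hs⟩
  have hφcont : ContinuousOn φ (Icc 0 t) := by
    have := ContinuousOn.comp hMc
      (by fun_prop : ContinuousOn (fun s : ℝ => (s, z + (s:ℂ) * E)) (Icc 0 t)) hmapsφ
    simpa [Function.comp_def, hφ] using this
  have hlineDeriv : ∀ s : ℝ, HasDerivAt (fun u : ℝ => z + (u:ℂ) * E) E s := by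
    intro s
    have h1 : HasDerivAt (fun u : ℝ => ((u:ℝ):ℂ)) 1 s := by
      have := (hasDerivAt_id' s).ofReal_comp
      simpa using this
    have h2 := (h1.mul_const E).const_add z
    simpa using h2
  have hφderiv : ∀ s ∈ Ico (0:ℝ) t, HasDerivWithinAt φ
      ((E - Complex.exp (-(φ s))) * D s (z + (s:ℂ) * E)) (Ici s) s := by
    intro s hs
    obtain ⟨hs0, hst⟩ := hs
    set zs := z + (s:ℂ) * E with hzs
    have hsIcc : s ∈ Icc (0:ℝ) t := ⟨hs0, hst.le⟩
    have hsT : s ∈ Icc (0:ℝ) T := ⟨hs0, le_trans hst.le htT⟩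
    have hzsim : δ ≤ |zs.im| := hlineC s hsIcc
    have hzsne := habs_ne zs hzsim
    -- part B : space derivative along the line, at frozen time s
    have hB : HasDerivAt (fun u : ℝ => M s (z + (u:ℂ) * E)) (E * D s zs) s := by
      have := HasDerivAt.scomp (𝕜 := ℝ) (𝕜' := ℂ) (x := s)
        (hg := hMderiv s hsT zs hzsne) (hh := hlineDeriv s)
      simpa [Function.comp_def, smul_eq_mul] using this
    -- part A : time increment at moving point
    have hA : HasDerivWithinAt (fun u : ℝ => M u (z + (u:ℂ) * E) - M s (z + (u:ℂ) * E))
        (-(g (s, zs))) (Ici s) s := by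
      rw [hasDerivWithinAt_iff_isLittleO, Asymptotics.isLittleO_iff]
      intro c hc
      have hcw := hgc (s, zs) (Set.mk_mem_prod hsT (show zs ∈ {w : ℂ | δ ≤ |w.im|} from hzsim))
      rw [Metric.continuousWithinAt_iff] at hcw
      obtain ⟨η, hη, hcw⟩ := hcw c hc
      set β := min (t - s) (η / (1 + ‖E‖)) with hβ
      have hβ0 : 0 < β := lt_min (by linarith) (by positivity)
      have hmem : Ico s (s + β) ∈ nhdsWithin s (Ici s) :=
        Ico_mem_nhdsGE_of_mem ⟨le_refl s, by linarith⟩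
      filter_upwards [hmem] with u hu
      obtain ⟨hus, hub⟩ := hu
      have hut : u ≤ t := by
        have h1 : β ≤ t - s := min_le_left _ _
        linarith
      have huIcc : u ∈ Icc (0:ℝ) t := ⟨le_trans hs0 hus, hut⟩
      have huT : u ∈ Icc (0:ℝ) T := ⟨huIcc.1, le_trans hut htT⟩
      set wu := z + (u:ℂ) * E with hwu
      have hwuim : δ ≤ |wu.im| := hlineC u huIcc
      have hval : M u wu - M s wu = -∫ σ in s..u, g (σ, wu) := hdiff wu hwuim u huT s hsT
      have hβη : β ≤ η / (1 + ‖E‖) := min_le_right _ _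
      have hE1 : (1:ℝ) ≤ 1 + ‖E‖ := by linarith [norm_nonneg E]
      have hβη' : β * (1 + ‖E‖) ≤ η := by
        rw [← le_div_iff₀ (by linarith : (0:ℝ) < 1 + ‖E‖)] at *
        exact hβη
      -- pointwise bound on the integrand
      have hclose : ∀ σ ∈ Set.uIcc s u, ‖g (σ, wu) - g (s, zs)‖ ≤ c := by
        intro σ hσ
        rw [uIcc_of_le hus] at hσ
        obtain ⟨hσs, hσu⟩ := hσ
        have hσT : σ ∈ Icc (0:ℝ) T := ⟨le_trans hs0 hσs, le_trans (le_trans hσu hut) htT⟩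
        have hdist : dist (σ, wu) (s, zs) < η := by
          rw [Prod.dist_eq, max_lt_iff]
          constructor
          · rw [Real.dist_eq, abs_of_nonneg (by linarith : (0:ℝ) ≤ σ - s)]
            calc σ - s ≤ u - s := by linarith
              _ < β := by linarith
              _ ≤ β * (1 + ‖E‖) := le_mul_of_one_le_right hβ0.le hE1
              _ ≤ η := hβη'
          · rw [Complex.dist_eq]
            have : wu - zs = ((u:ℂ) - (s:ℂ)) * E := by rw [hwu, hzs]; ring
            rw [this]
            rw [norm_mul]
            have h1 : ‖(u:ℂ) - (s:ℂ)‖ = u - s := by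
              rw [← Complex.ofReal_sub, Complex.norm_real, Real.norm_eq_abs,
                abs_of_nonneg (by linarith : (0:ℝ) ≤ u - s)]
            rw [h1]
            calc (u - s) * ‖E‖ ≤ (u - s) * (1 + ‖E‖) := by
                  apply mul_le_mul_of_nonneg_left _ (by linarith : (0:ℝ) ≤ u - s)
                  exact le_trans (le_add_of_nonneg_left zero_le_one) (le_refl _)
              _ < β * (1 + ‖E‖) := by
                  apply mul_lt_mul_of_pos_right (by linarith) (by linarith)
              _ ≤ η := hβη'
        have := hcw (Set.mk_mem_prod hσT (show wu ∈ {w : ℂ | δ ≤ |w.im|} from hwuim)) hdist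
        rw [dist_eq_norm] at this
        exact this.le
      -- integrability
      have hint1 : IntervalIntegrable (fun σ : ℝ => g (σ, wu)) volume s u :=
        hgint wu hwuim u huT s hsT
      have hintc : IntervalIntegrable (fun _ : ℝ => g (s, zs)) volume s u :=
        intervalIntegrable_const
      -- the estimate
      have hkey : (fun u : ℝ => M u (z + (u:ℂ) * E) - M s (z + (u:ℂ) * E)) u
          - (M s zs - M s zs) - (u - s) • (-(g (s, zs)))
          = -(∫ σ in s..u, (g (σ, wu) - g (s, zs))) := by
        rw [intervalIntegral.integral_sub hint1 hintc, intervalIntegral.integral_const]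
        simp only
        rw [← hwu, hval]
        simp [smul_eq_mul]
        ring
      rw [hkey, norm_neg]
      have := intervalIntegral.norm_integral_le_of_norm_le_const
        (C := c) (f := fun σ : ℝ => g (σ, wu) - g (s, zs)) (a := s) (b := u) ?_
      · calc ‖∫ σ in s..u, (g (σ, wu) - g (s, zs))‖ ≤ c * |u - s| := this
          _ = c * ‖u - s‖ := by rw [Real.norm_eq_abs]
      · intro σ hσ
        rw [Set.uIoc_of_le hus] at hσ
        apply hclose
        rw [uIcc_of_le hus]
        exact Set.Ioc_subset_Icc_self hσ
    -- combine
    have hsum := hA.add (hB.hasDerivWithinAt (s := Ici s))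
    have hfun : (fun u : ℝ => (M u (z + (u:ℂ) * E) - M s (z + (u:ℂ) * E)) + M s (z + (u:ℂ) * E))
        = φ := by
      funext u; rw [hφ]; ring
    change HasDerivWithinAt (fun u : ℝ => (M u (z + (u:ℂ) * E) - M s (z + (u:ℂ) * E)) + M s (z + (u:ℂ) * E)) _ (Ici s) s at hsum
    rw [hfun] at hsum
    have hval2 : -(g (s, zs)) + E * D s zs = (E - Complex.exp (-(φ s))) * D s (z + (s:ℂ) * E) := by
      rw [hg, hφ]
      simp only
      rw [← hzs]
      ring
    rwa [hval2] at hsum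
  -- set up the ODE uniqueness argument
  set proj : ℝ → ℝ := fun s => max 0 (min s t) with hproj
  have hprojIcc : ∀ s : ℝ, proj s ∈ Icc (0:ℝ) t := by
    intro s
    exact ⟨le_max_left _ _, max_le ht0 (min_le_right _ _)⟩
  have hprojEq : ∀ s ∈ Icc (0:ℝ) t, proj s = s := by
    intro s hs
    rw [hproj]
    simp only
    rw [min_eq_left hs.2, max_eq_right hs.1]
  set v : ℝ → ℂ → ℂ := fun s y =>
    (E - Complex.exp (-y)) * D (proj s) (z + ((proj s : ℝ):ℂ) * E) with hv
  have hDb : ∀ s : ℝ, ‖D (proj s) (z + ((proj s : ℝ):ℂ) * E)‖ ≤ (δ^2)⁻¹ := by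
    intro s
    haveI := hprob (proj s) ⟨(hprojIcc s).1, le_trans (hprojIcc s).2 htT⟩
    rw [hD]
    exact stj_deriv_norm_le (μ (proj s)) hδ (hlineC (proj s) (hprojIcc s))
  set K : NNReal := ((δ^2)⁻¹ * Real.exp (δ⁻¹)).toNNReal with hK
  have hlip : ∀ s : ℝ, LipschitzOnWith K (v s) (Metric.closedBall (0:ℂ) δ⁻¹) := by
    intro s
    set C := D (proj s) (z + ((proj s : ℝ):ℂ) * E) with hC
    apply Convex.lipschitzOnWith_of_nnnorm_hasDerivWithin_le
      (f' := fun y => Complex.exp (-y) * C) (convex_closedBall _ _)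
    · intro y hy
      have h1 : HasDerivAt (fun y : ℂ => -y) (-1) y := (hasDerivAt_id y).neg
      have h2 := h1.cexp
      have h3 := (h2.const_sub E).mul_const C
      have h4 : -(Complex.exp (-y) * -1) * C = Complex.exp (-y) * C := by ring
      rw [h4] at h3
      exact h3.hasDerivWithinAt
    · intro y hy
      rw [Metric.mem_closedBall, dist_zero_right] at hy
      rw [← NNReal.coe_le_coe, coe_nnnorm, hK, Real.coe_toNNReal _ (by positivity)]
      rw [norm_mul]
      have he : ‖Complex.exp (-y)‖ ≤ Real.exp (δ⁻¹) := by
        rw [Complex.norm_exp]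
        apply Real.exp_le_exp.2
        calc (-y).re ≤ |(-y).re| := le_abs_self _
          _ ≤ ‖-y‖ := Complex.abs_re_le_norm _
          _ = ‖y‖ := by rw [norm_neg]
          _ ≤ δ⁻¹ := hy
      calc ‖Complex.exp (-y)‖ * ‖C‖ ≤ Real.exp (δ⁻¹) * (δ^2)⁻¹ :=
            mul_le_mul he (hDb s) (norm_nonneg _) (Real.exp_nonneg _)
        _ = (δ^2)⁻¹ * Real.exp (δ⁻¹) := by ring
  -- the two solutions
  have hφ' : ∀ s ∈ Ico (0:ℝ) t, HasDerivWithinAt φ (v s (φ s)) (Ici s) s := by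
    intro s hs
    have := hφderiv s hs
    rw [hv]
    simp only
    rw [hprojEq s ⟨hs.1, hs.2.le⟩]
    exact this
  have hφmem : ∀ s ∈ Ico (0:ℝ) t, φ s ∈ Metric.closedBall (0:ℂ) δ⁻¹ := by
    intro s hs
    have hsIcc : s ∈ Icc (0:ℝ) t := ⟨hs.1, hs.2.le⟩
    haveI := hprob s ⟨hs.1, le_trans hs.2.le htT⟩
    rw [Metric.mem_closedBall, dist_zero_right, hφ]
    simp only
    rw [hM s _]
    exact stj_norm_le (μ s) hδ (hlineC s hsIcc)
  set ψ : ℝ → ℂ := fun _ => M 0 z with hψ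
  have hψ' : ∀ s ∈ Ico (0:ℝ) t, HasDerivWithinAt ψ (v s (ψ s)) (Ici s) s := by
    intro s hs
    have h0 : v s (ψ s) = 0 := by
      rw [hv, hψ]
      simp only
      rw [← hE]
      ring
    rw [h0]
    exact (hasDerivAt_const s _).hasDerivWithinAt
  have hψmem : ∀ s ∈ Ico (0:ℝ) t, ψ s ∈ Metric.closedBall (0:ℂ) δ⁻¹ := by
    intro s hs
    haveI := hprob 0 (left_mem_Icc.2 hT.le)
    rw [Metric.mem_closedBall, dist_zero_right, hψ]
    simp only
    rw [hM 0 z]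
    exact stj_norm_le (μ 0) hδ hδz
  have hinit : φ 0 = ψ 0 := by
    rw [hφ, hψ]
    simp
  have huniq := ODE_solution_unique_of_mem_Icc_right (fun s _ => hlip s) hφcont hφ' hφmem
    continuousOn_const hψ' hψmem hinit
  exact huniq (right_mem_Icc.2 ht0)
end

section
/- Let μ_0 be a probability measure on ℝ absolutely continuous with density at most 1, with Stieltjes transform m_0, let Q(μ_0) be the probability measure with Stieltjes transform m̃_0(z) = 1 − exp(−m_0(z)), and fix t > 0 with Ω_t = {z ∈ ℂ ∖ ℝ : ∫_ℝ dQ(μ_0)(x)/|x − z|² < 1/t}. Suppose μ_t is a probability measure, absolutely continuous with density at most 1, whose Stieltjes transform m_t satisfies m_t(z + t·e^{−m_0(z)}) = m_0(z) for all z ∈ Ω_t, and suppose μ̃_t is a probability measure whose Stieltjes transform m̃_t satisfies m̃_t(z + t − t·m̃_0(z)) = m̃_0(z) for all z ∈ Ω_t. Then for every z ∈ Ω_t, z + t − t·m̃_0(z) = z + t·e^{−m_0(z)}, and m̃_t(w) = 1 − exp(−m_t(w)) for every w ∈ ℂ ∖ ℝ; that is, μ̃_t = Q(μ_t). -/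
open MeasureTheory

/-- `|z.im|` is a lower bound for `|x - z|` when `x` is real. -/
lemma aux_im_le_norm (x : ℝ) (w : ℂ) : |w.im| ≤ ‖(x : ℂ) - w‖ := by
  have h1 : ((x : ℂ) - w).im = -w.im := by simp
  calc |w.im| = |((x : ℂ) - w).im| := by rw [h1, abs_neg]
    _ ≤ ‖(x : ℂ) - w‖ := Complex.abs_im_le_norm _
    _ = ‖(x : ℂ) - w‖ := rfl

lemma aux_ne (x : ℝ) (w : ℂ) (hw : w.im ≠ 0) : (x : ℂ) - w ≠ 0 := by
  intro h
  have := aux_im_le_norm x w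
  rw [h, norm_zero] at this
  exact hw (abs_nonpos_iff.mp this)

/-- The Stieltjes transform of a finite measure is complex differentiable off the real axis. -/
lemma aux_diff (μ : Measure ℝ) [IsFiniteMeasure μ] (z : ℂ) (hz : z.im ≠ 0) :
    DifferentiableAt ℂ (fun w : ℂ => ∫ x : ℝ, ((x : ℂ) - w)⁻¹ ∂μ) z := by
  have habs : 0 < |z.im| := abs_pos.mpr hz
  set δ : ℝ := |z.im| / 2 with hδ
  have hδpos : 0 < δ := by positivity
  have hball : ∀ w ∈ Metric.ball z δ, δ ≤ |w.im| := by
    intro w hw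
    have h1 : |w.im - z.im| ≤ ‖w - z‖ := by
      have h := Complex.abs_im_le_norm (w - z)
      simpa using h
    have h2 : ‖w - z‖ < δ := by simpa [Metric.mem_ball, dist_eq_norm] using hw
    have h3 : |z.im| - |w.im| ≤ |w.im - z.im| := by
      have := abs_sub_abs_le_abs_sub z.im w.im
      rwa [abs_sub_comm] at this
    linarith
  have hballne : ∀ w ∈ Metric.ball z δ, w.im ≠ 0 := by
    intro w hw h
    have := hball w hw
    rw [h, abs_zero] at this
    linarith
  have hcont : ∀ w : ℂ, Continuous (fun x : ℝ => (x : ℂ) - w) :=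
    fun w => Complex.continuous_ofReal.sub continuous_const
  have key := hasDerivAt_integral_of_dominated_loc_of_deriv_le (μ := μ)
    (F := fun (w : ℂ) (x : ℝ) => ((x : ℂ) - w)⁻¹)
    (F' := fun (w : ℂ) (x : ℝ) => (((x : ℂ) - w) ^ 2)⁻¹)
    (x₀ := z) (bound := fun _ => (δ ^ 2)⁻¹) (s := Metric.ball z δ) (Metric.ball_mem_nhds z hδpos) ?_ ?_ ?_ ?_ ?_ ?_
  · exact key.2.differentiableAt
  · refine Filter.eventually_of_mem (Metric.ball_mem_nhds z hδpos) (fun w hw => ?_)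
    exact (Continuous.inv₀ (hcont w) (fun x => aux_ne x w (hballne w hw))).aestronglyMeasurable
  · refine (integrable_const (δ⁻¹)).mono'
      ((Continuous.inv₀ (hcont z) (fun x => aux_ne x z hz)).aestronglyMeasurable) ?_
    filter_upwards with x
    rw [norm_inv]
    refine inv_anti₀ hδpos (le_trans ?_ (aux_im_le_norm x z))
    rw [hδ]; linarith
  · exact (Continuous.inv₀ ((hcont z).pow 2)
      (fun x => pow_ne_zero 2 (aux_ne x z hz))).aestronglyMeasurable
  · filter_upwards with x
    intro w hw
    rw [norm_inv, norm_pow]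
    refine inv_anti₀ (by positivity) ?_
    exact pow_le_pow_left₀ hδpos.le (le_trans (hball w hw) (aux_im_le_norm x w)) 2
  · exact integrable_const _
  · filter_upwards with x
    intro w hw
    have hne : (x : ℂ) - w ≠ 0 := aux_ne x w (hballne w hw)
    have h1 : HasDerivAt (fun y : ℂ => (x : ℂ) - y) (-1) w :=
      (hasDerivAt_id w).const_sub (x : ℂ)
    have h2 := h1.inv hne
    rw [neg_neg, one_div] at h2
    exact h2

/-- Norm bound for the Stieltjes transform of a probability measure. -/
lemma aux_norm (μ : Measure ℝ) [IsProbabilityMeasure μ] (z : ℂ) (hz : z.im ≠ 0) :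
    ‖∫ x : ℝ, ((x : ℂ) - z)⁻¹ ∂μ‖ ≤ |z.im|⁻¹ := by
  have habs : 0 < |z.im| := abs_pos.mpr hz
  have h := norm_integral_le_of_norm_le (μ := μ)
    (f := fun x : ℝ => ((x : ℂ) - z)⁻¹) (integrable_const (|z.im|⁻¹)) ?_
  · simpa using h
  · filter_upwards with x
    rw [norm_inv]
    exact inv_anti₀ habs (aux_im_le_norm x z)

/-- Identity-theorem step: if `mttf ∘ φ = (1 - exp (- mtf)) ∘ φ` on `Ω` for the characteristic
map `φ z = z + t exp (- m0 z)`, and `Ω` contains all points far from the real axis, then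
`mttf = 1 - exp (- mtf)` on the half plane `{0 < σ im}`. -/
lemma key_half (t : ℝ) (ht : 0 < t) (m0 mtf mttf : ℂ → ℂ) (Ω : Set ℂ)
    (hm0d : ∀ z : ℂ, z.im ≠ 0 → DifferentiableAt ℂ m0 z)
    (hmtd : ∀ z : ℂ, z.im ≠ 0 → DifferentiableAt ℂ mtf z)
    (hmttd : ∀ z : ℂ, z.im ≠ 0 → DifferentiableAt ℂ mttf z)
    (hm0b : ∀ z : ℂ, z.im ≠ 0 → ‖m0 z‖ ≤ |z.im|⁻¹)
    (hΩs : ∀ z : ℂ, 2 * t + Real.sqrt t + 1 ≤ |z.im| → z ∈ Ω)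
    (hfg : ∀ z ∈ Ω, mttf (z + (t : ℂ) * Complex.exp (-(m0 z))) =
      1 - Complex.exp (-(mtf (z + (t : ℂ) * Complex.exp (-(m0 z))))))
    (σ : ℝ) (hσ : σ = 1 ∨ σ = -1) (w : ℂ) (hw : 0 < σ * w.im) :
    mttf w = 1 - Complex.exp (-(mtf w)) := by
  have hsq := Real.sqrt_nonneg t
  set R : ℝ := 2 * t + Real.sqrt t + 1 with hR
  have hR1 : 1 ≤ R := by rw [hR]; linarith
  have hR2t : 2 * t ≤ R := by rw [hR]; linarith
  have hσ2 : σ * σ = 1 := by rcases hσ with rfl | rfl <;> norm_num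
  have hσabs : |σ| = 1 := by rcases hσ with rfl | rfl <;> norm_num
  set U : Set ℂ := {z : ℂ | R < σ * z.im} with hU
  set H : Set ℂ := {z : ℂ | 0 < σ * z.im} with hH
  have hUim : ∀ z ∈ U, R < |z.im| := by
    intro z hz
    have h1 : σ * z.im ≤ |z.im| := by
      calc σ * z.im ≤ |σ * z.im| := le_abs_self _
        _ = |z.im| := by rw [abs_mul, hσabs, one_mul]
    exact lt_of_lt_of_le hz h1
  have hUne : ∀ z ∈ U, z.im ≠ 0 := by
    intro z hz h
    have h1 := hUim z hz
    rw [h, abs_zero] at h1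
    linarith
  have hUΩ : ∀ z ∈ U, z ∈ Ω := fun z hz => hΩs z (hUim z hz).le
  have hHne : ∀ z ∈ H, z.im ≠ 0 := by
    intro z hz h
    rw [Set.mem_setOf_eq, h, mul_zero] at hz
    exact lt_irrefl 0 hz
  set φ : ℂ → ℂ := fun z => z + (t : ℂ) * Complex.exp (-(m0 z)) with hφ
  -- deviation bound : ‖φ z - z - t‖ ≤ 1 when |z.im| ≥ R
  have hdev : ∀ z : ℂ, R ≤ |z.im| → ‖φ z - z - (t : ℂ)‖ ≤ 1 := by
    intro z hz
    have hzpos : 0 < |z.im| := by linarith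
    have hzne : z.im ≠ 0 := by
      intro h; rw [h, abs_zero] at hzpos; exact lt_irrefl 0 hzpos
    have hb : ‖m0 z‖ ≤ |z.im|⁻¹ := hm0b z hzne
    have hb1 : ‖m0 z‖ ≤ 1 := by
      refine hb.trans ?_
      rw [inv_le_one₀ hzpos] <;> linarith
    have h1 : φ z - z - (t : ℂ) = (t : ℂ) * (Complex.exp (-(m0 z)) - 1) := by
      rw [hφ]; ring
    rw [h1, norm_mul]
    have h2 : ‖Complex.exp (-(m0 z)) - 1‖ ≤ 2 * ‖-(m0 z)‖ := by
      refine Complex.norm_exp_sub_one_le ?_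
      rw [norm_neg]
      exact hb1
    have h3 : ‖Complex.exp (-(m0 z)) - 1‖ ≤ 2 * |z.im|⁻¹ := by
      refine h2.trans ?_
      rw [norm_neg]
      linarith [hb]
    have h4 : ‖(t : ℂ)‖ = t := by
      rw [Complex.norm_real, Real.norm_eq_abs, abs_of_pos ht]
    rw [h4]
    calc t * ‖Complex.exp (-(m0 z)) - 1‖ ≤ t * (2 * |z.im|⁻¹) := by
          exact mul_le_mul_of_nonneg_left h3 ht.le
      _ = 2 * t / |z.im| := by ring
      _ ≤ 1 := by
          rw [div_le_one hzpos]; linarith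
  -- φ maps U into H
  have hφH : ∀ z ∈ U, φ z ∈ H := by
    intro z hz
    have h1 := hdev z (hUim z hz).le
    have h2 : |(φ z - z - (t : ℂ)).im| ≤ 1 := le_trans (by
      have := Complex.abs_im_le_norm (φ z - z - (t : ℂ))
      exact this) h1
    have h3 : (φ z - z - (t : ℂ)).im = (φ z).im - z.im := by simp
    rw [h3] at h2
    have h4 : |σ * ((φ z).im - z.im)| ≤ 1 := by
      rw [abs_mul, hσabs, one_mul]; exact h2
    have h5 := (abs_le.mp h4).1
    have h6 : σ * (φ z).im = σ * z.im + σ * ((φ z).im - z.im) := by ring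
    have h7 : R < σ * z.im := hz
    rw [Set.mem_setOf_eq, h6]
    linarith
  -- analyticity
  have hUopen : IsOpen U := isOpen_lt continuous_const (continuous_const.mul Complex.continuous_im)
  have hHopen : IsOpen H := isOpen_lt continuous_const (continuous_const.mul Complex.continuous_im)
  have hlin : IsLinearMap ℝ (fun z : ℂ => σ * z.im) := by
    constructor
    · intro a b; simp [Complex.add_im]; ring
    · intro c a; simp [Complex.smul_im]; ring
  have hUpre : IsPreconnected U := (convex_halfSpace_gt hlin R).isPreconnected
  have hHpre : IsPreconnected H := (convex_halfSpace_gt hlin 0).isPreconnected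
  have hφdiff : DifferentiableOn ℂ φ U := by
    intro z hz
    exact (differentiableAt_id.add ((differentiableAt_const _).mul
      ((hm0d z (hUne z hz)).neg.cexp))).differentiableWithinAt
  have hφana : AnalyticOnNhd ℂ φ U := hφdiff.analyticOnNhd hUopen
  have hmttdOn : DifferentiableOn ℂ mttf H :=
    fun z hz => (hmttd z (hHne z hz)).differentiableWithinAt
  have hmttana : AnalyticOnNhd ℂ mttf H := hmttdOn.analyticOnNhd hHopen
  have hgdOn : DifferentiableOn ℂ (fun w => 1 - Complex.exp (-(mtf w))) H :=
    fun z hz => ((differentiableAt_const (1 : ℂ)).sub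
      ((hmtd z (hHne z hz)).neg.cexp)).differentiableWithinAt
  have hgana : AnalyticOnNhd ℂ (fun w => 1 - Complex.exp (-(mtf w))) H :=
    hgdOn.analyticOnNhd hHopen
  -- two distinct points of U with distinct φ-values
  set z₁ : ℂ := ((σ * (R + 1) : ℝ) : ℂ) * Complex.I with hz₁def
  set z₂ : ℂ := ((σ * (R + 4) : ℝ) : ℂ) * Complex.I with hz₂def
  have hz₁im : z₁.im = σ * (R + 1) := by rw [hz₁def]; simp
  have hz₂im : z₂.im = σ * (R + 4) := by rw [hz₂def]; simp
  have hz₁U : z₁ ∈ U := by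
    rw [hU, Set.mem_setOf_eq, hz₁im, ← mul_assoc, hσ2, one_mul]
    linarith
  have hz₂U : z₂ ∈ U := by
    rw [hU, Set.mem_setOf_eq, hz₂im, ← mul_assoc, hσ2, one_mul]
    linarith
  obtain hconst | hopenmap := hφana.is_constant_or_isOpen hUpre
  · exfalso
    obtain ⟨v, hv⟩ := hconst
    have e1 := hv z₁ hz₁U
    have e2 := hv z₂ hz₂U
    have hd1 := hdev z₁ (hUim z₁ hz₁U).le
    have hd2 := hdev z₂ (hUim z₂ hz₂U).le
    have hdiffz : z₂ - z₁ = ((3 * σ : ℝ) : ℂ) * Complex.I := by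
      rw [hz₁def, hz₂def]
      push_cast
      ring
    have hnorm : ‖z₂ - z₁‖ = 3 := by
      rw [hdiffz, norm_mul, Complex.norm_I, mul_one, Complex.norm_real,
        Real.norm_eq_abs, abs_mul, hσabs, mul_one]
      norm_num
    have hzero : φ z₂ - φ z₁ = 0 := by rw [e1, e2, sub_self]
    have htri : ‖z₂ - z₁‖ ≤ ‖φ z₂ - φ z₁‖ + ‖φ z₂ - z₂ - (t : ℂ)‖
        + ‖φ z₁ - z₁ - (t : ℂ)‖ := by
      have hsplit : z₂ - z₁ = ((φ z₂ - φ z₁) - (φ z₂ - z₂ - (t : ℂ)))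
          + (φ z₁ - z₁ - (t : ℂ)) := by ring
      calc ‖z₂ - z₁‖ = ‖((φ z₂ - φ z₁) - (φ z₂ - z₂ - (t : ℂ)))
            + (φ z₁ - z₁ - (t : ℂ))‖ := by rw [← hsplit]
        _ ≤ ‖(φ z₂ - φ z₁) - (φ z₂ - z₂ - (t : ℂ))‖ + ‖φ z₁ - z₁ - (t : ℂ)‖ :=
            norm_add_le _ _
        _ ≤ ‖φ z₂ - φ z₁‖ + ‖φ z₂ - z₂ - (t : ℂ)‖ + ‖φ z₁ - z₁ - (t : ℂ)‖ := by
            have := norm_sub_le (φ z₂ - φ z₁) (φ z₂ - z₂ - (t : ℂ))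
            linarith
    rw [hnorm, hzero, norm_zero] at htri
    linarith
  · have himg : IsOpen (φ '' U) := hopenmap U le_rfl hUopen
    have hz₀H : φ z₁ ∈ H := hφH z₁ hz₁U
    have hev : mttf =ᶠ[nhds (φ z₁)] (fun w => 1 - Complex.exp (-(mtf w))) := by
      refine Filter.eventually_of_mem (himg.mem_nhds ⟨z₁, hz₁U, rfl⟩) ?_
      rintro _ ⟨z, hzU, rfl⟩
      exact hfg z (hUΩ z hzU)
    have heq := hmttana.eqOn_of_preconnected_of_eventuallyEq hgana hHpre hz₀H hev
    exact heq hw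

/-- Section 2.2 (intertwining): if `μ_t` evolves by the quantized free convolution
(`m_t(z + t e^{−m_0(z)}) = m_0(z)` on `Ω_t`) and `μ̃_t` evolves by the free convolution
started from `Q(μ_0)` (`m̃_t(z + t − t m̃_0(z)) = m̃_0(z)` on `Ω_t`, with
`m̃_0 = 1 − e^{−m_0}`), then the two characteristic lines coincide on `Ω_t` and
`m̃_t = 1 − e^{−m_t}` on `ℂ ∖ ℝ`; that is, `μ̃_t = Q(μ_t)`. -/
theorem stmt13 (μ0 : Measure ℝ) [IsProbabilityMeasure μ0]
    (hac : μ0 ≪ volume) (hd : ∀ᵐ x ∂volume, μ0.rnDeriv volume x ≤ 1)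
    (m0 : ℂ → ℂ) (hm0 : ∀ z : ℂ, m0 z = ∫ x : ℝ, ((x : ℂ) - z)⁻¹ ∂μ0)
    (ν : Measure ℝ) [IsProbabilityMeasure ν]
    (mt0 : ℂ → ℂ) (hmt0 : ∀ z : ℂ, mt0 z = ∫ x : ℝ, ((x : ℂ) - z)⁻¹ ∂ν)
    (hν : ∀ z : ℂ, z.im ≠ 0 → mt0 z = 1 - Complex.exp (-(m0 z)))
    (t : ℝ) (ht : 0 < t)
    (Ω : Set ℂ)
    (hΩ : Ω = {z : ℂ | z.im ≠ 0 ∧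
      (∫⁻ x : ℝ, ENNReal.ofReal (1 / ‖(x : ℂ) - z‖ ^ 2) ∂ν)
        < ENNReal.ofReal (1 / t)})
    (μt : Measure ℝ) [IsProbabilityMeasure μt]
    (hact : μt ≪ volume) (hdt : ∀ᵐ x ∂volume, μt.rnDeriv volume x ≤ 1)
    (mt : ℂ → ℂ) (hmt : ∀ z : ℂ, mt z = ∫ x : ℝ, ((x : ℂ) - z)⁻¹ ∂μt)
    (hchar : ∀ z ∈ Ω, mt (z + (t : ℂ) * Complex.exp (-(m0 z))) = m0 z)
    (μtt : Measure ℝ) [IsProbabilityMeasure μtt]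
    (mtt : ℂ → ℂ) (hmtt : ∀ z : ℂ, mtt z = ∫ x : ℝ, ((x : ℂ) - z)⁻¹ ∂μtt)
    (hchart : ∀ z ∈ Ω, mtt (z + (t : ℂ) - (t : ℂ) * mt0 z) = mt0 z) :
    (∀ z ∈ Ω, z + (t : ℂ) - (t : ℂ) * mt0 z = z + (t : ℂ) * Complex.exp (-(m0 z))) ∧
    (∀ w : ℂ, w.im ≠ 0 → mtt w = 1 - Complex.exp (-(mt w))) := by
  have part1 : ∀ z ∈ Ω, z + (t : ℂ) - (t : ℂ) * mt0 z
      = z + (t : ℂ) * Complex.exp (-(m0 z)) := by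
    intro z hz
    have him : z.im ≠ 0 := by
      rw [hΩ] at hz; exact hz.1
    rw [hν z him]; ring
  refine ⟨part1, ?_⟩
  -- differentiability of the transforms
  have hm0d : ∀ z : ℂ, z.im ≠ 0 → DifferentiableAt ℂ m0 z := by
    intro z hz
    rw [show m0 = fun w : ℂ => ∫ x : ℝ, ((x : ℂ) - w)⁻¹ ∂μ0 from funext hm0]
    exact aux_diff μ0 z hz
  have hmtd : ∀ z : ℂ, z.im ≠ 0 → DifferentiableAt ℂ mt z := by
    intro z hz
    rw [show mt = fun w : ℂ => ∫ x : ℝ, ((x : ℂ) - w)⁻¹ ∂μt from funext hmt]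
    exact aux_diff μt z hz
  have hmttd : ∀ z : ℂ, z.im ≠ 0 → DifferentiableAt ℂ mtt z := by
    intro z hz
    rw [show mtt = fun w : ℂ => ∫ x : ℝ, ((x : ℂ) - w)⁻¹ ∂μtt from funext hmtt]
    exact aux_diff μtt z hz
  have hm0b : ∀ z : ℂ, z.im ≠ 0 → ‖m0 z‖ ≤ |z.im|⁻¹ := by
    intro z hz
    rw [hm0 z]
    exact aux_norm μ0 z hz
  -- points far from ℝ belong to Ω
  have hΩs : ∀ z : ℂ, 2 * t + Real.sqrt t + 1 ≤ |z.im| → z ∈ Ω := by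
    intro z hz
    have hsq := Real.sqrt_nonneg t
    have h0 : (0 : ℝ) < |z.im| := by linarith
    have him : z.im ≠ 0 := by
      intro h; rw [h, abs_zero] at h0; exact lt_irrefl 0 h0
    have himsq : t < z.im ^ 2 := by
      have h2 : z.im ^ 2 = |z.im| ^ 2 := (sq_abs _).symm
      have h3 : (2 * t + Real.sqrt t + 1) ^ 2 ≤ |z.im| ^ 2 :=
        pow_le_pow_left₀ (by linarith) hz 2
      nlinarith [Real.sq_sqrt ht.le]
    rw [hΩ]
    refine ⟨him, ?_⟩
    calc (∫⁻ x : ℝ, ENNReal.ofReal (1 / ‖(x : ℂ) - z‖ ^ 2) ∂ν)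
        ≤ ∫⁻ _x : ℝ, ENNReal.ofReal (1 / z.im ^ 2) ∂ν := by
          refine lintegral_mono fun x => ENNReal.ofReal_le_ofReal ?_
          refine one_div_le_one_div_of_le (by positivity) ?_
          calc z.im ^ 2 = |z.im| ^ 2 := (sq_abs _).symm
            _ ≤ ‖(x : ℂ) - z‖ ^ 2 := by
                refine pow_le_pow_left₀ (abs_nonneg _) ?_ 2
                exact aux_im_le_norm x z
      _ = ENNReal.ofReal (1 / z.im ^ 2) := by
          rw [lintegral_const, measure_univ, mul_one]
      _ < ENNReal.ofReal (1 / t) := by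
          rw [ENNReal.ofReal_lt_ofReal_iff (by positivity)]
          exact one_div_lt_one_div_of_lt ht himsq
  -- the key pointwise identity on the image of Ω
  have hfg : ∀ z ∈ Ω, mtt (z + (t : ℂ) * Complex.exp (-(m0 z))) =
      1 - Complex.exp (-(mt (z + (t : ℂ) * Complex.exp (-(m0 z))))) := by
    intro z hz
    have him : z.im ≠ 0 := by rw [hΩ] at hz; exact hz.1
    have e := hchart z hz
    rw [part1 z hz] at e
    rw [e, hchar z hz]
    exact hν z him
  intro w hw
  rcases lt_or_gt_of_ne hw with hneg | hpos
  · refine key_half t ht m0 mt mtt Ω hm0d hmtd hmttd hm0b hΩs hfg (-1) (Or.inr rfl) w ?_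
    nlinarith
  · refine key_half t ht m0 mt mtt Ω hm0d hmtd hmttd hm0b hΩs hfg 1 (Or.inl rfl) w ?_
    rw [one_mul]; exact hpos
end

section
/- Let U ⊂ ℂ be open, let m : U → ℂ be holomorphic, let z ∈ U, let θ > 0, let s, t ≥ 0 and set τ = min(s, t), σ = max(s, t); write A = m'(z) and E = e^{−m(z)}, and assume 1 − s·A·E ≠ 0, 1 − t·A·E ≠ 0, and 1 − τ·A·E ≠ 0. For z' ∈ U with z' ≠ z, write A' = m'(z') and E' = e^{−m(z')} and define σ(s, z, t, z') = (1/θ) · (1/((1 − s·A·E)(1 − t·A'·E'))) · (1/(z − z')² − (1 − τ·A·E)(1 − τ·A'·E')/(z − z' + τ(E − E'))²). Then as z' → z, σ(s, z, t, z') converges to (1/(12θ)) · [ τ·E·(2A³ − 6A·m''(z) + 2m'''(z)) + τ²·E²·(A⁴ + 3·m''(z)² − 2A·m'''(z)) ] / [ (1 − τ·A·E)³·(1 − σ·A·E) ]. -/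
open Filter Function FormalMultilinearSeries Topology

private lemma coeff_eq_iteratedDeriv {f : ℂ → ℂ} {p : FormalMultilinearSeries ℂ ℂ ℂ} {z : ℂ}
    (hp : HasFPowerSeriesAt f p z) (n : ℕ) : p.coeff n = iteratedDeriv n f z / (n.factorial : ℂ) := by
  obtain ⟨r, hr⟩ := hp
  have h := hr.factorial_smul (1 : ℂ) n
  have h1 : p.coeff n = p n (fun _ => (1 : ℂ)) := rfl
  have h2 : iteratedDeriv n f z = iteratedFDeriv ℂ n f z (fun _ => (1 : ℂ)) := rfl
  rw [h1, h2, ← h, nsmul_eq_mul, mul_div_cancel_left₀]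
  exact_mod_cast Nat.factorial_ne_zero n

private lemma analyticAt_iterate_dslope {f : ℂ → ℂ} {z : ℂ} (hf : AnalyticAt ℂ f z) (n : ℕ) :
    AnalyticAt ℂ ((swap dslope z)^[n] f) z := by
  obtain ⟨p, hp⟩ := hf
  exact ⟨_, hp.has_fpower_series_iterate_dslope_fslope n⟩

private lemma iterate_dslope_apply_self {f : ℂ → ℂ} {z : ℂ} (hf : AnalyticAt ℂ f z) (n : ℕ) :
    (swap dslope z)^[n] f z = iteratedDeriv n f z / (n.factorial : ℂ) := by
  obtain ⟨p, hp⟩ := hf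
  have h := hp.has_fpower_series_iterate_dslope_fslope n
  have h0 : (swap dslope z)^[n] f z = (fslope^[n] p).coeff 0 := (h.coeff_zero 1).symm
  rw [h0, coeff_iterate_fslope, zero_add, coeff_eq_iteratedDeriv hp n]

private lemma iterate_dslope_succ_eq {f : ℂ → ℂ} {z : ℂ} (n : ℕ) (w : ℂ) :
    (swap dslope z)^[n] f w
      = (swap dslope z)^[n] f z + (w - z) * (swap dslope z)^[n + 1] f w := by
  have h := sub_smul_dslope ((swap dslope z)^[n] f) z w
  rw [smul_eq_mul] at h
  rw [iterate_succ_apply']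
  have : swap dslope z ((swap dslope z)^[n] f) = dslope ((swap dslope z)^[n] f) z := rfl
  rw [this]
  linear_combination -h

open Topology in
private lemma key_limit {g g1 : ℂ → ℂ} {z : ℂ} (hgA : AnalyticAt ℂ g z)
    (hg1A : AnalyticAt ℂ g1 z) (hgz : g z = 0) (hE : deriv g =ᶠ[𝓝 z] g1)
    (ha0 : deriv g z ≠ 0) :
    Filter.Tendsto (fun w => 1 / (z - w) ^ 2 - deriv g z * g1 w / (g w) ^ 2) (𝓝[≠] z)
      (𝓝 ((iteratedDeriv 2 g z / 2) ^ 2 / (deriv g z) ^ 2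
        - (iteratedDeriv 3 g z / 6) / deriv g z)) := by
  set a := deriv g z with hadef
  set q : ℕ → ℂ → ℂ := fun n => (swap dslope z)^[n] g with hqdef
  set r : ℕ → ℂ → ℂ := fun n => (swap dslope z)^[n] g1 with hrdef
  have hid0 : ∀ w, g w = g z + (w - z) * q 1 w := fun w => iterate_dslope_succ_eq (f := g) (z := z) 0 w
  have hid1 : ∀ w, q 1 w = q 1 z + (w - z) * q 2 w := fun w => iterate_dslope_succ_eq (f := g) (z := z) 1 w
  have hid2 : ∀ w, q 2 w = q 2 z + (w - z) * q 3 w := fun w => iterate_dslope_succ_eq (f := g) (z := z) 2 w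
  have hidr0 : ∀ w, g1 w = g1 z + (w - z) * r 1 w := fun w => iterate_dslope_succ_eq (f := g1) (z := z) 0 w
  have hidr1 : ∀ w, r 1 w = r 1 z + (w - z) * r 2 w := fun w => iterate_dslope_succ_eq (f := g1) (z := z) 1 w
  have hq1z : q 1 z = a := by
    show (swap dslope z)^[1] g z = a
    rw [iterate_dslope_apply_self hgA 1]
    simp [iteratedDeriv_one]
    rfl
  have hq2z : q 2 z = iteratedDeriv 2 g z / 2 := by
    show (swap dslope z)^[2] g z = _
    rw [iterate_dslope_apply_self hgA 2]; norm_num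
  have hq3z : q 3 z = iteratedDeriv 3 g z / 6 := by
    show (swap dslope z)^[3] g z = _
    rw [iterate_dslope_apply_self hgA 3]
    norm_num [Nat.factorial]
  have hg1z : g1 z = a := hE.eq_of_nhds.symm
  have hD2 : deriv g1 z = iteratedDeriv 2 g z := by
    rw [hE.symm.deriv_eq]
    simp [iteratedDeriv_succ, iteratedDeriv_one]
  have hD3 : deriv (deriv g1) z = iteratedDeriv 3 g z := by
    rw [(hE.symm.deriv).deriv_eq]
    simp [iteratedDeriv_succ, iteratedDeriv_one]
  have hr1z : r 1 z = iteratedDeriv 2 g z := by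
    show (swap dslope z)^[1] g1 z = _
    rw [iterate_dslope_apply_self hg1A 1]
    simp [iteratedDeriv_one, hD2]
  have hr2z : r 2 z = iteratedDeriv 3 g z / 2 := by
    show (swap dslope z)^[2] g1 z = _
    rw [iterate_dslope_apply_self hg1A 2]
    have h2 : iteratedDeriv 2 g1 z = deriv (deriv g1) z := by
      simp [iteratedDeriv_succ, iteratedDeriv_one]
    rw [h2, hD3]; norm_num
  have hc1 : ContinuousAt (q 1) z := (analyticAt_iterate_dslope hgA 1).continuousAt
  have hc3 : ContinuousAt (q 3) z := (analyticAt_iterate_dslope hgA 3).continuousAt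
  have hcr2 : ContinuousAt (r 2) z := (analyticAt_iterate_dslope hg1A 2).continuousAt
  have ha0' : q 1 z ≠ 0 := by rw [hq1z]; exact ha0
  have hq1ne : ∀ᶠ w in 𝓝 z, q 1 w ≠ 0 := hc1.eventually_ne ha0'
  set Φ : ℂ → ℂ := fun w =>
    (2 * a * q 3 w + (q 2 z + (w - z) * q 3 w) ^ 2 - a * r 2 w) / (q 1 w) ^ 2 with hΦdef
  have hΦcont : ContinuousAt Φ z := by
    apply ContinuousAt.div
    · exact ((continuousAt_const.mul hc3).add
        ((continuousAt_const.add ((continuousAt_id.sub continuousAt_const).mul hc3)).pow 2)).sub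
        (continuousAt_const.mul hcr2)
    · exact hc1.pow 2
    · exact pow_ne_zero 2 ha0'
  have hΦval : Φ z = (iteratedDeriv 2 g z / 2) ^ 2 / a ^ 2 - (iteratedDeriv 3 g z / 6) / a := by
    show (2 * a * q 3 z + (q 2 z + (z - z) * q 3 z) ^ 2 - a * r 2 z) / (q 1 z) ^ 2 = _
    rw [hq1z, hq2z, hq3z, hr2z]
    field_simp
    ring
  have hΦtendsto : Filter.Tendsto Φ (𝓝[≠] z)
      (𝓝 ((iteratedDeriv 2 g z / 2) ^ 2 / a ^ 2 - (iteratedDeriv 3 g z / 6) / a)) := by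
    rw [← hΦval]
    exact hΦcont.tendsto.mono_left nhdsWithin_le_nhds
  refine hΦtendsto.congr' ?_
  filter_upwards [self_mem_nhdsWithin, hq1ne.filter_mono nhdsWithin_le_nhds] with w hw hne
  have hv : w - z ≠ 0 := sub_ne_zero.mpr hw
  have hv' : z - w ≠ 0 := sub_ne_zero.mpr (Ne.symm hw)
  have e0 : g w = (w - z) * q 1 w := by rw [hid0 w, hgz, zero_add]
  have e1 : q 1 w = a + (w - z) * (q 2 z + (w - z) * q 3 w) := by
    rw [hid1 w, hq1z, ← hid2 w]
  have hiD2 : iteratedDeriv 2 g z = 2 * q 2 z := by rw [hq2z]; ring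
  have e3 : g1 w = a + (w - z) * (2 * q 2 z + (w - z) * r 2 w) := by
    rw [hidr0 w, hg1z, hidr1 w, hr1z, hiD2]
  have hQ' : a + (w - z) * (q 2 z + (w - z) * q 3 w) ≠ 0 := e1 ▸ hne
  show (2 * a * q 3 w + (q 2 z + (w - z) * q 3 w) ^ 2 - a * r 2 w) / (q 1 w) ^ 2
    = 1 / (z - w) ^ 2 - a * g1 w / (g w) ^ 2
  rw [e0, e3, e1]
  have hQ'' : a + (w - z) * (q 2 z + q 3 w * (w - z)) ≠ 0 := by rw [mul_comm (q 3 w)]; exact hQ'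
  field_simp
  ring

private lemma alg_final (θC A B C E sC tC : ℂ) (hθ : θC ≠ 0)
    (h1 : 1 - sC * A * E ≠ 0) (h2 : 1 - tC * A * E ≠ 0) :
    1 / θC * (1 / ((1 - sC * A * E) * (1 - tC * A * E))) *
      ((sC * ((B - A ^ 2) * E) / 2) ^ 2 / (-(1 - sC * A * E)) ^ 2
        - sC * ((C - 3 * A * B + A ^ 3) * E) / 6 / -(1 - sC * A * E))
    = 1 / (12 * θC) *
        (sC * E * (2 * A ^ 3 - 6 * A * B + 2 * C)
          + sC ^ 2 * E ^ 2 * (A ^ 4 + 3 * B ^ 2 - 2 * A * C)) /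
        ((1 - sC * A * E) ^ 3 * (1 - tC * A * E)) := by
  have h1' : -(1 - sC * A * E) ≠ 0 := neg_ne_zero.mpr h1
  have hD : (1 - sC * A * E) ^ 3 * (1 - tC * A * E) ≠ 0 :=
    mul_ne_zero (pow_ne_zero 3 h1) h2
  rw [div_neg, show (-(1 - sC * A * E)) ^ 2 = (1 - sC * A * E) ^ 2 from by ring,
    eq_div_iff hD]
  have h2' : 1 - A * E * tC ≠ 0 := by rw [show A * E * tC = tC * A * E by ring]; exact h2
  field_simp [h1, h2, hθ]
  ring

/-- Diagonal limit of the covariance kernel of Theorem 1.5: with `m` holomorphic on an open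
set `U`, `z ∈ U`, `A = m'(z)`, `E = e^{−m(z)}`, `τ = min s t`, `σᵐ = max s t`, the kernel
`σ(s, z, t, z')` converges, as `z' → z` in `U ∖ {z}`, to
`(1/(12θ)) (τE(2A³ − 6A m''(z) + 2m'''(z)) + τ²E²(A⁴ + 3 m''(z)² − 2A m'''(z)))
  / ((1 − τAE)³ (1 − σᵐ A E))`. -/
theorem stmt16 (U : Set ℂ) (hU : IsOpen U) (m : ℂ → ℂ) (hm : DifferentiableOn ℂ m U)
    (z : ℂ) (hz : z ∈ U) (θ : ℝ) (hθ : 0 < θ) (s t : ℝ) (hs : 0 ≤ s) (ht : 0 ≤ t)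
    (h1 : 1 - (s : ℂ) * deriv m z * Complex.exp (-m z) ≠ 0)
    (h2 : 1 - (t : ℂ) * deriv m z * Complex.exp (-m z) ≠ 0)
    (h3 : 1 - ((min s t : ℝ) : ℂ) * deriv m z * Complex.exp (-m z) ≠ 0) :
    Filter.Tendsto (fun z' : ℂ =>
        (1 / (θ : ℂ)) *
          (1 / ((1 - (s : ℂ) * deriv m z * Complex.exp (-m z)) *
                (1 - (t : ℂ) * deriv m z' * Complex.exp (-m z')))) *
          (1 / (z - z') ^ 2 -
            (1 - ((min s t : ℝ) : ℂ) * deriv m z * Complex.exp (-m z)) *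
              (1 - ((min s t : ℝ) : ℂ) * deriv m z' * Complex.exp (-m z')) /
              (z - z' + ((min s t : ℝ) : ℂ) * (Complex.exp (-m z) - Complex.exp (-m z'))) ^ 2))
      (nhdsWithin z (U \ {z}))
      (nhds ((1 / (12 * (θ : ℂ))) *
        (((min s t : ℝ) : ℂ) * Complex.exp (-m z) *
            (2 * (deriv m z) ^ 3 - 6 * deriv m z * deriv (deriv m) z +
              2 * deriv (deriv (deriv m)) z) +
          ((min s t : ℝ) : ℂ) ^ 2 * Complex.exp (-m z) ^ 2 *
            ((deriv m z) ^ 4 + 3 * (deriv (deriv m) z) ^ 2 -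
              2 * deriv m z * deriv (deriv (deriv m)) z)) /
        ((1 - ((min s t : ℝ) : ℂ) * deriv m z * Complex.exp (-m z)) ^ 3 *
          (1 - ((max s t : ℝ) : ℂ) * deriv m z * Complex.exp (-m z))))) := by
  have hθC : (θ : ℂ) ≠ 0 := Complex.ofReal_ne_zero.mpr hθ.ne'
  set τ : ℝ := min s t with hτ
  set g : ℂ → ℂ := fun w =>
    z - w + (τ : ℂ) * (Complex.exp (-m z) - Complex.exp (-m w)) with hgdef
  set g1 : ℂ → ℂ := fun w =>
    -1 + (τ : ℂ) * (deriv m w * Complex.exp (-m w)) with hg1def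
  set g2 : ℂ → ℂ := fun w =>
    (τ : ℂ) * ((deriv (deriv m) w - (deriv m w) ^ 2) * Complex.exp (-m w)) with hg2def
  have hUz : U ∈ 𝓝 z := hU.mem_nhds hz
  have hmA : AnalyticOnNhd ℂ m U := hm.analyticOnNhd hU
  have hm1A : AnalyticOnNhd ℂ (deriv m) U := hmA.deriv
  have hm2A : AnalyticOnNhd ℂ (deriv (deriv m)) U := hm1A.deriv
  have hder : ∀ w ∈ U, HasDerivAt m (deriv m w) w :=
    fun w hw => ((hmA w hw).differentiableAt).hasDerivAt
  have hexp : ∀ w ∈ U, HasDerivAt (fun x => Complex.exp (-m x))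
      (-deriv m w * Complex.exp (-m w)) w := by
    intro w hw
    have h := ((hder w hw).neg).cexp
    exact h.congr_deriv (by rw [Pi.neg_apply]; ring)
  have hg : ∀ w ∈ U, HasDerivAt g (g1 w) w := by
    intro w hw
    have hd1 : HasDerivAt (fun x : ℂ => z - x) (-1) w := (hasDerivAt_id w).const_sub z
    have hd2 := ((hexp w hw).const_sub (Complex.exp (-m z))).const_mul (τ : ℂ)
    have hd3 := hd1.add hd2
    have hval : g1 w = -1 + (τ : ℂ) * -(-deriv m w * Complex.exp (-m w)) := by
      simp only [hg1def]; ring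
    rw [hgdef, hval]
    exact hd3
  have hg1 : ∀ w ∈ U, HasDerivAt g1 (g2 w) w := by
    intro w hw
    have hm' : HasDerivAt (deriv m) (deriv (deriv m) w) w :=
      ((hm1A w hw).differentiableAt).hasDerivAt
    have hd2 := ((hm'.mul (hexp w hw)).const_mul (τ : ℂ)).const_add (-1)
    have hval : g2 w = (τ : ℂ) * (deriv (deriv m) w * Complex.exp (-m w) +
        deriv m w * (-deriv m w * Complex.exp (-m w))) := by
      simp only [hg2def]; ring
    rw [hg1def, hval]
    exact hd2
  have hg2d : HasDerivAt g2 ((τ : ℂ) * ((deriv (deriv (deriv m)) z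
      - 3 * deriv m z * deriv (deriv m) z + (deriv m z) ^ 3) * Complex.exp (-m z))) z := by
    have hm'' : HasDerivAt (deriv (deriv m)) (deriv (deriv (deriv m)) z) z :=
      ((hm2A z hz).differentiableAt).hasDerivAt
    have hm' : HasDerivAt (deriv m) (deriv (deriv m) z) z :=
      ((hm1A z hz).differentiableAt).hasDerivAt
    have hd := ((hm''.sub (hm'.pow 2)).mul (hexp z hz)).const_mul (τ : ℂ)
    rw [hg2def]
    exact hd.congr_deriv (by simp only [Pi.sub_apply, Pi.pow_apply]; push_cast; ring)
  have hEg : deriv g =ᶠ[𝓝 z] g1 := by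
    filter_upwards [hUz] with w hw; exact (hg w hw).deriv
  have hEg1 : deriv g1 =ᶠ[𝓝 z] g2 := by
    filter_upwards [hUz] with w hw; exact (hg1 w hw).deriv
  have hgA : AnalyticAt ℂ g z :=
    DifferentiableOn.analyticAt
      (fun w hw => ((hg w hw).differentiableAt).differentiableWithinAt) hUz
  have hg1A : AnalyticAt ℂ g1 z :=
    DifferentiableOn.analyticAt
      (fun w hw => ((hg1 w hw).differentiableAt).differentiableWithinAt) hUz
  have hgz0 : g z = 0 := by simp [hgdef]
  have hderivgz : deriv g z = -(1 - (τ : ℂ) * deriv m z * Complex.exp (-m z)) := by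
    rw [(hg z hz).deriv]
    simp only [hg1def]; ring
  have ha0 : deriv g z ≠ 0 := by rw [hderivgz]; exact neg_ne_zero.mpr h3
  have hiD2 : iteratedDeriv 2 g z
      = (τ : ℂ) * ((deriv (deriv m) z - (deriv m z) ^ 2) * Complex.exp (-m z)) := by
    rw [iteratedDeriv_succ, iteratedDeriv_one, hEg.deriv_eq, (hg1 z hz).deriv]
  have hiD3 : iteratedDeriv 3 g z = (τ : ℂ) * ((deriv (deriv (deriv m)) z
      - 3 * deriv m z * deriv (deriv m) z + (deriv m z) ^ 3) * Complex.exp (-m z)) := by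
    have h1' : deriv (deriv g) =ᶠ[𝓝 z] g2 := hEg.deriv.trans hEg1
    rw [iteratedDeriv_succ, iteratedDeriv_succ, iteratedDeriv_one, h1'.deriv_eq, hg2d.deriv]
  have key := key_limit hgA hg1A hgz0 hEg ha0
  have hcm' : ContinuousAt (deriv m) z := ((hm1A z hz).differentiableAt).continuousAt
  have hce : ContinuousAt (fun w => Complex.exp (-m w)) z :=
    (hexp z hz).differentiableAt.continuousAt
  have hden : ContinuousAt (fun w => (1 - (s : ℂ) * deriv m z * Complex.exp (-m z)) *
      (1 - (t : ℂ) * deriv m w * Complex.exp (-m w))) z :=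
    continuousAt_const.mul
      (continuousAt_const.sub ((continuousAt_const.mul hcm').mul hce))
  have hT2 : Filter.Tendsto (fun w : ℂ => (1 / (θ : ℂ)) *
      (1 / ((1 - (s : ℂ) * deriv m z * Complex.exp (-m z)) *
        (1 - (t : ℂ) * deriv m w * Complex.exp (-m w))))) (𝓝 z)
      (𝓝 ((1 / (θ : ℂ)) * (1 / ((1 - (s : ℂ) * deriv m z * Complex.exp (-m z)) *
        (1 - (t : ℂ) * deriv m z * Complex.exp (-m z)))))) :=
    (continuousAt_const.mul (continuousAt_const.div hden (mul_ne_zero h1 h2))).tendsto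
  have hfun : (fun w => 1 / (z - w) ^ 2 - deriv g z * g1 w / (g w) ^ 2)
      = (fun w => 1 / (z - w) ^ 2 -
          (1 - (τ : ℂ) * deriv m z * Complex.exp (-m z)) *
            (1 - (τ : ℂ) * deriv m w * Complex.exp (-m w)) /
            (z - w + (τ : ℂ) * (Complex.exp (-m z) - Complex.exp (-m w))) ^ 2) := by
    funext w
    rw [hderivgz]
    simp only [hgdef, hg1def]
    ring
  have hT3 : Filter.Tendsto (fun w => 1 / (z - w) ^ 2 -
      (1 - (τ : ℂ) * deriv m z * Complex.exp (-m z)) *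
        (1 - (τ : ℂ) * deriv m w * Complex.exp (-m w)) /
        (z - w + (τ : ℂ) * (Complex.exp (-m z) - Complex.exp (-m w))) ^ 2)
      (𝓝[U \ {z}] z)
      (𝓝 ((iteratedDeriv 2 g z / 2) ^ 2 / (deriv g z) ^ 2
        - (iteratedDeriv 3 g z / 6) / deriv g z)) := by
    have h := key.mono_left (nhdsWithin_mono z (show U \ {z} ⊆ {z}ᶜ from fun w hw => hw.2))
    rwa [hfun] at h
  have hprod := (hT2.mono_left nhdsWithin_le_nhds).mul hT3
  have hval : ((1 / (θ : ℂ)) * (1 / ((1 - (s : ℂ) * deriv m z * Complex.exp (-m z)) *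
        (1 - (t : ℂ) * deriv m z * Complex.exp (-m z))))) *
      ((iteratedDeriv 2 g z / 2) ^ 2 / (deriv g z) ^ 2
        - (iteratedDeriv 3 g z / 6) / deriv g z)
      = ((1 / (12 * (θ : ℂ))) *
        (((τ : ℝ) : ℂ) * Complex.exp (-m z) *
            (2 * (deriv m z) ^ 3 - 6 * deriv m z * deriv (deriv m) z +
              2 * deriv (deriv (deriv m)) z) +
          ((τ : ℝ) : ℂ) ^ 2 * Complex.exp (-m z) ^ 2 *
            ((deriv m z) ^ 4 + 3 * (deriv (deriv m) z) ^ 2 -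
              2 * deriv m z * deriv (deriv (deriv m)) z)) /
        ((1 - ((τ : ℝ) : ℂ) * deriv m z * Complex.exp (-m z)) ^ 3 *
          (1 - ((max s t : ℝ) : ℂ) * deriv m z * Complex.exp (-m z)))) := by
    rw [hiD2, hiD3, hderivgz]
    rcases le_total s t with hst | hst
    · rw [hτ, min_eq_left hst, max_eq_right hst]
      exact alg_final _ _ _ _ _ _ _ hθC h1 h2
    · rw [hτ, min_eq_right hst, max_eq_left hst]
      have h := alg_final (θ : ℂ) (deriv m z) (deriv (deriv m) z)
        (deriv (deriv (deriv m)) z) (Complex.exp (-m z)) (t : ℂ) (s : ℂ) hθC h2 h1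
      rw [mul_comm ((1 : ℂ) - (t : ℂ) * deriv m z * Complex.exp (-m z))
        ((1 : ℂ) - (s : ℂ) * deriv m z * Complex.exp (-m z))] at h
      exact h
  rw [hval] at hprod
  exact hprod
end
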